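/- arXiv:2406.11586 — 12 statements merged into one kernel-verified Lean document; each statement's English description precedes it below -/
import Mathlib

section
/- Let (α,β) be a zero-one reaction network whose stoichiometric matrix N has rank one, with rows N_i = a_i N_s for 1 ≤ i ≤ s−1, and suppose every nonzero row of N changes signs. Fix c ∈ ℝ^{s−1}. (i) If there exists k ∈ J2 ∪ J3 with c_k ≤ 0, or there exists (i,j) ∈ J1 × J2 with c_i + c_j ≤ 0, then for every κ ∈ ℝ^m_{>0} there is no positive steady state in P_c. (ii) If c_k > 0 for every k ∈ J2 ∪ J3 and c_i + c_j > 0 for every (i,j) ∈ J1 × J2, then for every κ ∈ ℝ^m_{>0} there is exactly one point x ∈ P_c^+ with f(κ,x) = 0, and this x is exponentially stable. -/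
noncomputable section

/-- The stoichiometric matrix `N = β − α` of a reaction network, as a real matrix. -/
def stoich {s m : ℕ} (α β : Matrix (Fin s) (Fin m) ℕ) : Matrix (Fin s) (Fin m) ℝ :=
  fun i j => (β i j : ℝ) - (α i j : ℝ)

/-- The mass-action species-formation rate function:
`f_i(κ,x) = Σ_j N_{ij} κ_j Π_l x_l^{α_{lj}}`. -/
def rateFun {s m : ℕ} (α β : Matrix (Fin s) (Fin m) ℕ)
    (κ : Fin m → ℝ) (x : Fin s → ℝ) (i : Fin s) : ℝ :=
  ∑ j, stoich α β i j * κ j * ∏ l, x l ^ (α l j)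

/-- The Jacobian matrix of `f` with respect to `x`. -/
def jacF {s m : ℕ} (α β : Matrix (Fin s) (Fin m) ℕ)
    (κ : Fin m → ℝ) (x : Fin s → ℝ) : Matrix (Fin s) (Fin s) ℝ :=
  fun i l => deriv (fun t => rateFun α β κ (Function.update x l t) i) (x l)

lemma aux01 {p q : ℕ} (hp : p ≤ 1) (hq : q ≤ 1) :
    ((q:ℝ) - (p:ℝ) = -1 ∧ p = 1 ∧ q = 0) ∨ ((q:ℝ) - (p:ℝ) = 0 ∧ q = p) ∨
      ((q:ℝ) - (p:ℝ) = 1 ∧ p = 0 ∧ q = 1) := by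
  interval_cases p <;> interval_cases q <;> norm_num

lemma rate_prop {n m : ℕ} (α β : Matrix (Fin (n+1)) (Fin m) ℕ) (A : Fin (n+1) → ℝ)
    (hprop : ∀ i j, stoich α β i j = A i * stoich α β (Fin.last n) j)
    (κ : Fin m → ℝ) (x : Fin (n+1) → ℝ) (i : Fin (n+1)) :
    rateFun α β κ x i = A i * rateFun α β κ x (Fin.last n) := by
  unfold rateFun; rw [Finset.mul_sum]
  exact Finset.sum_congr rfl fun j _ => by rw [hprop i j]; ring

set_option maxHeartbeats 4000000 in
/-- One-dimensional zero-one networks, all of whose nonzero rows change signs: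
(i) if some `c_k ≤ 0` for `k ∈ J2 ∪ J3` or `c_i + c_j ≤ 0` for `(i,j) ∈ J1 × J2`, there are no
positive steady states in `P_c`; (ii) otherwise there is exactly one positive steady state in
`P_c`, and it is exponentially stable. -/
theorem stmt1 {n m : ℕ} (α β : Matrix (Fin (n + 1)) (Fin m) ℕ)
    (hnet : ∀ j, ∃ i, α i j ≠ β i j)
    (h01 : ∀ i j, α i j ≤ 1 ∧ β i j ≤ 1)
    (hrank : (stoich α β).rank = 1)
    (a : Fin n → ℝ)
    (ha : ∀ (i : Fin n) (j : Fin m),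
      stoich α β i.castSucc j = a i * stoich α β (Fin.last n) j)
    (hsign : ∀ i : Fin (n + 1), (∃ j, stoich α β i j ≠ 0) →
      (∃ j, 0 < stoich α β i j) ∧ (∃ j, stoich α β i j < 0))
    (c : Fin n → ℝ) :
    -- (i)
    (((∃ k : Fin n, (a k = -1 ∨ a k = 0) ∧ c k ≤ 0) ∨
        (∃ i j : Fin n, a i = 1 ∧ a j = -1 ∧ c i + c j ≤ 0)) →
      ∀ κ : Fin m → ℝ, (∀ j, 0 < κ j) →
        ¬ ∃ x : Fin (n + 1) → ℝ, (∀ i, 0 < x i) ∧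
            (∀ i : Fin n, x i.castSucc = a i * x (Fin.last n) + c i) ∧
            (∀ i, rateFun α β κ x i = 0))
    ∧
    -- (ii)
    (((∀ k : Fin n, (a k = -1 ∨ a k = 0) → 0 < c k) ∧
        (∀ i j : Fin n, a i = 1 → a j = -1 → 0 < c i + c j)) →
      ∀ κ : Fin m → ℝ, (∀ j, 0 < κ j) →
        ∃ x : Fin (n + 1) → ℝ,
          ((∀ i, 0 < x i) ∧
            (∀ i : Fin n, x i.castSucc = a i * x (Fin.last n) + c i) ∧
            (∀ i, rateFun α β κ x i = 0)) ∧
          -- exponential stability: `Jac_f` maps the stoichiometric subspace `S` onto `S` …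
          (Submodule.map (Matrix.mulVecLin (jacF α β κ x))
              (Submodule.span ℝ (Set.range fun j i => stoich α β i j)) =
            Submodule.span ℝ (Set.range fun j i => stoich α β i j)) ∧
          -- … and every nonzero complex eigenvalue of `Jac_f` has negative real part,
          (∀ μ ∈ spectrum ℂ ((jacF α β κ x).map Complex.ofReal), μ ≠ 0 → μ.re < 0) ∧
          -- and uniqueness of the positive steady state in `P_c`:
          (∀ y : Fin (n + 1) → ℝ,
            ((∀ i, 0 < y i) ∧
              (∀ i : Fin n, y i.castSucc = a i * y (Fin.last n) + c i) ∧
              (∀ i, rateFun α β κ y i = 0)) → y = x)) := by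
  -- ===== common setup =====
  set A : Fin (n+1) → ℝ := Fin.snoc a 1 with hA
  set C : Fin (n+1) → ℝ := Fin.snoc c 0 with hC
  have hAlast : A (Fin.last n) = 1 := Fin.snoc_last _ _
  have hAcs : ∀ i : Fin n, A i.castSucc = a i := fun i => Fin.snoc_castSucc _ _ _
  have hClast : C (Fin.last n) = 0 := Fin.snoc_last _ _
  have hCcs : ∀ i : Fin n, C i.castSucc = c i := fun i => Fin.snoc_castSucc _ _ _
  have hprop : ∀ i j, stoich α β i j = A i * stoich α β (Fin.last n) j := by
    intro i j
    induction i using Fin.lastCases with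
    | last => rw [hAlast, one_mul]
    | cast i => rw [hAcs]; exact ha i j
  have hsval : ∀ i j, stoich α β i j = -1 ∨ stoich α β i j = 0 ∨ stoich α β i j = 1 := by
    intro i j
    rcases aux01 (h01 i j).1 (h01 i j).2 with ⟨h, -⟩ | ⟨h, -⟩ | ⟨h, -⟩ <;>
      simp [stoich, h]
  have hα_neg : ∀ i j, stoich α β i j = -1 → α i j = 1 := by
    intro i j h
    rcases aux01 (h01 i j).1 (h01 i j).2 with ⟨-, h1, -⟩ | ⟨h2, -⟩ | ⟨h2, -⟩
    · exact h1
    · rw [stoich] at h; norm_num [h2] at h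
    · rw [stoich] at h; rw [h2] at h; norm_num at h
  have hα_pos : ∀ i j, stoich α β i j = 1 → α i j = 0 := by
    intro i j h
    rcases aux01 (h01 i j).1 (h01 i j).2 with ⟨h2, -⟩ | ⟨h2, -⟩ | ⟨-, h1, -⟩
    · rw [stoich] at h; rw [h2] at h; norm_num at h
    · rw [stoich] at h; norm_num [h2] at h
    · exact h1
  have hα01 : ∀ (l : Fin (n+1)) j, α l j = 0 ∨ α l j = 1 :=
    fun l j => Nat.le_one_iff_eq_zero_or_eq_one.mp (h01 l j).1
  have hε : ∀ j, stoich α β (Fin.last n) j = 1 ∨ stoich α β (Fin.last n) j = -1 := by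
    intro j
    obtain ⟨i, hi⟩ := hnet j
    have hne : stoich α β i j ≠ 0 := by
      rw [stoich]; intro h
      exact hi (by exact_mod_cast (sub_eq_zero.mp h).symm)
    have hne' : stoich α β (Fin.last n) j ≠ 0 := by
      intro h; rw [hprop i j, h, mul_zero] at hne; exact hne rfl
    rcases hsval (Fin.last n) j with h | h | h
    · exact Or.inr h
    · exact absurd h hne'
    · exact Or.inl h
  have hm : 0 < m := by
    by_contra h
    push_neg at h
    have h2 := (stoich α β).rank_le_width
    omega
  have hAval : ∀ i, A i = 1 ∨ A i = 0 ∨ A i = -1 := by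
    intro i
    set j0 : Fin m := ⟨0, hm⟩
    have h1 := hprop i j0
    rcases hε j0 with h | h <;> rw [h] at h1 <;>
      rcases hsval i j0 with h2 | h2 | h2 <;> rw [h2] at h1 <;>
        first
        | (left; linarith)
        | (right; left; linarith)
        | (right; right; linarith)
  -- sign-change witnesses on the last row
  have hlastne : ∃ j, stoich α β (Fin.last n) j ≠ 0 := by
    refine ⟨⟨0, hm⟩, ?_⟩
    rcases hε ⟨0, hm⟩ with h | h <;> rw [h] <;> norm_num
  obtain ⟨⟨jp, hjp⟩, ⟨jn, hjn⟩⟩ := hsign (Fin.last n) hlastne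
  have hjpos : stoich α β (Fin.last n) jp = 1 := by
    rcases hε jp with h | h
    · exact h
    · rw [h] at hjp; norm_num at hjp
  have hjneg : stoich α β (Fin.last n) jn = -1 := by
    rcases hε jn with h | h
    · rw [h] at hjn; norm_num at hjn
    · exact h
  -- forced exponents
  have hforce_pos : ∀ l j, stoich α β (Fin.last n) j = 1 → A l = -1 → α l j = 1 := by
    intro l j hj hl
    apply hα_neg
    rw [hprop l j, hj, hl, mul_one]
  have hforce_neg : ∀ l j, stoich α β (Fin.last n) j = -1 → A l = 1 → α l j = 1 := by
    intro l j hj hl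
    apply hα_neg
    rw [hprop l j, hj, hl, one_mul]
  have hαA_pos : ∀ l j, stoich α β (Fin.last n) j = 1 → α l j = 1 → (A l = 0 ∨ A l = -1) := by
    intro l j hj h1
    rcases hAval l with h | h | h
    · exfalso
      have : stoich α β l j = 1 := by rw [hprop l j, hj, h, one_mul]
      rw [hα_pos l j this] at h1; exact one_ne_zero h1.symm
    · exact Or.inl h
    · exact Or.inr h
  have hαA_neg : ∀ l j, stoich α β (Fin.last n) j = -1 → α l j = 1 → (A l = 0 ∨ A l = 1) := by
    intro l j hj h1
    rcases hAval l with h | h | h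
    · exact Or.inr h
    · exact Or.inl h
    · exfalso
      have : stoich α β l j = 1 := by rw [hprop l j, hj, h]; ring
      rw [hα_pos l j this] at h1; exact one_ne_zero h1.symm
  constructor
  -- ===== part (i) =====
  · rintro hyp κ hκ ⟨x, hxpos, hxline, -⟩
    rcases hyp with ⟨k, hak | hak, hck⟩ | ⟨i, j, hi, hj, hcij⟩
    · have h1 := hxline k
      have h2 := hxpos k.castSucc
      have h3 := hxpos (Fin.last n)
      rw [hak] at h1; nlinarith
    · have h1 := hxline k
      have h2 := hxpos k.castSucc
      rw [hak] at h1; nlinarith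
    · have h1 := hxline i
      have h2 := hxline j
      have h3 := hxpos i.castSucc
      have h4 := hxpos j.castSucc
      rw [hi] at h1; rw [hj] at h2; nlinarith
  -- ===== part (ii) =====
  · rintro ⟨hii1, hii2⟩ κ hκ
    have hCpos : ∀ l, (A l = 0 ∨ A l = -1) → 0 < C l := by
      intro l hl
      induction l using Fin.lastCases with
      | last => rcases hl with h | h <;> rw [hAlast] at h <;> norm_num at h
      | cast i =>
          rw [hCcs]
          apply hii1
          rcases hl with h | h <;> rw [hAcs] at h
          · exact Or.inr h
          · exact Or.inl h
    have hsumpos : ∀ l l', A l = 1 → A l' = -1 → 0 < C l + C l' := by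
      intro l l' hl hl'
      induction l' using Fin.lastCases with
      | last => rw [hAlast] at hl'; norm_num at hl'
      | cast j =>
          induction l using Fin.lastCases with
          | last =>
              rw [hClast, zero_add, hCcs]
              exact hii1 j (Or.inl (by rw [← hAcs]; exact hl'))
          | cast i =>
              rw [hCcs, hCcs]
              exact hii2 i j (by rw [← hAcs]; exact hl) (by rw [← hAcs]; exact hl')
    -- strict monotonicity of g on the feasible region
    have hmono : ∀ t1 t2, (∀ l, 0 ≤ A l * t1 + C l) → (∀ l, 0 ≤ A l * t2 + C l) → t1 < t2 →
        rateFun α β κ (fun l => A l * t2 + C l) (Fin.last n) <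
          rateFun α β κ (fun l => A l * t1 + C l) (Fin.last n) := by
      intro t1 t2 hf1 hf2 h12
      have ht1 : 0 ≤ t1 := by
        have := hf1 (Fin.last n); rwa [hAlast, hClast, one_mul, add_zero] at this
      have hMstrict : ∀ j, stoich α β (Fin.last n) j = -1 →
          (∏ l, (A l * t1 + C l) ^ (α l j)) < ∏ l, (A l * t2 + C l) ^ (α l j) := by
        intro j hj
        have hlast : α (Fin.last n) j = 1 := hα_neg _ _ hj
        rw [Fin.prod_univ_castSucc, Fin.prod_univ_castSucc, hlast, hAlast, hClast]
        simp only [one_mul, add_zero, pow_one]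
        have hP12 : (∏ i : Fin n, (A i.castSucc * t1 + C i.castSucc) ^ (α i.castSucc j)) ≤
            ∏ i : Fin n, (A i.castSucc * t2 + C i.castSucc) ^ (α i.castSucc j) := by
          apply Finset.prod_le_prod
          · intro l _; exact pow_nonneg (hf1 _) _
          · intro l _
            rcases hα01 l.castSucc j with h0 | h1
            · simp only [h0, pow_zero, le_refl]
            · simp only [h1, pow_one]
              rcases hαA_neg l.castSucc j hj h1 with h | h <;> rw [h] <;> nlinarith
        have hP2 : 0 < ∏ i : Fin n, (A i.castSucc * t2 + C i.castSucc) ^ (α i.castSucc j) := by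
          apply Finset.prod_pos
          intro l _
          rcases hα01 l.castSucc j with h0 | h1
          · rw [h0]; norm_num
          · rw [h1, pow_one]
            rcases hαA_neg l.castSucc j hj h1 with h | h
            · rw [h]; have := hCpos l.castSucc (Or.inl h); linarith
            · rw [h]; have := hf1 l.castSucc; rw [h] at this; nlinarith
        calc (∏ i : Fin n, (A i.castSucc * t1 + C i.castSucc) ^ (α i.castSucc j)) * t1
            ≤ (∏ i : Fin n, (A i.castSucc * t2 + C i.castSucc) ^ (α i.castSucc j)) * t1 :=
              mul_le_mul_of_nonneg_right hP12 ht1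
          _ < _ := by exact mul_lt_mul_of_pos_left h12 hP2
      unfold rateFun
      apply Finset.sum_lt_sum
      · intro j _
        rcases hε j with hj | hj
        · rw [hj]
          simp only [one_mul]
          apply mul_le_mul_of_nonneg_left _ (le_of_lt (hκ j))
          apply Finset.prod_le_prod
          · intro l _; exact pow_nonneg (hf2 l) _
          · intro l _
            rcases hα01 l j with h0 | h1
            · simp only [h0, pow_zero, le_refl]
            · simp only [h1, pow_one]
              rcases hαA_pos l j hj h1 with h | h <;> rw [h] <;> nlinarith
        · rw [hj]
          have hMinc : (∏ l, (A l * t1 + C l) ^ (α l j)) ≤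
              ∏ l, (A l * t2 + C l) ^ (α l j) := by
            apply Finset.prod_le_prod
            · intro l _; exact pow_nonneg (hf1 l) _
            · intro l _
              rcases hα01 l j with h0 | h1
              · simp only [h0, pow_zero, le_refl]
              · simp only [h1, pow_one]
                rcases hαA_neg l j hj h1 with h | h <;> rw [h] <;> nlinarith
          nlinarith [hκ j]
      · refine ⟨jn, Finset.mem_univ _, ?_⟩
        rw [hjneg]
        have := hMstrict jn hjneg
        nlinarith [hκ jn]
    -- the left endpoint L
    set L : ℝ := Finset.univ.sup' Finset.univ_nonempty (fun l => if A l = 1 then -C l else 0)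
      with hLdef
    have hLub : ∀ l, A l = 1 → -C l ≤ L := by
      intro l hl
      have := Finset.le_sup' (f := fun l => if A l = 1 then -C l else 0) (Finset.mem_univ l)
      rwa [if_pos hl] at this
    obtain ⟨l0, hl0A, hl0C⟩ : ∃ l0, A l0 = 1 ∧ C l0 = -L := by
      obtain ⟨l', -, hv⟩ := Finset.exists_mem_eq_sup' (Finset.univ_nonempty)
        (fun l => if A l = 1 then -C l else 0)
      by_cases h : A l' = 1
      · exact ⟨l', h, by rw [hLdef, hv, if_pos h]; ring⟩
      · refine ⟨Fin.last n, hAlast, ?_⟩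
        rw [hClast, hLdef, hv, if_neg h, neg_zero]
    have hL0 : 0 ≤ L := by
      have := hLub (Fin.last n) hAlast
      rwa [hClast, neg_zero] at this
    have hfeasL : ∀ l, 0 ≤ A l * L + C l := by
      intro l
      rcases hAval l with h | h | h
      · rw [h, one_mul]; have := hLub l h; linarith
      · rw [h, zero_mul, zero_add]; exact le_of_lt (hCpos l (Or.inl h))
      · rw [h]
        have := hsumpos l0 l hl0A h
        rw [hl0C] at this; linarith
    have hgL : 0 < rateFun α β κ (fun l => A l * L + C l) (Fin.last n) := by
      unfold rateFun
      apply Finset.sum_pos'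
      · intro j _
        rcases hε j with hj | hj
        · rw [hj]
          simp only [one_mul]
          have : (0:ℝ) ≤ ∏ l, (A l * L + C l) ^ α l j :=
            Finset.prod_nonneg fun l _ => pow_nonneg (hfeasL l) _
          nlinarith [hκ j]
        · rw [hj]
          have hzero : (∏ l, ((fun l => A l * L + C l) l) ^ α l j) = 0 := by
            apply Finset.prod_eq_zero (Finset.mem_univ l0)
            show (A l0 * L + C l0) ^ α l0 j = 0
            rw [hforce_neg l0 j hj hl0A, pow_one, hl0A, one_mul, hl0C]
            ring
          rw [hzero, mul_zero]
      · refine ⟨jp, Finset.mem_univ _, ?_⟩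
        rw [hjpos]
        simp only [one_mul]
        have hpos : (0:ℝ) < ∏ l, (A l * L + C l) ^ α l jp := by
          apply Finset.prod_pos
          intro l _
          rcases hα01 l jp with h0 | h1
          · rw [h0]; norm_num
          · rw [h1, pow_one]
            rcases hαA_pos l jp hjpos h1 with h | h
            · rw [h, zero_mul, zero_add]; exact hCpos l (Or.inl h)
            · rw [h]
              have := hsumpos l0 l hl0A h
              rw [hl0C] at this; nlinarith
        exact mul_pos (hκ jp) hpos
    -- a feasible point to the right where g is negative
    have hexneg : ∃ t2, (∀ l, 0 ≤ A l * t2 + C l) ∧ L < t2 ∧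
        rateFun α β κ (fun l => A l * t2 + C l) (Fin.last n) < 0 := by
      by_cases hJ2 : ∃ ls, A ls = -1
      · obtain ⟨ls, hls⟩ := hJ2
        set U : ℝ := Finset.univ.inf' Finset.univ_nonempty
          (fun l => if A l = -1 then C l else C ls) with hUdef
        have hUlb : ∀ l, A l = -1 → U ≤ C l := by
          intro l hl
          have := Finset.inf'_le (f := fun l => if A l = -1 then C l else C ls)
            (Finset.mem_univ l)
          rwa [if_pos hl] at this
        obtain ⟨l1, hl1A, hl1C⟩ : ∃ l1, A l1 = -1 ∧ C l1 = U := by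
          obtain ⟨l', -, hv⟩ := Finset.exists_mem_eq_inf' (Finset.univ_nonempty)
            (fun l => if A l = -1 then C l else C ls)
          by_cases h : A l' = -1
          · exact ⟨l', h, by rw [hUdef, hv, if_pos h]⟩
          · exact ⟨ls, hls, by rw [hUdef, hv, if_neg h]⟩
        have hLU : L < U := by
          have := hsumpos l0 l1 hl0A hl1A
          rw [hl0C, hl1C] at this; linarith
        have hfeasU : ∀ l, 0 ≤ A l * U + C l := by
          intro l
          rcases hAval l with h | h | h
          · rw [h, one_mul]; have := hLub l h; linarith
          · rw [h, zero_mul, zero_add]; exact le_of_lt (hCpos l (Or.inl h))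
          · rw [h]; have := hUlb l h; linarith
        refine ⟨U, hfeasU, hLU, ?_⟩
        unfold rateFun
        have hzsum : ∑ (j : Fin m), (0:ℝ) = 0 := Finset.sum_const_zero
        rw [show (0:ℝ) = ∑ (j : Fin m), (0:ℝ) from hzsum.symm]
        apply Finset.sum_lt_sum
        · intro j _
          rcases hε j with hj | hj
          · rw [hj]
            have hzero : (∏ l, ((fun l => A l * U + C l) l) ^ α l j) = 0 := by
              apply Finset.prod_eq_zero (Finset.mem_univ l1)
              show (A l1 * U + C l1) ^ α l1 j = 0
              rw [hforce_pos l1 j hj hl1A, pow_one, hl1A, hl1C]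
              ring
            rw [hzero, mul_zero]
          · rw [hj]
            have hnn : (0:ℝ) ≤ ∏ l, (A l * U + C l) ^ α l j :=
              Finset.prod_nonneg fun l _ => pow_nonneg (hfeasU l) _
            nlinarith [hκ j]
        · refine ⟨jn, Finset.mem_univ _, ?_⟩
          rw [hjneg]
          have hpos : (0:ℝ) < ∏ l, (A l * U + C l) ^ α l jn := by
            apply Finset.prod_pos
            intro l _
            rcases hα01 l jn with h0 | h1
            · rw [h0]; norm_num
            · rw [h1, pow_one]
              rcases hαA_neg l jn hjneg h1 with h | h
              · rw [h, zero_mul, zero_add]; exact hCpos l (Or.inl h)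
              · rw [h, one_mul]
                have := hLub l h
                linarith
          nlinarith [hκ jn]
      · push_neg at hJ2
        set B : ℝ := 1 + ∑ l, |C l| with hBdef
        have hB : ∀ (l : Fin (n+1)) t, B ≤ t → 1 ≤ t + C l := by
          intro l t ht
          have h1 : |C l| ≤ ∑ l, |C l| :=
            Finset.single_le_sum (fun l _ => abs_nonneg (C l)) (Finset.mem_univ l)
          have h2 : -|C l| ≤ C l := neg_abs_le _
          rw [hBdef] at ht; linarith
        set δ : ℝ := ∏ i : Fin n, (if A i.castSucc = 0 then min 1 (C i.castSucc) else 1)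
          with hδdef
        have hδpos : 0 < δ := by
          apply Finset.prod_pos
          intro i _
          by_cases h : A i.castSucc = 0
          · rw [if_pos h]
            exact lt_min one_pos (hCpos _ (Or.inl h))
          · rw [if_neg h]; norm_num
        set Q : ℝ := ∏ l, max 1 (C l) with hQdef
        have hQ1 : (1:ℝ) ≤ Q := by
          rw [hQdef]
          calc (1:ℝ) = ∏ l : Fin (n+1), 1 := by rw [Finset.prod_const_one]
            _ ≤ _ := Finset.prod_le_prod (fun l _ => by norm_num)
                (fun l _ => le_max_left _ _)
        set K0 : ℝ := ∑ j, κ j with hK0def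
        have hK0 : 0 < K0 := Finset.sum_pos (fun j _ => hκ j) ⟨jn, Finset.mem_univ jn⟩
        have hcd : 0 < κ jn * δ := mul_pos (hκ jn) hδpos
        set t2 : ℝ := max B (max (L+1) (K0 * Q / (κ jn * δ) + 1)) with ht2def
        have hBt2 : B ≤ t2 := le_max_left _ _
        have hLt2 : L < t2 := by
          have h := le_trans (le_max_left (L+1) (K0 * Q / (κ jn * δ) + 1))
            (le_max_right B ((L+1) ⊔ (K0 * Q / (κ jn * δ) + 1)))
          rw [← ht2def] at h
          linarith
        have ht2pos : 0 < t2 := lt_of_le_of_lt hL0 hLt2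
        have hdivt2 : K0 * Q / (κ jn * δ) + 1 ≤ t2 := by
          have h := le_trans (le_max_right (L+1) (K0 * Q / (κ jn * δ) + 1))
            (le_max_right B ((L+1) ⊔ (K0 * Q / (κ jn * δ) + 1)))
          rwa [← ht2def] at h
        have hfeast2 : ∀ l, 0 ≤ A l * t2 + C l := by
          intro l
          rcases hAval l with h | h | h
          · rw [h, one_mul]; have := hB l t2 hBt2; linarith
          · rw [h, zero_mul, zero_add]; exact le_of_lt (hCpos l (Or.inl h))
          · exact absurd h (hJ2 l)
        refine ⟨t2, hfeast2, hLt2, ?_⟩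
        have h_each : ∀ j, stoich α β (Fin.last n) j * κ j *
            (∏ l, (A l * t2 + C l) ^ α l j) ≤ κ j * Q := by
          intro j
          rcases hε j with hj | hj
          · rw [hj, one_mul]
            apply mul_le_mul_of_nonneg_left _ (le_of_lt (hκ j))
            rw [hQdef]
            apply Finset.prod_le_prod
            · intro l _; exact pow_nonneg (hfeast2 l) _
            · intro l _
              rcases hα01 l j with h0 | h1
              · rw [h0, pow_zero]; exact le_max_left _ _
              · rw [h1, pow_one]
                rcases hαA_pos l j hj h1 with h | h
                · rw [h, zero_mul, zero_add]; exact le_max_right _ _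
                · exact absurd h (hJ2 l)
          · rw [hj]
            have hnn : (0:ℝ) ≤ ∏ l, (A l * t2 + C l) ^ α l j :=
              Finset.prod_nonneg fun l _ => pow_nonneg (hfeast2 l) _
            nlinarith [hκ j, hQ1]
        have h_jneg : stoich α β (Fin.last n) jn * κ jn *
            (∏ l, (A l * t2 + C l) ^ α l jn) ≤ -(κ jn * (δ * t2)) := by
          rw [hjneg]
          have hMlb : δ * t2 ≤ ∏ l, (A l * t2 + C l) ^ α l jn := by
            rw [Fin.prod_univ_castSucc, hα_neg _ _ hjneg, hAlast, hClast]
            simp only [one_mul, add_zero, pow_one]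
            have hP : δ ≤
                ∏ i : Fin n, (A i.castSucc * t2 + C i.castSucc) ^ (α i.castSucc jn) := by
              rw [hδdef]
              apply Finset.prod_le_prod
              · intro i _
                by_cases h : A i.castSucc = 0
                · rw [if_pos h]; exact le_of_lt (lt_min one_pos (hCpos _ (Or.inl h)))
                · rw [if_neg h]; norm_num
              · intro i _
                rcases hα01 i.castSucc jn with h0 | h1
                · rw [h0, pow_zero]
                  by_cases h : A i.castSucc = 0
                  · rw [if_pos h]; exact min_le_left _ _
                  · rw [if_neg h]
                · rw [h1, pow_one]
                  rcases hαA_neg i.castSucc jn hjneg h1 with h | h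
                  · rw [if_pos h, h, zero_mul, zero_add]; exact min_le_right _ _
                  · rw [if_neg (by rw [h]; norm_num), h, one_mul]
                    have := hB i.castSucc t2 hBt2; linarith
            calc δ * t2
                ≤ (∏ i : Fin n, (A i.castSucc * t2 + C i.castSucc) ^ (α i.castSucc jn)) * t2 :=
                  mul_le_mul_of_nonneg_right hP (le_of_lt ht2pos)
              _ = _ := rfl
          nlinarith [hκ jn]
        have hsplit : rateFun α β κ (fun l => A l * t2 + C l) (Fin.last n) =
            (∑ j ∈ Finset.univ.erase jn,
              stoich α β (Fin.last n) j * κ j * (∏ l, (A l * t2 + C l) ^ α l j)) +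
            stoich α β (Fin.last n) jn * κ jn * (∏ l, (A l * t2 + C l) ^ α l jn) := by
          unfold rateFun
          exact (Finset.sum_erase_add _ _ (Finset.mem_univ jn)).symm
        rw [hsplit]
        have h1 : (∑ j ∈ Finset.univ.erase jn,
            stoich α β (Fin.last n) j * κ j * (∏ l, (A l * t2 + C l) ^ α l j)) ≤
            ∑ j ∈ Finset.univ.erase jn, κ j * Q :=
          Finset.sum_le_sum fun j _ => h_each j
        have h2 : (∑ j ∈ Finset.univ.erase jn, κ j * Q) ≤ ∑ j, κ j * Q := by
          apply Finset.sum_le_sum_of_subset_of_nonneg (Finset.subset_univ _)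
          intro j _ _
          exact mul_nonneg (le_of_lt (hκ j)) (by linarith)
        have h3 : (∑ j, κ j * Q) = K0 * Q := by rw [hK0def, Finset.sum_mul]
        have h4 : K0 * Q / (κ jn * δ) * (κ jn * δ) = K0 * Q :=
          div_mul_cancel₀ _ (ne_of_gt hcd)
        nlinarith [h_jneg, mul_le_mul_of_nonneg_right hdivt2 (le_of_lt hcd)]
    -- continuity and the intermediate value theorem
    have hcont : Continuous
        (fun t : ℝ => rateFun α β κ (fun l => A l * t + C l) (Fin.last n)) := by
      unfold rateFun
      apply continuous_finset_sum
      intro j _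
      apply Continuous.mul continuous_const
      apply continuous_finset_prod
      intro l _
      exact ((continuous_const.mul continuous_id).add continuous_const).pow _
    obtain ⟨t2, hfeast2, hLt2, hgt2⟩ := hexneg
    have h0mem : (0:ℝ) ∈ Set.Icc
        (rateFun α β κ (fun l => A l * t2 + C l) (Fin.last n))
        (rateFun α β κ (fun l => A l * L + C l) (Fin.last n)) :=
      ⟨le_of_lt hgt2, le_of_lt hgL⟩
    obtain ⟨ts, htmem, hgts⟩ :=
      (intermediate_value_Icc' (le_of_lt hLt2) hcont.continuousOn) h0mem
    have hgts' : rateFun α β κ (fun l => A l * ts + C l) (Fin.last n) = 0 := hgts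
    clear hgts
    have htL : L < ts := by
      rcases lt_or_eq_of_le htmem.1 with h | h
      · exact h
      · exfalso; rw [← h] at hgts'; linarith
    have htU : ts < t2 := by
      rcases lt_or_eq_of_le htmem.2 with h | h
      · exact h
      · exfalso; rw [h] at hgts'; linarith
    -- the steady state
    have hxpos : ∀ l, 0 < A l * ts + C l := by
      intro l
      rcases hAval l with h | h | h
      · have := hfeasL l; rw [h] at this ⊢; simp only [one_mul] at this ⊢; linarith
      · rw [h, zero_mul, zero_add]; exact hCpos l (Or.inl h)
      · have := hfeast2 l; rw [h] at this ⊢; nlinarith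
    have hfeasts : ∀ l, 0 ≤ A l * ts + C l := fun l => le_of_lt (hxpos l)
    have hxconstr : ∀ i : Fin n, (fun l => A l * ts + C l) i.castSucc =
        a i * (fun l => A l * ts + C l) (Fin.last n) + c i := by
      intro i
      show A i.castSucc * ts + C i.castSucc = a i * (A (Fin.last n) * ts + C (Fin.last n)) + c i
      rw [hAcs, hCcs, hAlast, hClast]; ring
    have hxss : ∀ i, rateFun α β κ (fun l => A l * ts + C l) i = 0 := by
      intro i
      rw [rate_prop α β A hprop κ _ i, hgts', mul_zero]
    -- the Jacobian
    set w : Fin (n+1) → ℝ :=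
      fun l => jacF α β κ (fun l => A l * ts + C l) (Fin.last n) l with hwdef
    have hjacprop : ∀ i l, jacF α β κ (fun l => A l * ts + C l) i l = A i * w l := by
      intro i l
      rw [hwdef]
      unfold jacF
      have heq : (fun t => rateFun α β κ
          (Function.update (fun l => A l * ts + C l) l t) i) =
          fun t => A i * rateFun α β κ
            (Function.update (fun l => A l * ts + C l) l t) (Fin.last n) :=
        funext fun t => rate_prop α β A hprop κ _ i
      rw [heq, deriv_const_mul_field]
    have hw : ∀ l, w l = ∑ j, stoich α β (Fin.last n) j * κ j *
        ((α l j : ℝ) * ∏ l' ∈ Finset.univ.erase l, (A l' * ts + C l') ^ α l' j) := by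
      intro l
      rw [hwdef]
      unfold jacF
      have hder : HasDerivAt
          (fun t => rateFun α β κ (Function.update (fun l => A l * ts + C l) l t) (Fin.last n))
          (∑ j, stoich α β (Fin.last n) j * κ j *
            ((α l j : ℝ) * ∏ l' ∈ Finset.univ.erase l, (A l' * ts + C l') ^ α l' j))
          ((fun l => A l * ts + C l) l) := by
        unfold rateFun
        apply HasDerivAt.fun_sum
        intro j _
        have hkey : ∀ t : ℝ,
            (∏ l', (Function.update (fun l => A l * ts + C l) l t l') ^ α l' j) =
            t ^ α l j * ∏ l' ∈ Finset.univ.erase l, (A l' * ts + C l') ^ α l' j := by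
          intro t
          rw [← Finset.mul_prod_erase Finset.univ _ (Finset.mem_univ l),
            Function.update_self]
          congr 1
          apply Finset.prod_congr rfl
          intro l' hl'
          rw [Function.update_of_ne (Finset.ne_of_mem_erase hl')]
        simp only [hkey]
        have h1 : HasDerivAt (fun t : ℝ => stoich α β (Fin.last n) j * κ j *
            (t ^ α l j * ∏ l' ∈ Finset.univ.erase l, (A l' * ts + C l') ^ α l' j))
            (stoich α β (Fin.last n) j * κ j *
              (((α l j : ℝ) * ((fun l => A l * ts + C l) l) ^ (α l j - 1)) *
                ∏ l' ∈ Finset.univ.erase l, (A l' * ts + C l') ^ α l' j))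
            ((fun l => A l * ts + C l) l) :=
          (((hasDerivAt_pow (α l j) _).mul_const _).const_mul _)
        have h2 : (((α l j : ℝ) * ((fun l => A l * ts + C l) l) ^ (α l j - 1)) *
            ∏ l' ∈ Finset.univ.erase l, (A l' * ts + C l') ^ α l' j)
            = (α l j : ℝ) * ∏ l' ∈ Finset.univ.erase l, (A l' * ts + C l') ^ α l' j := by
          rcases hα01 l j with h | h <;> simp [h]
        rwa [h2] at h1
      exact hder.deriv
    set lam : ℝ := ∑ l, w l * A l with hlamdef
    have hlam : lam < 0 := by
      have hswap : lam = ∑ j, ∑ l, stoich α β (Fin.last n) j * κ j *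
          ((α l j : ℝ) * ∏ l' ∈ Finset.univ.erase l, (A l' * ts + C l') ^ α l' j) * A l := by
        rw [hlamdef, Finset.sum_comm]
        apply Finset.sum_congr rfl
        intro l _
        rw [hw l, Finset.sum_mul]
      rw [hswap]
      have hprod_nonneg : ∀ (l : Fin (n+1)) j,
          (0:ℝ) ≤ ∏ l' ∈ Finset.univ.erase l, (A l' * ts + C l') ^ α l' j :=
        fun l j => Finset.prod_nonneg fun l' _ => pow_nonneg (le_of_lt (hxpos l')) _
      have key : ∀ j (l : Fin (n+1)), stoich α β (Fin.last n) j * κ j *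
          ((α l j : ℝ) * ∏ l' ∈ Finset.univ.erase l, (A l' * ts + C l') ^ α l' j) * A l
            ≤ 0 := by
        intro j l
        rcases hα01 l j with h0 | h1
        · rw [h0]; norm_num
        · rcases hε j with hj | hj
          · rw [hj, h1, one_mul]
            rcases hαA_pos l j hj h1 with h | h <;> rw [h] <;> push_cast <;>
              nlinarith [hκ j, hprod_nonneg l j]
          · rw [hj, h1]
            rcases hαA_neg l j hj h1 with h | h <;> rw [h] <;> push_cast <;>
              nlinarith [hκ j, hprod_nonneg l j]
      have hzsum : ∑ (j : Fin m), (0:ℝ) = 0 := Finset.sum_const_zero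
      rw [show (0:ℝ) = ∑ (j : Fin m), (0:ℝ) from hzsum.symm]
      apply Finset.sum_lt_sum
      · intro j _
        exact Finset.sum_nonpos fun l _ => key j l
      · refine ⟨jn, Finset.mem_univ _, ?_⟩
        have hzsum' : ∑ (l : Fin (n+1)), (0:ℝ) = 0 := Finset.sum_const_zero
        rw [show (0:ℝ) = ∑ (l : Fin (n+1)), (0:ℝ) from hzsum'.symm]
        apply Finset.sum_lt_sum
        · intro l _; exact key jn l
        · refine ⟨Fin.last n, Finset.mem_univ _, ?_⟩
          rw [hjneg, hα_neg _ _ hjneg, hAlast]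
          have hpp : (0:ℝ) < ∏ l' ∈ Finset.univ.erase (Fin.last n),
              (A l' * ts + C l') ^ α l' jn :=
            Finset.prod_pos fun l' _ => pow_pos (hxpos l') _
          push_cast
          nlinarith [hκ jn]
    -- assemble
    refine ⟨fun l => A l * ts + C l, ⟨hxpos, hxconstr, hxss⟩, ?_, ?_, ?_⟩
    · -- span claim
      have hS : Submodule.span ℝ (Set.range fun j i => stoich α β i j) =
          Submodule.span ℝ {A} := by
        apply le_antisymm
        · rw [Submodule.span_le]
          rintro _ ⟨j, rfl⟩
          have hcol : (fun i => stoich α β i j) = stoich α β (Fin.last n) j • A :=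
            funext fun i => by rw [hprop i j]; simp [mul_comm]
          show (fun i => stoich α β i j) ∈ (Submodule.span ℝ {A} : Submodule ℝ _)
          rw [hcol]
          exact Submodule.smul_mem _ _ (Submodule.subset_span rfl)
        · rw [Submodule.span_le, Set.singleton_subset_iff]
          exact Submodule.subset_span
            ⟨jp, funext fun i => by
              show stoich α β i jp = A i
              rw [hprop i jp, hjpos, mul_one]⟩
      rw [hS, Submodule.map_span, Set.image_singleton]
      have hMA : Matrix.mulVecLin (jacF α β κ (fun l => A l * ts + C l)) A = lam • A := by
        funext i
        rw [Matrix.mulVecLin_apply]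
        show (∑ l, jacF α β κ (fun l => A l * ts + C l) i l * A l) = lam * A i
        rw [hlamdef, Finset.sum_mul]
        apply Finset.sum_congr rfl
        intro l _
        rw [hjacprop i l]; ring
      rw [hMA]
      exact Submodule.span_singleton_smul_eq
        (isUnit_iff_ne_zero.mpr (ne_of_lt hlam)) A
    · -- spectrum claim
      intro μ hμ hμ0
      rw [spectrum.mem_iff] at hμ
      have hdet : ((algebraMap ℂ _ μ) -
          (jacF α β κ (fun l => A l * ts + C l)).map Complex.ofReal).det = 0 := by
        by_contra h
        exact hμ ((Matrix.isUnit_iff_isUnit_det _).mpr (isUnit_iff_ne_zero.mpr h))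
      obtain ⟨v, hv0, hvec⟩ := (Matrix.exists_mulVec_eq_zero_iff).mpr hdet
      have hvec' : ((jacF α β κ (fun l => A l * ts + C l)).map Complex.ofReal).mulVec v
          = μ • v := by
        rw [Algebra.algebraMap_eq_smul_one, Matrix.sub_mulVec, Matrix.smul_mulVec,
          Matrix.one_mulVec, sub_eq_zero] at hvec
        exact hvec.symm
      set d : ℂ := ∑ l, (w l : ℂ) * v l with hddef
      have hmv : ∀ i, μ * v i = (A i : ℂ) * d := by
        intro i
        have h1 := congrFun hvec' i
        rw [Matrix.mulVec, Pi.smul_apply, smul_eq_mul] at h1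
        rw [← h1]
        show (∑ l, ((jacF α β κ (fun l => A l * ts + C l)).map Complex.ofReal) i l * v l)
          = (A i : ℂ) * d
        rw [hddef, Finset.mul_sum]
        apply Finset.sum_congr rfl
        intro l _
        rw [Matrix.map_apply, hjacprop i l]
        push_cast
        ring
      have hd0 : d ≠ 0 := by
        intro hd
        apply hv0
        funext i
        have := hmv i
        rw [hd, mul_zero] at this
        exact (mul_eq_zero.mp this).resolve_left hμ0
      have hμlam : μ = (lam : ℂ) := by
        have h1 : μ * d = (∑ l, (A l : ℂ) * d * (w l : ℂ)) := by
          rw [hddef, Finset.mul_sum]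
          apply Finset.sum_congr rfl
          intro l _
          rw [show μ * ((w l : ℂ) * v l) = (w l : ℂ) * (μ * v l) by ring, hmv l]
          ring
        have h2 : μ * d = (lam : ℂ) * d := by
          rw [h1, hlamdef]
          push_cast
          rw [Finset.sum_mul]
          apply Finset.sum_congr rfl
          intro l _
          ring
        exact mul_right_cancel₀ hd0 h2
      rw [hμlam]
      exact hlam
    · -- uniqueness
      rintro y ⟨hypos, hyconstr, hyss⟩
      set ty : ℝ := y (Fin.last n) with htydef
      have hy_eq : y = fun l => A l * ty + C l := by
        funext l
        induction l using Fin.lastCases with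
        | last =>
            show y (Fin.last n) = A (Fin.last n) * ty + C (Fin.last n)
            rw [hAlast, hClast, one_mul, add_zero]
        | cast i =>
            show y i.castSucc = A i.castSucc * ty + C i.castSucc
            rw [hyconstr i, hAcs, hCcs]
      have hfeasty : ∀ l, 0 ≤ A l * ty + C l := by
        intro l
        have := hypos l
        rw [hy_eq] at this
        exact le_of_lt this
      have hgty : rateFun α β κ (fun l => A l * ty + C l) (Fin.last n) = 0 := by
        rw [← hy_eq]
        exact hyss (Fin.last n)
      have hty : ty = ts := by
        rcases lt_trichotomy ty ts with h | h | h
        · have := hmono ty ts hfeasty hfeasts h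
          rw [hgty, hgts'] at this
          exact absurd this (lt_irrefl 0)
        · exact h
        · have := hmono ts ty hfeasts hfeasty h
          rw [hgty, hgts'] at this
          exact absurd this (lt_irrefl 0)
      rw [hy_eq, hty]
end
end

section
/- Let (α,β) be a zero-one reaction network whose stoichiometric matrix N has rank one, with rows N_i = a_i N_s for 1 ≤ i ≤ s−1. For every c ∈ ℝ^{s−1}, the positive stoichiometric compatibility class P_c^+ is nonempty if and only if c_k > 0 for every k ∈ J2 ∪ J3 and c_i + c_j > 0 for every (i,j) ∈ J1 × J2. -/
noncomputable section

/-- For a rank-one zero-one network with conservation laws `x_i = a_i x_s + c_i`,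
the positive stoichiometric compatibility class `P_c^+` is nonempty iff `c_k > 0` for every
`k ∈ J2 ∪ J3` and `c_i + c_j > 0` for every `(i,j) ∈ J1 × J2`. -/
theorem stmt2 {n m : ℕ} (α β : Matrix (Fin (n + 1)) (Fin m) ℕ)
    (hnet : ∀ j, ∃ i, α i j ≠ β i j)
    (h01 : ∀ i j, α i j ≤ 1 ∧ β i j ≤ 1)
    (hrank : (stoich α β).rank = 1)
    (a : Fin n → ℝ)
    (ha : ∀ (i : Fin n) (j : Fin m),
      stoich α β i.castSucc j = a i * stoich α β (Fin.last n) j)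
    (c : Fin n → ℝ) :
    (∃ x : Fin (n + 1) → ℝ, (∀ i, 0 < x i) ∧
        (∀ i : Fin n, x i.castSucc = a i * x (Fin.last n) + c i))
    ↔ ((∀ k : Fin n, (a k = -1 ∨ a k = 0) → 0 < c k) ∧
        (∀ i j : Fin n, a i = 1 → a j = -1 → 0 < c i + c j)) := by
  constructor
  · rintro ⟨x, hx, hxc⟩
    constructor
    · intro k hk
      have h1 := hxc k
      have h2 := hx k.castSucc
      have h3 := hx (Fin.last n)
      rcases hk with h | h <;> rw [h] at h1 <;> linarith
    · intro i j hi hj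
      have h1 := hxc i
      have h2 := hxc j
      rw [hi] at h1; rw [hj] at h2
      have h4 := hx i.castSucc
      have h5 := hx j.castSucc
      linarith
  · rintro ⟨hc1, hc2⟩
    classical
    have hval : ∀ i j, stoich α β i j = -1 ∨ stoich α β i j = 0 ∨ stoich α β i j = 1 := by
      intro i j
      rcases Nat.le_one_iff_eq_zero_or_eq_one.mp (h01 i j).1 with h1 | h1 <;>
      rcases Nat.le_one_iff_eq_zero_or_eq_one.mp (h01 i j).2 with h2 | h2 <;>
      simp [stoich, h1, h2]
    have hrow : ∃ j, stoich α β (Fin.last n) j ≠ 0 := by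
      by_contra h
      push_neg at h
      have hz : stoich α β = 0 := by
        ext i j
        induction i using Fin.lastCases with
        | last => exact h j
        | cast i => rw [ha i j, h j, mul_zero]; exact (Matrix.zero_apply _ _).symm
      rw [hz, Matrix.rank_zero] at hrank
      exact absurd hrank (by norm_num)
    obtain ⟨j₀, hj₀⟩ := hrow
    have ha3 : ∀ i : Fin n, a i = -1 ∨ a i = 0 ∨ a i = 1 := by
      intro i
      have h := ha i j₀
      have hv := hval i.castSucc j₀
      rcases hval (Fin.last n) j₀ with hd | hd | hd
      · rw [hd] at h
        rcases hv with hv | hv | hv <;> rw [hv] at h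
        · right; right; linarith
        · right; left; linarith
        · left; linarith
      · exact absurd hd hj₀
      · rw [hd] at h
        rcases hv with hv | hv | hv <;> rw [hv] at h
        · left; linarith
        · right; left; linarith
        · right; right; linarith
    have hT : ∃ t : ℝ, 0 < t ∧ (∀ i, a i = 1 → -c i < t) ∧ (∀ i, a i = -1 → t < c i) := by
      set J1 : Finset (Fin n) := Finset.univ.filter (fun i => a i = 1) with hJ1
      set T : Finset ℝ := insert 0 (J1.image (fun i => -c i)) with hTdef
      have hTne : T.Nonempty := ⟨0, Finset.mem_insert_self _ _⟩
      set L := T.max' hTne with hLdef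
      have hL0 : (0:ℝ) ≤ L := Finset.le_max' _ _ (Finset.mem_insert_self _ _)
      have hLc : ∀ i, a i = 1 → -c i ≤ L := by
        intro i hi
        apply Finset.le_max'
        exact Finset.mem_insert_of_mem (Finset.mem_image.mpr ⟨i, by simp [hJ1, hi], rfl⟩)
      by_cases hS : ∃ j, a j = -1
      · obtain ⟨j₁, hj₁⟩ := hS
        set S : Finset (Fin n) := Finset.univ.filter (fun j => a j = -1) with hSdef
        have hSne : S.Nonempty := ⟨j₁, by simp [hSdef, hj₁]⟩
        set μ := S.inf' hSne c with hμdef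
        have hμle : ∀ j, a j = -1 → μ ≤ c j := by
          intro j hj; exact Finset.inf'_le _ (by simp [hSdef, hj])
        obtain ⟨j₂, hj₂mem, hj₂⟩ := Finset.exists_mem_eq_inf' hSne c
        have hj₂a : a j₂ = -1 := by simpa [hSdef] using hj₂mem
        have hμpos : 0 < μ := by rw [hμdef, hj₂]; exact hc1 j₂ (Or.inl hj₂a)
        have hLμ : L < μ := by
          have hLmem := Finset.max'_mem T hTne
          rw [← hLdef] at hLmem
          rcases Finset.mem_insert.mp hLmem with h0 | hmem
          · rw [h0]; exact hμpos
          · obtain ⟨i, hi, hie⟩ := Finset.mem_image.mp hmem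
            have hia : a i = 1 := by simpa [hJ1] using hi
            rw [← hie, hμdef, hj₂]
            have := hc2 i j₂ hia hj₂a
            linarith
        refine ⟨(L + μ)/2, by linarith, fun i hi => ?_, fun i hi => ?_⟩
        · have := hLc i hi; linarith
        · have := hμle i hi; linarith
      · push_neg at hS
        refine ⟨L + 1, by linarith, fun i hi => ?_, fun i hi => absurd hi (hS i)⟩
        have := hLc i hi; linarith
    obtain ⟨t, ht0, ht1, ht2⟩ := hT
    refine ⟨fun i => Fin.lastCases t (fun i => a i * t + c i) i, ?_, ?_⟩
    · intro i
      induction i using Fin.lastCases with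
      | last => simpa using ht0
      | cast i =>
        simp only [Fin.lastCases_castSucc]
        rcases ha3 i with h | h | h <;> rw [h]
        · have := ht2 i h; linarith
        · have := hc1 i (Or.inr h); linarith
        · have := ht1 i h; linarith
    · intro i
      simp [Fin.lastCases_castSucc, Fin.lastCases_last]
end
end

section
/- Let (α,β) be a zero-one reaction network whose stoichiometric matrix N has rank one, with rows N_i = a_i N_s for 1 ≤ i ≤ s−1, and suppose every nonzero row of N changes signs. For every c ∈ ℝ^{s−1} with P_c^+ ≠ ∅ and every κ ∈ ℝ^m_{>0}, the network has no boundary steady state in P_c: there is no x ∈ P_c having at least one zero coordinate with f(κ,x) = 0. -/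
noncomputable section

/-- From positivity of an entry of the stoichiometric matrix, the reactant coefficient is 0. -/
lemma alpha_eq_zero_of_pos {s m : ℕ} (α β : Matrix (Fin s) (Fin m) ℕ)
    (h01 : ∀ i j, α i j ≤ 1 ∧ β i j ≤ 1) {i : Fin s} {j : Fin m}
    (h : 0 < stoich α β i j) : α i j = 0 := by
  have hb := (h01 i j).2
  have : (α i j : ℝ) < (β i j : ℝ) := by unfold stoich at h; linarith
  have : α i j < β i j := by exact_mod_cast this
  omega

/-- From negativity of an entry of the stoichiometric matrix, the reactant coefficient is 1. -/
lemma alpha_eq_one_of_neg {s m : ℕ} (α β : Matrix (Fin s) (Fin m) ℕ)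
    (h01 : ∀ i j, α i j ≤ 1 ∧ β i j ≤ 1) {i : Fin s} {j : Fin m}
    (h : stoich α β i j < 0) : α i j = 1 := by
  have ha := (h01 i j).1
  have : (β i j : ℝ) < (α i j : ℝ) := by unfold stoich at h; linarith
  have : β i j < α i j := by exact_mod_cast this
  omega

/-- Key positivity lemma for the mass-action sum along a sign vector `v`. -/
lemma aux_sum_pos {s m : ℕ} (α : Matrix (Fin s) (Fin m) ℕ)
    (x : Fin s → ℝ) (κ v : Fin m → ℝ)
    (hx : ∀ i, 0 ≤ x i) (hκ : ∀ j, 0 < κ j)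
    (i0 : Fin s) (hi0 : x i0 = 0)
    (hkey : ∀ i, x i = 0 → ∀ j, (0 < v j → α i j = 0) ∧ (v j < 0 → α i j = 1))
    (jp : Fin m) (hjp : 0 < v jp) :
    0 < ∑ j, v j * κ j * ∏ l, x l ^ (α l j) := by
  apply Finset.sum_pos'
  · intro j _
    rcases lt_trichotomy (v j) 0 with h | h | h
    · have hz : (∏ l, x l ^ (α l j)) = 0 := by
        apply Finset.prod_eq_zero (Finset.mem_univ i0)
        rw [(hkey i0 hi0 j).2 h, hi0]; simp
      simp [hz]
    · simp [h]
    · apply mul_nonneg (mul_nonneg h.le (hκ j).le)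
      exact Finset.prod_nonneg fun l _ => pow_nonneg (hx l) _
  · refine ⟨jp, Finset.mem_univ jp, ?_⟩
    apply mul_pos (mul_pos hjp (hκ jp))
    apply Finset.prod_pos
    intro l _
    rcases eq_or_lt_of_le (hx l) with h | h
    · rw [(hkey l h.symm jp).1 hjp]; simp
    · exact pow_pos h _

/-- For a rank-one zero-one network all of whose nonzero rows change signs, if `P_c^+ ≠ ∅`
then there are no boundary steady states in `P_c`. -/
theorem stmt3 {n m : ℕ} (α β : Matrix (Fin (n + 1)) (Fin m) ℕ)
    (hnet : ∀ j, ∃ i, α i j ≠ β i j)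
    (h01 : ∀ i j, α i j ≤ 1 ∧ β i j ≤ 1)
    (hrank : (stoich α β).rank = 1)
    (a : Fin n → ℝ)
    (ha : ∀ (i : Fin n) (j : Fin m),
      stoich α β i.castSucc j = a i * stoich α β (Fin.last n) j)
    (hsign : ∀ i : Fin (n + 1), (∃ j, stoich α β i j ≠ 0) →
      (∃ j, 0 < stoich α β i j) ∧ (∃ j, stoich α β i j < 0))
    (c : Fin n → ℝ)
    (hne : ∃ x : Fin (n + 1) → ℝ, (∀ i, 0 < x i) ∧
      (∀ i : Fin n, x i.castSucc = a i * x (Fin.last n) + c i))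
    (κ : Fin m → ℝ) (hκ : ∀ j, 0 < κ j) :
    ¬ ∃ x : Fin (n + 1) → ℝ, (∀ i, 0 ≤ x i) ∧
        (∀ i : Fin n, x i.castSucc = a i * x (Fin.last n) + c i) ∧
        (∃ i, x i = 0) ∧
        (∀ i, rateFun α β κ x i = 0) := by
  rintro ⟨x, hx0, hxc, ⟨i0, hxi0⟩, hss⟩
  obtain ⟨y, hy0, hyc⟩ := hne
  -- the last row of N is nonzero
  have hrow : ∃ j, stoich α β (Fin.last n) j ≠ 0 := by
    by_contra hall
    push_neg at hall
    have hN : stoich α β = 0 := by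
      ext i j
      induction i using Fin.lastCases with
      | last => simpa using hall j
      | cast i => simp [ha i j, hall j]
    rw [hN] at hrank
    simp [Matrix.rank_zero] at hrank
  obtain ⟨⟨jp, hjp⟩, ⟨jm, hjm⟩⟩ := hsign (Fin.last n) hrow
  have hg : rateFun α β κ x (Fin.last n) = 0 := hss (Fin.last n)
  unfold rateFun at hg
  rcases lt_trichotomy (x (Fin.last n)) (y (Fin.last n)) with hlt | heq | hgt
  · -- x_n < y_n : the sum is strictly positive
    have hkey : ∀ i, x i = 0 → ∀ j,
        (0 < stoich α β (Fin.last n) j → α i j = 0) ∧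
        (stoich α β (Fin.last n) j < 0 → α i j = 1) := by
      intro i hxi j
      induction i using Fin.lastCases with
      | last =>
        exact ⟨fun h => alpha_eq_zero_of_pos α β h01 h,
               fun h => alpha_eq_one_of_neg α β h01 h⟩
      | cast i =>
        have hya : y i.castSucc = a i * y (Fin.last n) + c i := hyc i
        have hxa : x i.castSucc = a i * x (Fin.last n) + c i := hxc i
        have hyi : 0 < y i.castSucc := hy0 i.castSucc
        have hneg : a i * (x (Fin.last n) - y (Fin.last n)) < 0 := by nlinarith
        have hai : 0 < a i := by nlinarith
        constructor
        · intro h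
          apply alpha_eq_zero_of_pos α β h01 (j := j)
          rw [ha i j]; exact mul_pos hai h
        · intro h
          apply alpha_eq_one_of_neg α β h01 (j := j)
          rw [ha i j]; exact mul_neg_of_pos_of_neg hai h
    have := aux_sum_pos α x κ (fun j => stoich α β (Fin.last n) j)
      hx0 hκ i0 hxi0 hkey jp hjp
    linarith
  · -- x_n = y_n : impossible, since then x = y is positive
    induction i0 using Fin.lastCases with
    | last =>
      have := hy0 (Fin.last n)
      rw [heq] at hxi0; linarith
    | cast i =>
      have := hy0 i.castSucc
      rw [hxc i, heq, ← hyc i] at hxi0; linarith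
  · -- x_n > y_n : the sum is strictly negative
    have hkey : ∀ i, x i = 0 → ∀ j,
        (0 < -stoich α β (Fin.last n) j → α i j = 0) ∧
        (-stoich α β (Fin.last n) j < 0 → α i j = 1) := by
      intro i hxi j
      induction i using Fin.lastCases with
      | last =>
        exfalso
        have := hy0 (Fin.last n)
        linarith [hxi ▸ hgt]
      | cast i =>
        have hya : y i.castSucc = a i * y (Fin.last n) + c i := hyc i
        have hxa : x i.castSucc = a i * x (Fin.last n) + c i := hxc i
        have hyi : 0 < y i.castSucc := hy0 i.castSucc
        have hneg : a i * (x (Fin.last n) - y (Fin.last n)) < 0 := by nlinarith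
        have hai : a i < 0 := by nlinarith
        constructor
        · intro h
          apply alpha_eq_zero_of_pos α β h01 (j := j)
          rw [ha i j]
          have : stoich α β (Fin.last n) j < 0 := by linarith
          exact mul_pos_of_neg_of_neg hai this
        · intro h
          apply alpha_eq_one_of_neg α β h01 (j := j)
          rw [ha i j]
          have : 0 < stoich α β (Fin.last n) j := by linarith
          exact mul_neg_of_neg_of_pos hai this
    have hsum := aux_sum_pos α x κ (fun j => -stoich α β (Fin.last n) j)
      hx0 hκ i0 hxi0 hkey jm (by simpa using hjm)
    simp only [neg_mul, Finset.sum_neg_distrib] at hsum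
    linarith
end
end

section
/- Let (α,β) be a zero-one reaction network whose stoichiometric matrix N has rank one, with rows N_i = a_i N_s for 1 ≤ i ≤ s−1, and suppose every nonzero row of N changes signs. Then for every κ ∈ ℝ^m_{>0} and every positive steady state x ∈ ℝ^s_{>0}, the determinant of the s×s matrix whose i-th row, for 1 ≤ i ≤ s−1, is e_i − a_i e_s (where e_i are the standard basis row vectors of ℝ^s) and whose s-th row is the gradient ((∂f_s/∂x_1)(κ,x), …, (∂f_s/∂x_s)(κ,x)) is strictly negative. -/
noncomputable section

/-!
Adding `a_i` times column `i` to the last column turns the determinant into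
`∂f_s/∂x_s + ∑ a_i ∂f_s/∂x_i`. As row `i` of `N` is `a_i` times row `s`, the same holds for the
rows of the Jacobian, so `∂f_i/∂x_i = a_i ∂f_s/∂x_i` and the determinant is the trace of the
Jacobian. In a network whose product coefficients are at most one, a reaction `j` contributes to
`∂f_l/∂x_l` only if `α_lj ≥ 1`, and then `N_lj ≤ 0`; so every diagonal entry is nonpositive.
Rank one makes row `s` nonzero, so it has a negative entry, and that reaction consumes species
`s`, making `∂f_s/∂x_s` strictly negative at a positive point.
-/

open Finset Matrix

lemma Matrix.det_updateRow_one {ι R : Type*} [Fintype ι] [DecidableEq ι] [CommRing R]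
    (i : ι) (v : ι → R) : ((1 : Matrix ι ι R).updateRow i v).det = v i := by
  rw [← cramer_transpose_apply, transpose_one, cramer_one]
  rfl

lemma det_rows_single_sub_mul_single_last {R : Type*} [CommRing R] {n : ℕ} (a : Fin n → R)
    (g : Fin (n + 1) → R) :
    det (of fun i l : Fin (n + 1) =>
      if h : i = Fin.last n then g l
      else (if l = i then (1 : R) else 0) - a (i.castPred h) * (if l = Fin.last n then 1 else 0))
    = g (Fin.last n) + ∑ i : Fin n, a i * g i.castSucc := by
  set M : Matrix (Fin (n + 1)) (Fin (n + 1)) R := of fun i l =>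
      if h : i = Fin.last n then g l
      else (if l = i then (1 : R) else 0) - a (i.castPred h) * (if l = Fin.last n then 1 else 0)
  have hcol : M.updateCol (Fin.last n) (fun k => ∑ i, (Fin.snoc a 1 : Fin (n + 1) → R) i • M k i)
      = (1 : Matrix _ _ R).updateRow (Fin.last n)
          (Function.update g (Fin.last n) (g (Fin.last n) + ∑ i : Fin n, a i * g i.castSucc)) := by
    ext i l
    cases i using Fin.lastCases <;> cases l using Fin.lastCases <;>
      simp [M, Fin.sum_univ_castSucc, one_apply, updateRow_apply, add_comm, eq_comm]
  have hdet := det_updateCol_sum M (Fin.last n) (Fin.snoc a 1)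
  rw [hcol, det_updateRow_one, Fin.snoc_last, one_smul, Function.update_self] at hdet
  exact hdet.symm

lemma exists_last_ne_zero_of_rows_eq_mul_last {R ι : Type*} [Semiring R] {n : ℕ}
    {A : Matrix (Fin (n + 1)) ι R} (hA : A ≠ 0) {a : Fin n → R}
    (ha : ∀ i j, A i.castSucc j = a i * A (Fin.last n) j) : ∃ j, A (Fin.last n) j ≠ 0 := by
  by_contra! h
  refine hA (ext fun i j => ?_)
  cases i using Fin.lastCases <;> simp [ha, h]

lemma hasDerivAt_prod_pow_update {ι : Type*} [Fintype ι] [DecidableEq ι] (k : ι → ℕ)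
    (x : ι → ℝ) (l : ι) :
    HasDerivAt (fun t => ∏ l', Function.update x l t l' ^ k l')
      ((∏ l' ∈ univ.erase l, x l' ^ k l') * (k l * x l ^ (k l - 1))) (x l) := by
  have hsplit : (fun t => ∏ l', Function.update x l t l' ^ k l')
      = fun t => (∏ l' ∈ univ.erase l, x l' ^ k l') * t ^ k l := by
    funext t
    rw [← prod_erase_mul univ _ (mem_univ l), Function.update_self]
    congr 1
    exact prod_congr rfl fun l' hl' => by rw [Function.update_of_ne (ne_of_mem_erase hl')]
  rw [hsplit]
  exact (hasDerivAt_pow (k l) (x l)).const_mul _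

section Network

variable {s m : ℕ} {α β : Matrix (Fin s) (Fin m) ℕ} {κ : Fin m → ℝ} {x : Fin s → ℝ}

lemma jacF_apply (i l : Fin s) :
    jacF α β κ x i l = ∑ j, stoich α β i j * κ j *
      ((∏ l' ∈ univ.erase l, x l' ^ α l' j) * (α l j * x l ^ (α l j - 1))) :=
  (HasDerivAt.fun_sum fun j _ =>
    (hasDerivAt_prod_pow_update (fun l' => α l' j) x l).const_mul _).deriv

lemma rateFun_eq_mul_of_stoich_eq_mul {i k : Fin s} {r : ℝ}
    (h : ∀ j, stoich α β i j = r * stoich α β k j) :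
    rateFun α β κ x i = r * rateFun α β κ x k := by
  simp only [rateFun, h, mul_sum, mul_assoc]

lemma jacF_eq_mul_of_stoich_eq_mul {i k : Fin s} {r : ℝ}
    (h : ∀ j, stoich α β i j = r * stoich α β k j) (l : Fin s) :
    jacF α β κ x i l = r * jacF α β κ x k l := by
  simp only [jacF, rateFun_eq_mul_of_stoich_eq_mul h, deriv_const_mul_field']

lemma stoich_mul_deriv_monomial_nonpos {l : Fin s} {j : Fin m} (hβ : β l j ≤ 1)
    (hκ : 0 ≤ κ j) (hx : ∀ i, 0 ≤ x i) :
    stoich α β l j * κ j * ((∏ l' ∈ univ.erase l, x l' ^ α l' j) * (α l j * x l ^ (α l j - 1)))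
      ≤ 0 := by
  rcases Nat.eq_zero_or_pos (α l j) with h | h
  · simp [h]
  · have hα : (1 : ℝ) ≤ α l j := by exact_mod_cast h
    have hβ' : (β l j : ℝ) ≤ 1 := by exact_mod_cast hβ
    have hstoich : stoich α β l j ≤ 0 := by simp only [stoich]; linarith
    have hprod : 0 ≤ ∏ l' ∈ univ.erase l, x l' ^ α l' j :=
      prod_nonneg fun l' _ => pow_nonneg (hx l') _
    exact mul_nonpos_of_nonpos_of_nonneg (mul_nonpos_of_nonpos_of_nonneg hstoich hκ)
      (mul_nonneg hprod (by have := hx l; positivity))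

lemma jacF_self_nonpos {l : Fin s} (hβ : ∀ j, β l j ≤ 1) (hκ : ∀ j, 0 ≤ κ j)
    (hx : ∀ i, 0 ≤ x i) : jacF α β κ x l l ≤ 0 := by
  rw [jacF_apply]
  exact sum_nonpos fun j _ => stoich_mul_deriv_monomial_nonpos (hβ j) (hκ j) hx

lemma jacF_self_neg {l : Fin s} (hβ : ∀ j, β l j ≤ 1) (hκ : ∀ j, 0 < κ j) (hx : ∀ i, 0 < x i)
    (hneg : ∃ j, stoich α β l j < 0) : jacF α β κ x l l < 0 := by
  obtain ⟨j, hj⟩ := hneg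
  have hα : (0 : ℝ) < α l j := by
    have hstoich : stoich α β l j = β l j - α l j := rfl
    linarith [Nat.cast_nonneg (α := ℝ) (β l j)]
  rw [jacF_apply]
  refine sum_neg' (fun j _ => stoich_mul_deriv_monomial_nonpos (hβ j) (hκ j).le fun i => (hx i).le)
    ⟨j, mem_univ _, mul_neg_of_neg_of_pos (mul_neg_of_neg_of_pos hj (hκ j)) ?_⟩
  exact mul_pos (prod_pos fun l' _ => pow_pos (hx l') _) (mul_pos hα (pow_pos (hx l) _))

end Network

theorem stmt5_general {n m : ℕ} (α β : Matrix (Fin (n + 1)) (Fin m) ℕ)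
    (h01 : ∀ i j, α i j ≤ 1 ∧ β i j ≤ 1)
    (hrank : (stoich α β).rank = 1)
    (a : Fin n → ℝ)
    (ha : ∀ (i : Fin n) (j : Fin m),
      stoich α β i.castSucc j = a i * stoich α β (Fin.last n) j)
    (hsign : ∀ i : Fin (n + 1), (∃ j, stoich α β i j ≠ 0) →
      (∃ j, 0 < stoich α β i j) ∧ (∃ j, stoich α β i j < 0))
    (κ : Fin m → ℝ) (hκ : ∀ j, 0 < κ j)
    (x : Fin (n + 1) → ℝ) (hx : ∀ i, 0 < x i) :
    Matrix.det (Matrix.of (fun i l : Fin (n + 1) =>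
      if h : i = Fin.last n then jacF α β κ x (Fin.last n) l
      else (if l = i then (1 : ℝ) else 0) -
        a (i.castPred h) * (if l = Fin.last n then 1 else 0))) < 0 := by
  have hdiag : ∀ i : Fin n, jacF α β κ x i.castSucc i.castSucc
      = a i * jacF α β κ x (Fin.last n) i.castSucc :=
    fun i => jacF_eq_mul_of_stoich_eq_mul (ha i) _
  have htrace : jacF α β κ x (Fin.last n) (Fin.last n)
      + ∑ i : Fin n, a i * jacF α β κ x (Fin.last n) i.castSucc = (jacF α β κ x).trace := by
    rw [trace, Fin.sum_univ_castSucc, add_comm]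
    simp only [diag_apply, hdiag]
  have hlast : ∃ j, stoich α β (Fin.last n) j ≠ 0 :=
    exists_last_ne_zero_of_rows_eq_mul_last (fun h => by simp [h] at hrank) ha
  rw [det_rows_single_sub_mul_single_last, htrace]
  exact sum_neg' (fun l _ => jacF_self_nonpos (fun j => (h01 l j).2) (fun j => (hκ j).le)
    fun i => (hx i).le) ⟨Fin.last n, mem_univ _,
      jacF_self_neg (fun j => (h01 _ j).2) hκ hx (hsign _ hlast).2⟩

/-- For a rank-one zero-one network all of whose nonzero rows change signs, at every positive
steady state the determinant of the matrix whose first `s−1` rows are `e_i − a_i e_s` and whose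
last row is the gradient of `f_s` is strictly negative. -/
theorem stmt5 {n m : ℕ} (α β : Matrix (Fin (n + 1)) (Fin m) ℕ)
    (hnet : ∀ j, ∃ i, α i j ≠ β i j)
    (h01 : ∀ i j, α i j ≤ 1 ∧ β i j ≤ 1)
    (hrank : (stoich α β).rank = 1)
    (a : Fin n → ℝ)
    (ha : ∀ (i : Fin n) (j : Fin m),
      stoich α β i.castSucc j = a i * stoich α β (Fin.last n) j)
    (hsign : ∀ i : Fin (n + 1), (∃ j, stoich α β i j ≠ 0) →
      (∃ j, 0 < stoich α β i j) ∧ (∃ j, stoich α β i j < 0))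
    (κ : Fin m → ℝ) (hκ : ∀ j, 0 < κ j)
    (x : Fin (n + 1) → ℝ) (hx : ∀ i, 0 < x i)
    (hss : ∀ i, rateFun α β κ x i = 0) :
    Matrix.det (Matrix.of (fun i l : Fin (n + 1) =>
      if h : i = Fin.last n then jacF α β κ x (Fin.last n) l
      else (if l = i then (1 : ℝ) else 0) -
        a (i.castPred h) * (if l = Fin.last n then 1 else 0))) < 0 :=
  stmt5_general α β h01 hrank a ha hsign κ hκ x hx
end
end

section
/- Let (α,β) be a zero-one reaction network with s species whose stoichiometric matrix N has rank r ∈ {1,2}, and let W be a conservation-law matrix with pivot column indices i_1 < … < i_{s−r}. Then for every κ ∈ ℝ^m_{>0} and every positive steady state x ∈ ℝ^s_{>0} at which det Jac_h(κ,x) ≠ 0, the sign of det Jac_h(κ,x) equals (−1)^r. -/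
noncomputable section

/-- The Jacobian of the steady-state system augmented by conservation laws: the row with index
`piv k` is the `k`-th row of the conservation-law matrix `W`, and the remaining rows are the
corresponding rows of `Jac_f`. -/
def jacH {s m d : ℕ} (α β : Matrix (Fin s) (Fin m) ℕ)
    (W : Matrix (Fin d) (Fin s) ℝ) (piv : Fin d → Fin s)
    (κ : Fin m → ℝ) (x : Fin s → ℝ) : Matrix (Fin s) (Fin s) ℝ :=
  fun i l => if h : ∃ k, piv k = i then W (Classical.choose h) l else jacF α β κ x i l

/-!
Choose the conservation-law pivots `piv k` and enumerate the remaining `r` species. Since the rows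
of `W` kill the columns of `N`, and hence of `Jac_f`, the columns of `Jac_f` are determined by
their non-pivot entries: `Jac_f = K P` with `P` the non-pivot rows of `Jac_f` and `K` the
`s × r` kernel basis read off from the reduced echelon form. A Schur complement gives
`det Jac_h = det (P K)`, and `P K` is `r × r` with the same nonzero spectrum as `Jac_f`, so
`det Jac_h = tr Jac_f` for `r = 1` and `2 det Jac_h = (tr Jac_f)² - tr (Jac_f²)`, the sum of the
principal `2 × 2` minors, for `r = 2`.

Write `Jac_f = L · diag(x)⁻¹`, where `L_{il} = Σ_j N_{ij} c_j α_{lj}` with the reaction rates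
`c_j ≥ 0`. For a zero-one network at steady state, `|L_{ll'}| ≤ -L_{ll}` for all `l, l'`
(the upper bound uses `Σ_j N_{lj} c_j = 0`). Hence all diagonal entries of `L` are `≤ 0` and all
principal `2 × 2` minors of `L`, and so of `Jac_f`, are `≥ 0`, which gives the sign `(-1)^r`.
-/

open Matrix

namespace Matrix

section Ring

variable {R : Type*} [CommRing R] {ι κ δ : Type*} [DecidableEq δ]

theorem injective_of_submatrix_eq_one [Nontrivial R] {W : Matrix δ ι R} {f : δ → ι}
    (h : W.submatrix id f = 1) : f.Injective := by
  intro k k' hkk'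
  by_contra hne
  have h₁ := congrFun (congrFun h k) k
  have h₂ := congrFun (congrFun h k) k'
  rw [submatrix_apply, id, one_apply_eq] at h₁
  rw [submatrix_apply, id, one_apply_ne hne, ← hkk', h₁] at h₂
  exact one_ne_zero h₂

theorem submatrix_eq_one_of_apply {W : Matrix δ ι R} {f : δ → ι} (hlead : ∀ k, W k (f k) = 1)
    (hred : ∀ k k', k' ≠ k → W k' (f k) = 0) : W.submatrix id f = 1 := by
  ext k k'
  rcases eq_or_ne k k' with rfl | hne
  · simp [hlead]
  · simp [one_apply_ne hne, hred k' k hne]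

variable [Fintype κ] [DecidableEq κ] [Fintype δ]

theorem det_fromRows_fromCols_one (P : Matrix κ (κ ⊕ δ) R) (C : Matrix δ κ R) :
    (fromRows P (fromCols C 1)).det = (P * fromRows (1 : Matrix κ κ R) (-C)).det := by
  rw [← fromCols_toCols P, fromRows_fromCols_eq_fromBlocks, det_fromBlocks_one₂₂,
    fromCols_mul_fromRows, Matrix.mul_one, Matrix.mul_neg, sub_eq_add_neg]

theorem fromRows_one_neg_mul_toRows₁ {A : Matrix (κ ⊕ δ) (κ ⊕ δ) R} {C : Matrix δ κ R}
    (h : fromCols C (1 : Matrix δ δ R) * A = 0) :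
    fromRows (1 : Matrix κ κ R) (-C) * A.toRows₁ = A := by
  rw [← fromRows_toRows A, fromCols_mul_fromRows, Matrix.one_mul] at h
  rw [fromRows_mul, Matrix.one_mul, Matrix.neg_mul, ← eq_neg_of_add_eq_zero_right h,
    fromRows_toRows]

theorem exists_mul_eq_and_det_eq_det_mul [Fintype ι] [DecidableEq ι] (e : κ ⊕ δ ≃ ι)
    {M H : Matrix ι ι R} {W : Matrix δ ι R} (hW : W.submatrix id (e ∘ Sum.inr) = 1)
    (hWM : W * M = 0) (hH₁ : ∀ t, H (e (Sum.inl t)) = M (e (Sum.inl t)))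
    (hH₂ : ∀ k, H (e (Sum.inr k)) = W k) :
    ∃ (P : Matrix κ ι R) (K : Matrix ι κ R), K * P = M ∧ H.det = (P * K).det := by
  set C := (W.submatrix id e).toCols₁
  have hWe : W.submatrix id e = fromCols C 1 := by
    ext k (t | k')
    · rfl
    · simpa using congrFun (congrFun hW k) k'
  have hHe : H.submatrix e e = fromRows (M.submatrix e e).toRows₁ (fromCols C 1) := by
    rw [← hWe]
    ext (t | k) j <;> simp [hH₁, hH₂]
  have hKP : fromRows 1 (-C) * (M.submatrix e e).toRows₁ = M.submatrix e e := by
    refine fromRows_one_neg_mul_toRows₁ ?_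
    rw [← hWe, submatrix_mul_equiv, hWM]
    rfl
  refine ⟨(M.submatrix e e).toRows₁.submatrix id e.symm, (fromRows 1 (-C)).submatrix e.symm id,
    ?_, ?_⟩
  · rw [← submatrix_mul _ _ _ _ _ Function.bijective_id, hKP, submatrix_submatrix]
    simp
  · rw [submatrix_mul_equiv, submatrix_id_id, ← det_submatrix_equiv_self e, hHe,
      det_fromRows_fromCols_one]

variable [Fintype ι]

theorem det_mul_eq_trace_mul_comm_of_fin_one (P : Matrix (Fin 1) ι R) (K : Matrix ι (Fin 1) R) :
    (P * K).det = (K * P).trace := by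
  rw [det_fin_one, ← trace_mul_comm, trace_fin_one]

theorem two_mul_det_eq_trace_sq_sub_of_fin_two (A : Matrix (Fin 2) (Fin 2) R) :
    2 * A.det = A.trace ^ 2 - (A * A).trace := by
  simp only [det_fin_two, trace_fin_two, mul_apply, Fin.sum_univ_two]
  ring

theorem two_mul_det_mul_eq_of_fin_two (P : Matrix (Fin 2) ι R) (K : Matrix ι (Fin 2) R) :
    2 * (P * K).det = (K * P).trace ^ 2 - (K * P * (K * P)).trace := by
  rw [two_mul_det_eq_trace_sq_sub_of_fin_two, trace_mul_comm P, Matrix.mul_assoc,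
    trace_mul_comm P]
  simp only [Matrix.mul_assoc]

theorem trace_sq_sub_trace_mul_self (A : Matrix ι ι R) :
    A.trace ^ 2 - (A * A).trace = ∑ l, ∑ l', (A l l * A l' l' - A l l' * A l' l) := by
  simp only [trace, diag, mul_apply, sq, Finset.sum_mul_sum, ← Finset.sum_sub_distrib]

end Ring

section Order

variable {R : Type*} [CommRing R] [LinearOrder R] [IsStrictOrderedRing R] {ι : Type*}
  {A : Matrix ι ι R}

theorem mul_sub_mul_nonneg_of_abs_le (hA : ∀ l l', |A l l'| ≤ -A l l) (l l' : ι) :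
    0 ≤ A l l * A l' l' - A l l' * A l' l := by
  have hprod : |A l l'| * |A l' l| ≤ -A l l * -A l' l' :=
    mul_le_mul (hA l l') (hA l' l) (abs_nonneg _) ((abs_nonneg _).trans (hA l l))
  nlinarith [le_abs_self (A l l' * A l' l), abs_mul (A l l') (A l' l)]

variable [Fintype ι] [DecidableEq ι]

theorem trace_mul_diagonal_nonpos (hA : ∀ l, A l l ≤ 0) {d : ι → R} (hd : ∀ l, 0 ≤ d l) :
    (A * diagonal d).trace ≤ 0 :=
  Finset.sum_nonpos fun l _ => by
    simpa [mul_diagonal] using mul_nonpos_of_nonpos_of_nonneg (hA l) (hd l)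

theorem trace_sq_sub_trace_mul_self_nonneg (hA : ∀ l l', |A l l'| ≤ -A l l) {d : ι → R}
    (hd : ∀ l, 0 ≤ d l) :
    0 ≤ (A * diagonal d).trace ^ 2 - (A * diagonal d * (A * diagonal d)).trace := by
  rw [trace_sq_sub_trace_mul_self]
  refine Finset.sum_nonneg fun l _ => Finset.sum_nonneg fun l' _ => ?_
  have hscale : (A * diagonal d) l l * (A * diagonal d) l' l'
      - (A * diagonal d) l l' * (A * diagonal d) l' l
      = d l * d l' * (A l l * A l' l' - A l l' * A l' l) := by
    simp only [mul_diagonal]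
    ring
  rw [hscale]
  exact mul_nonneg (mul_nonneg (hd l) (hd l')) (mul_sub_mul_nonneg_of_abs_le hA l l')

end Order

end Matrix

theorem Function.Injective.exists_sumEquiv {α β γ : Type*} [Fintype α] [Fintype β] [Fintype γ]
    {f : β → α} (hf : f.Injective) (h : Fintype.card γ + Fintype.card β = Fintype.card α) :
    ∃ e : γ ⊕ β ≃ α, ∀ b, e (Sum.inr b) = f b := by
  classical
  have hcard : Fintype.card {a // a ∉ Set.range f} = Fintype.card γ := by
    rw [Fintype.card_subtype_compl, Set.card_range_of_injective hf]
    omega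
  exact ⟨(Equiv.sumComm γ β).trans ((Equiv.sumCongr (Equiv.ofInjective f hf)
    (Fintype.equivOfCardEq hcard).symm).trans (Equiv.Set.sumCompl (Set.range f))),
    fun _ => rfl⟩

theorem hasDerivAt_prod_pow_update_s6 {s : ℕ} (a : Fin s → ℕ) (x : Fin s → ℝ) (l : Fin s)
    (hxl : x l ≠ 0) :
    HasDerivAt (fun t => ∏ l', Function.update x l t l' ^ a l')
      (a l * (∏ l', x l' ^ a l') * (x l)⁻¹) (x l) := by
  have hupd : ∀ t, ∏ l', Function.update x l t l' ^ a l'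
      = t ^ a l * ∏ l' ∈ Finset.univ \ {l}, x l' ^ a l' := fun t => by
    rw [← Finset.prod_update_of_mem (Finset.mem_univ l)]
    refine Finset.prod_congr rfl fun l' _ => ?_
    rcases eq_or_ne l' l with rfl | h <;> simp [*]
  have hval := hupd (x l)
  rw [Function.update_eq_self] at hval
  rw [funext hupd, hval]
  refine ((hasDerivAt_pow (a l) (x l)).mul_const _).congr_deriv ?_
  rcases Nat.eq_zero_or_pos (a l) with h | h
  · simp [h]
  · rw [← Nat.sub_add_cancel h, pow_succ]
    field_simp
    push_cast
    ring

section Network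

variable {s m : ℕ} (α β : Matrix (Fin s) (Fin m) ℕ) (κ : Fin m → ℝ) (x : Fin s → ℝ)

def massActionRate (j : Fin m) : ℝ := κ j * ∏ l, x l ^ α l j

/-- The Jacobian of the rate function with respect to `log x`, i.e. `Jac_f(κ,x) · diag(x)`. -/
def logJacF : Matrix (Fin s) (Fin s) ℝ :=
  stoich α β * of fun j l => massActionRate α κ x j * α l j

theorem rateFun_eq_mulVec : rateFun α β κ x = stoich α β *ᵥ massActionRate α κ x := by
  ext i
  simp only [rateFun, mulVec, dotProduct, massActionRate, mul_assoc]

theorem jacF_eq_logJacF_mul_diagonal (hx : ∀ l, x l ≠ 0) :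
    jacF α β κ x = logJacF α β κ x * diagonal fun l => (x l)⁻¹ := by
  ext i l
  have hderiv : HasDerivAt (fun t => rateFun α β κ (Function.update x l t) i)
      (∑ j, stoich α β i j * κ j * (α l j * (∏ l', x l' ^ α l' j) * (x l)⁻¹)) (x l) :=
    HasDerivAt.fun_sum fun j _ => (hasDerivAt_prod_pow_update_s6 _ x l (hx l)).const_mul _
  rw [jacF, hderiv.deriv, mul_diagonal, logJacF, mul_apply, Finset.sum_mul]
  refine Finset.sum_congr rfl fun j _ => ?_
  simp only [of_apply, massActionRate]
  ring

theorem stoich_mul_le_of_zero_one {a b a' : ℕ} (ha : a ≤ 1) (hb : b ≤ 1) (ha' : a' ≤ 1) :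
    ((b : ℝ) - a) * a ≤ ((b : ℝ) - a) * a' ∧ ((b : ℝ) - a) * (a' + a) ≤ (b : ℝ) - a := by
  interval_cases a <;> interval_cases b <;> interval_cases a' <;> norm_num

theorem abs_logJacF_le (h01 : ∀ i j, α i j ≤ 1 ∧ β i j ≤ 1) (hκ : ∀ j, 0 ≤ κ j)
    (hx : ∀ l, 0 ≤ x l) (hss : ∀ i, rateFun α β κ x i = 0) (l l' : Fin s) :
    |logJacF α β κ x l l'| ≤ -logJacF α β κ x l l := by
  have hrate : ∀ j, 0 ≤ massActionRate α κ x j := fun j =>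
    mul_nonneg (hκ j) (Finset.prod_nonneg fun l _ => pow_nonneg (hx l) _)
  have hflux : ∑ j, stoich α β l j * massActionRate α κ x j = 0 := by
    rw [← hss l, rateFun_eq_mulVec]
    rfl
  have hineq := fun j => stoich_mul_le_of_zero_one (h01 l j).1 (h01 l j).2 (h01 l' j).1
  simp only [logJacF, mul_apply, of_apply, stoich] at hflux hineq ⊢
  rw [abs_le, neg_neg]
  constructor
  · refine Finset.sum_le_sum fun j _ => ?_
    nlinarith [mul_le_mul_of_nonneg_left (hineq j).1 (hrate j)]
  · rw [le_neg_iff_add_nonpos_right, ← Finset.sum_add_distrib, ← hflux]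
    refine Finset.sum_le_sum fun j _ => ?_
    nlinarith [mul_le_mul_of_nonneg_left (hineq j).2 (hrate j)]

variable {d : ℕ} (W : Matrix (Fin d) (Fin s) ℝ) {piv : Fin d → Fin s}

theorem jacH_apply_of_injective (hpiv : piv.Injective) (k : Fin d) :
    jacH α β W piv κ x (piv k) = W k := by
  have hex : ∃ k', piv k' = piv k := ⟨k, rfl⟩
  ext l
  simp only [jacH, dif_pos hex, hpiv (Classical.choose_spec hex)]

theorem jacH_apply_of_forall_ne {i : Fin s} (hi : ∀ k, piv k ≠ i) :
    jacH α β W piv κ x i = jacF α β κ x i := by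
  ext l
  simp only [jacH, dif_neg (not_exists.mpr hi)]

theorem exists_jacF_eq_mul_and_det_jacH_eq {r : ℕ} (hrd : r + d = s)
    (hWN : W * stoich α β = 0) (hW : W.submatrix id piv = 1) (hx : ∀ l, x l ≠ 0) :
    ∃ (P : Matrix (Fin r) (Fin s) ℝ) (K : Matrix (Fin s) (Fin r) ℝ),
      K * P = jacF α β κ x ∧ (jacH α β W piv κ x).det = (P * K).det := by
  have hpiv := injective_of_submatrix_eq_one hW
  obtain ⟨e, he⟩ := hpiv.exists_sumEquiv (γ := Fin r) (by simpa using hrd)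
  have hepiv : e ∘ Sum.inr = piv := funext he
  refine exists_mul_eq_and_det_eq_det_mul e (hepiv ▸ hW) ?_ (fun t => ?_) (fun k => ?_)
  · rw [jacF_eq_logJacF_mul_diagonal α β κ x hx, logJacF, ← Matrix.mul_assoc,
      ← Matrix.mul_assoc, hWN, Matrix.zero_mul, Matrix.zero_mul]
  · refine jacH_apply_of_forall_ne α β κ x W fun k hk => ?_
    rw [← he] at hk
    exact Sum.inr_ne_inl (e.injective hk)
  · rw [he, jacH_apply_of_injective α β κ x W hpiv]

end Network

theorem stmt6_general {s m : ℕ} (α β : Matrix (Fin s) (Fin m) ℕ)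
    (h01 : ∀ i j, α i j ≤ 1 ∧ β i j ≤ 1)
    (hrank : (stoich α β).rank = 1 ∨ (stoich α β).rank = 2)
    (W : Matrix (Fin (s - (stoich α β).rank)) (Fin s) ℝ)
    (hWN : W * stoich α β = 0)
    (piv : Fin (s - (stoich α β).rank) → Fin s)
    (hlead : ∀ k, W k (piv k) = 1)
    (hred : ∀ k k', k' ≠ k → W k' (piv k) = 0)
    (κ : Fin m → ℝ) (hκ : ∀ j, 0 < κ j)
    (x : Fin s → ℝ) (hx : ∀ i, 0 < x i)
    (hss : ∀ i, rateFun α β κ x i = 0)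
    (hnd : (jacH α β W piv κ x).det ≠ 0) :
    Real.sign ((jacH α β W piv κ x).det) = (-1 : ℝ) ^ (stoich α β).rank := by
  have hrs : (stoich α β).rank ≤ s := by simpa using (stoich α β).rank_le_card_height
  have hW := submatrix_eq_one_of_apply hlead hred
  have hdom := abs_logJacF_le α β κ x h01 (fun j => (hκ j).le) (fun l => (hx l).le) hss
  have hJ := jacF_eq_logJacF_mul_diagonal α β κ x fun l => (hx l).ne'
  have hxinv : ∀ l, 0 ≤ (x l)⁻¹ := fun l => inv_nonneg.mpr (hx l).le
  generalize (stoich α β).rank = r at *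
  obtain ⟨P, K, hKP, hdet⟩ :=
    exists_jacF_eq_mul_and_det_jacH_eq α β κ x W (r := r) (by omega) hWN hW fun l => (hx l).ne'
  rcases hrank with rfl | rfl
  · refine (Real.sign_of_neg (lt_of_le_of_ne ?_ hnd)).trans (by norm_num)
    rw [hdet, det_mul_eq_trace_mul_comm_of_fin_one, hKP, hJ]
    exact trace_mul_diagonal_nonpos (fun l => neg_nonneg.mp ((abs_nonneg _).trans (hdom l l)))
      hxinv
  · refine (Real.sign_of_pos (lt_of_le_of_ne ?_ hnd.symm)).trans (by norm_num)
    have h2 := two_mul_det_mul_eq_of_fin_two P K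
    rw [hKP, hJ, ← hdet] at h2
    linarith [trace_sq_sub_trace_mul_self_nonneg hdom hxinv]

/-- For a zero-one network of rank `r ∈ {1,2}`, at every positive steady state where
`det Jac_h ≠ 0`, the sign of `det Jac_h` is `(−1)^r`. -/
theorem stmt6 {s m : ℕ} (α β : Matrix (Fin s) (Fin m) ℕ)
    (hnet : ∀ j, ∃ i, α i j ≠ β i j)
    (h01 : ∀ i j, α i j ≤ 1 ∧ β i j ≤ 1)
    (hrank : (stoich α β).rank = 1 ∨ (stoich α β).rank = 2)
    (W : Matrix (Fin (s - (stoich α β).rank)) (Fin s) ℝ)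
    (hWrank : W.rank = s - (stoich α β).rank)
    (hWN : W * stoich α β = 0)
    (piv : Fin (s - (stoich α β).rank) → Fin s)
    (hpiv : StrictMono piv)
    (hlead : ∀ k, W k (piv k) = 1)
    (hech : ∀ (k) (l : Fin s), (l : ℕ) < (piv k : ℕ) → W k l = 0)
    (hred : ∀ k k', k' ≠ k → W k' (piv k) = 0)
    (κ : Fin m → ℝ) (hκ : ∀ j, 0 < κ j)
    (x : Fin s → ℝ) (hx : ∀ i, 0 < x i)
    (hss : ∀ i, rateFun α β κ x i = 0)
    (hnd : (jacH α β W piv κ x).det ≠ 0) :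
    Real.sign ((jacH α β W piv κ x).det) = (-1 : ℝ) ^ (stoich α β).rank :=
  stmt6_general α β h01 hrank W hWN piv hlead hred κ hκ x hx hss hnd
end
end

section
/- Let (α,β) be a zero-one reaction network with s species whose stoichiometric matrix N has rank r ∈ {1,2}, and let W be a conservation-law matrix. Then for every κ ∈ ℝ^m_{>0}, every nondegenerate positive steady state x ∈ ℝ^s_{>0} (i.e., with det Jac_h(κ,x) ≠ 0) is exponentially stable: every nonzero complex eigenvalue of Jac_f(κ,x) has negative real part. -/
noncomputable section

/- ======================= auxiliary lemmas ======================= -/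

open Matrix

lemma quadIneq (P T R G Q U S H : ℝ)
    (hPn : 0 ≤ P) (hTn : 0 ≤ T) (hRn : 0 ≤ R) (hGn : 0 ≤ G)
    (hQn : 0 ≤ Q) (hUn : 0 ≤ U) (hSn : 0 ≤ S) (hHn : 0 ≤ H)
    (hc1 : P + T = R + G) (hc2 : S + U = Q + H) :
    0 ≤ (-P - T) * (-S - U) - (R - T) * (Q - U) := by
  have h1 : T * U ≤ (R + G) * U := mul_le_mul_of_nonneg_right (by linarith) hUn
  have h2 : G * U ≤ G * (Q + H) := mul_le_mul_of_nonneg_left (by linarith) hGn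
  nlinarith [mul_nonneg hRn hHn, mul_nonneg hTn hQn, mul_nonneg hGn hQn, mul_nonneg hGn hHn,
    mul_nonneg hRn hUn]

lemma keyIneq {m : ℕ} (e a b n p : Fin m → ℝ)
    (he : ∀ j, 0 ≤ e j)
    (ha : ∀ j, a j = 0 ∨ a j = 1) (hb : ∀ j, b j = 0 ∨ b j = 1)
    (hn1 : ∀ j, a j = 1 → n j ≤ 0) (hn0 : ∀ j, a j = 0 → 0 ≤ n j)
    (hp1 : ∀ j, b j = 1 → p j ≤ 0) (hp0 : ∀ j, b j = 0 → 0 ≤ p j)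
    (hen : ∑ j, e j * n j = 0) (hep : ∑ j, e j * p j = 0) :
    0 ≤ (∑ j, e j * a j * n j) * (∑ j, e j * b j * p j)
      - (∑ j, e j * b j * n j) * (∑ j, e j * a j * p j) := by
  have hA : ∑ j, e j * a j * n j
      = -(∑ j, e j * (a j * (1 - b j)) * (-n j)) - ∑ j, e j * (a j * b j) * (-n j) := by
    rw [← Finset.sum_neg_distrib, ← Finset.sum_sub_distrib]
    exact Finset.sum_congr rfl fun j _ => by ring
  have hB : ∑ j, e j * b j * p j
      = -(∑ j, e j * ((1 - a j) * b j) * (-p j)) - ∑ j, e j * (a j * b j) * (-p j) := by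
    rw [← Finset.sum_neg_distrib, ← Finset.sum_sub_distrib]
    exact Finset.sum_congr rfl fun j _ => by ring
  have hC : ∑ j, e j * b j * n j
      = (∑ j, e j * ((1 - a j) * b j) * (n j)) - ∑ j, e j * (a j * b j) * (-n j) := by
    rw [← Finset.sum_sub_distrib]
    exact Finset.sum_congr rfl fun j _ => by ring
  have hD : ∑ j, e j * a j * p j
      = (∑ j, e j * (a j * (1 - b j)) * (p j)) - ∑ j, e j * (a j * b j) * (-p j) := by
    rw [← Finset.sum_sub_distrib]
    exact Finset.sum_congr rfl fun j _ => by ring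
  rw [hA, hB, hC, hD]
  have hc1 : (∑ j, e j * (a j * (1 - b j)) * (-n j)) + (∑ j, e j * (a j * b j) * (-n j))
      = (∑ j, e j * ((1 - a j) * b j) * (n j)) + ∑ j, e j * ((1 - a j) * (1 - b j)) * (n j) := by
    have : (∑ j, e j * (a j * (1 - b j)) * (-n j)) + (∑ j, e j * (a j * b j) * (-n j))
        - ((∑ j, e j * ((1 - a j) * b j) * (n j))
          + ∑ j, e j * ((1 - a j) * (1 - b j)) * (n j)) = -(∑ j, e j * n j) := by
      rw [← Finset.sum_neg_distrib, ← Finset.sum_add_distrib, ← Finset.sum_add_distrib,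
        ← Finset.sum_sub_distrib]
      exact Finset.sum_congr rfl fun j _ => by ring
    rw [hen] at this
    linarith
  have hc2 : (∑ j, e j * ((1 - a j) * b j) * (-p j)) + (∑ j, e j * (a j * b j) * (-p j))
      = (∑ j, e j * (a j * (1 - b j)) * (p j)) + ∑ j, e j * ((1 - a j) * (1 - b j)) * (p j) := by
    have : (∑ j, e j * ((1 - a j) * b j) * (-p j)) + (∑ j, e j * (a j * b j) * (-p j))
        - ((∑ j, e j * (a j * (1 - b j)) * (p j))
          + ∑ j, e j * ((1 - a j) * (1 - b j)) * (p j)) = -(∑ j, e j * p j) := by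
      rw [← Finset.sum_neg_distrib, ← Finset.sum_add_distrib, ← Finset.sum_add_distrib,
        ← Finset.sum_sub_distrib]
      exact Finset.sum_congr rfl fun j _ => by ring
    rw [hep] at this
    linarith
  refine quadIneq _ _ _ _ _ _ _ _ ?_ ?_ ?_ ?_ ?_ ?_ ?_ ?_ hc1 hc2 <;>
    refine Finset.sum_nonneg fun j _ => ?_ <;>
    rcases ha j with h | h <;> rcases hb j with h' | h' <;>
    simp [h, h'] <;>
    first
      | exact mul_nonneg (he j) (hn0 j h)
      | exact mul_nonneg (he j) (hp0 j h')
      | exact mul_nonpos_iff.mpr (Or.inl ⟨he j, hn1 j h⟩)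
      | exact mul_nonpos_iff.mpr (Or.inl ⟨he j, hp1 j h'⟩)

lemma exists_factorization {s m r : ℕ} (A : Matrix (Fin s) (Fin m) ℝ) (h : A.rank = r) :
    ∃ (C : Matrix (Fin s) (Fin r) ℝ) (E : Matrix (Fin r) (Fin m) ℝ), A = C * E := by
  have hfr : Module.finrank ℝ (LinearMap.range A.mulVecLin) = r := h
  let b : Module.Basis (Fin r) ℝ (LinearMap.range A.mulVecLin) :=
    Module.finBasisOfFinrankEq ℝ _ hfr
  have hcol : ∀ j, (fun i => A i j) ∈ LinearMap.range A.mulVecLin := by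
    intro j
    refine ⟨Pi.single j 1, ?_⟩
    ext i
    simp [Matrix.mulVecLin_apply, Matrix.mulVec_single]
  refine ⟨fun i k => (b k : Fin s → ℝ) i, fun k j => b.repr ⟨_, hcol j⟩ k, ?_⟩
  ext i j
  have := b.sum_repr ⟨_, hcol j⟩
  have h2 := congrArg (fun (v : LinearMap.range A.mulVecLin) => (v : Fin s → ℝ) i) this
  simp only [Submodule.coe_sum, Submodule.coe_smul, Finset.sum_apply, Pi.smul_apply,
    smul_eq_mul] at h2
  show A i j = ∑ k, (b k : Fin s → ℝ) i * b.repr ⟨_, hcol j⟩ k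
  rw [← h2]
  exact Finset.sum_congr rfl fun k _ => by ring

lemma jacF_entry {s m : ℕ} (α β : Matrix (Fin s) (Fin m) ℕ)
    (h01 : ∀ i j, α i j ≤ 1 ∧ β i j ≤ 1)
    (κ : Fin m → ℝ) (x : Fin s → ℝ) (hx : ∀ i, 0 < x i) (i l : Fin s) :
    jacF α β κ x i l
      = ∑ j, stoich α β i j * (κ j * (∏ l', x l' ^ α l' j) * (α l j : ℝ) / x l) := by
  have hfun : ∀ t, rateFun α β κ (Function.update x l t) i
      = ∑ j, (stoich α β i j * κ j * ∏ l' ∈ Finset.univ.erase l, x l' ^ α l' j)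
          * t ^ α l j := by
    intro t
    unfold rateFun
    refine Finset.sum_congr rfl fun j _ => ?_
    rw [← Finset.mul_prod_erase Finset.univ _ (Finset.mem_univ l)]
    rw [Function.update_self]
    have hprod : (∏ l' ∈ Finset.univ.erase l, (Function.update x l t l') ^ α l' j)
        = ∏ l' ∈ Finset.univ.erase l, x l' ^ α l' j :=
      Finset.prod_congr rfl fun l' hl' => by
        rw [Function.update_of_ne (Finset.ne_of_mem_erase hl')]
    rw [hprod]
    ring
  unfold jacF
  rw [funext hfun]
  rw [deriv_fun_sum (fun j _ => ((differentiableAt_pow _).const_mul _))]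
  refine Finset.sum_congr rfl fun j _ => ?_
  rw [deriv_const_mul _ (differentiableAt_pow _), deriv_pow_field]
  have hb := (h01 l j).1
  interval_cases h : α l j
  · simp
  · have hxl : x l ≠ 0 := (hx l).ne'
    have hv : (∏ l', x l' ^ α l' j)
        = x l * ∏ l' ∈ Finset.univ.erase l, x l' ^ α l' j := by
      rw [← Finset.mul_prod_erase Finset.univ _ (Finset.mem_univ l), h, pow_one]
    rw [hv]
    field_simp
    ring

/- ======================= main theorem ======================= -/

set_option maxHeartbeats 1000000 in
/-- For a zero-one network of rank `r ∈ {1,2}`, every nondegenerate positive steady state is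
exponentially stable: every nonzero complex eigenvalue of `Jac_f` has negative real part. -/
theorem stmt7 {s m : ℕ} (α β : Matrix (Fin s) (Fin m) ℕ)
    (hnet : ∀ j, ∃ i, α i j ≠ β i j)
    (h01 : ∀ i j, α i j ≤ 1 ∧ β i j ≤ 1)
    (hrank : (stoich α β).rank = 1 ∨ (stoich α β).rank = 2)
    (W : Matrix (Fin (s - (stoich α β).rank)) (Fin s) ℝ)
    (hWrank : W.rank = s - (stoich α β).rank)
    (hWN : W * stoich α β = 0)
    (piv : Fin (s - (stoich α β).rank) → Fin s)
    (hpiv : StrictMono piv)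
    (hlead : ∀ k, W k (piv k) = 1)
    (hech : ∀ (k) (l : Fin s), (l : ℕ) < (piv k : ℕ) → W k l = 0)
    (hred : ∀ k k', k' ≠ k → W k' (piv k) = 0)
    (κ : Fin m → ℝ) (hκ : ∀ j, 0 < κ j)
    (x : Fin s → ℝ) (hx : ∀ i, 0 < x i)
    (hss : ∀ i, rateFun α β κ x i = 0)
    (hnd : (jacH α β W piv κ x).det ≠ 0) :
    ∀ μ ∈ spectrum ℂ ((jacF α β κ x).map Complex.ofReal), μ ≠ 0 → μ.re < 0 := by
  classical
  intro μ hμ hμ0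
  -- positivity of monomials
  have hv : ∀ j, (0:ℝ) < ∏ l, x l ^ α l j :=
    fun j => Finset.prod_pos fun l _ => pow_pos (hx l) _
  have hw : ∀ j, (0:ℝ) < κ j * ∏ l', x l' ^ α l' j := fun j => mul_pos (hκ j) (hv j)
  -- zero-one sign facts
  have hα01 : ∀ (i : Fin s) (j : Fin m), ((α i j : ℝ) = 0 ∨ (α i j : ℝ) = 1) := by
    intro i j
    have hb := (h01 i j).1
    interval_cases h : α i j
    · left; simp
    · right; simp
  have hsgn1 : ∀ (i : Fin s) (j : Fin m), (α i j : ℝ) = 1 → stoich α β i j ≤ 0 := by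
    intro i j h
    have hb : (β i j : ℝ) ≤ 1 := by exact_mod_cast (h01 i j).2
    unfold stoich
    rw [h]
    linarith
  have hsgn0 : ∀ (i : Fin s) (j : Fin m), (α i j : ℝ) = 0 → 0 ≤ stoich α β i j := by
    intro i j h
    unfold stoich
    rw [h]
    simp
  -- the matrix S with J i l = S i l / x l
  set S : Matrix (Fin s) (Fin s) ℝ :=
    fun i l => ∑ j, (κ j * ∏ l', x l' ^ α l' j) * (α l j : ℝ) * stoich α β i j with hSdef
  have hJS : ∀ i l, jacF α β κ x i l = S i l / x l := by
    intro i l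
    rw [jacF_entry α β h01 κ x hx i l]
    simp only [hSdef]
    rw [Finset.sum_div]
    exact Finset.sum_congr rfl fun j _ => by ring
  -- steady state
  have hssw : ∀ i, ∑ j, (κ j * ∏ l', x l' ^ α l' j) * stoich α β i j = 0 := by
    intro i
    rw [← hss i]
    unfold rateFun
    exact Finset.sum_congr rfl fun j _ => by ring
  -- principal 2x2 minors of S are nonnegative
  have hminor : ∀ i i', 0 ≤ S i i * S i' i' - S i i' * S i' i := by
    intro i i'
    simp only [hSdef]
    exact keyIneq (fun j => κ j * ∏ l', x l' ^ α l' j)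
      (fun j => (α i j : ℝ)) (fun j => (α i' j : ℝ))
      (fun j => stoich α β i j) (fun j => stoich α β i' j)
      (fun j => (hw j).le) (fun j => hα01 i j) (fun j => hα01 i' j)
      (hsgn1 i) (hsgn0 i) (hsgn1 i') (hsgn0 i')
      (hssw i) (hssw i')
  -- diagonal of S is nonpositive
  have hdiagterm : ∀ i, ∀ j ∈ Finset.univ,
      (κ j * ∏ l', x l' ^ α l' j) * (α i j : ℝ) * stoich α β i j ≤ 0 := by
    intro i j _
    rcases hα01 i j with h | h
    · rw [h]; simp
    · rw [h, mul_one]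
      exact mul_nonpos_iff.mpr (Or.inl ⟨(hw j).le, hsgn1 i j h⟩)
  have hdiag : ∀ i, S i i ≤ 0 := by
    intro i
    simp only [hSdef]
    exact Finset.sum_nonpos (hdiagterm i)
  -- N ≠ 0
  have hNne : stoich α β ≠ 0 := by
    intro h
    rcases hrank with hr | hr <;> rw [h, Matrix.rank_zero] at hr <;> simp at hr
  -- negativity of trace
  have htr : (jacF α β κ x).trace = ∑ i, S i i / x i := by
    unfold Matrix.trace Matrix.diag
    exact Finset.sum_congr rfl fun i _ => hJS i i
  have hterm : ∀ i, S i i / x i ≤ 0 :=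
    fun i => div_nonpos_of_nonpos_of_nonneg (hdiag i) (hx i).le
  have htrneg : (jacF α β κ x).trace < 0 := by
    rw [htr]
    rcases lt_or_eq_of_le (Finset.sum_nonpos fun i _ => hterm i) with hlt | heq
    · exact hlt
    · exfalso
      have hz := (Finset.sum_eq_zero_iff_of_nonpos fun i _ => hterm i).mp heq
      have hSzero : ∀ i, S i i = 0 := by
        intro i
        rcases div_eq_zero_iff.mp (hz i (Finset.mem_univ i)) with h | h
        · exact h
        · exact absurd h (hx i).ne'
      have hterm0 : ∀ i j, (α i j : ℝ) * stoich α β i j = 0 := by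
        intro i j
        have hS := hSzero i
        simp only [hSdef] at hS
        have := (Finset.sum_eq_zero_iff_of_nonpos (hdiagterm i)).mp hS j (Finset.mem_univ j)
        have he := (hw j).ne'
        rcases mul_eq_zero.mp this with h' | h'
        · rcases mul_eq_zero.mp h' with h'' | h''
          · exact absurd h'' he
          · rw [h'', zero_mul]
        · rw [h', mul_zero]
      have hNnonneg : ∀ i j, 0 ≤ stoich α β i j := by
        intro i j
        rcases hα01 i j with h | h
        · exact hsgn0 i j h
        · have h2 := hterm0 i j
          rw [h, one_mul] at h2
          rw [h2]
      apply hNne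
      funext i j
      have hnn : ∀ j' ∈ Finset.univ,
          0 ≤ (κ j' * ∏ l', x l' ^ α l' j') * stoich α β i j' :=
        fun j' _ => mul_nonneg (hw j').le (hNnonneg i j')
      have := (Finset.sum_eq_zero_iff_of_nonneg hnn).mp (hssw i) j (Finset.mem_univ j)
      rcases mul_eq_zero.mp this with h | h
      · exact absurd h (hw j).ne'
      · simpa using h
  -- the P matrix and factorization J = N * P
  set P : Matrix (Fin m) (Fin s) ℝ :=
    fun j l => (κ j * ∏ l', x l' ^ α l' j) * (α l j : ℝ) / x l with hPdef
  have hJNP : jacF α β κ x = stoich α β * P := by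
    ext i l
    rw [Matrix.mul_apply, jacF_entry α β h01 κ x hx i l]
  -- extract eigenvector over ℂ
  have hdetμ : ((algebraMap ℂ (Matrix (Fin s) (Fin s) ℂ)) μ
      - (jacF α β κ x).map Complex.ofReal).det = 0 := by
    rw [spectrum.mem_iff] at hμ
    by_contra hne
    exact hμ ((Matrix.isUnit_iff_isUnit_det _).mpr (isUnit_iff_ne_zero.mpr hne))
  obtain ⟨vv, hvv, hveq⟩ := Matrix.exists_mulVec_eq_zero_iff.mpr hdetμ
  have hJv : (jacF α β κ x).map Complex.ofReal *ᵥ vv = μ • vv := by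
    rw [Algebra.algebraMap_eq_smul_one, Matrix.sub_mulVec, Matrix.smul_mulVec,
      Matrix.one_mulVec] at hveq
    exact (sub_eq_zero.mp hveq).symm
  have hofReal : (Complex.ofReal : ℝ → ℂ) = ⇑Complex.ofRealHom := rfl
  -- branch on the rank
  rcases hrank with hr | hr
  · -- ===== rank 1 =====
    obtain ⟨C, E, hCE⟩ := exists_factorization (stoich α β) hr
    have hJ : jacF α β κ x = C * (E * P) := by rw [hJNP, hCE, Matrix.mul_assoc]
    set G : Matrix (Fin 1) (Fin 1) ℝ := (E * P) * C with hGdef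
    have htrG : G.trace = (jacF α β κ x).trace := by
      rw [hJ, hGdef]
      exact (Matrix.trace_mul_comm C (E * P)).symm
    have hmap : (jacF α β κ x).map Complex.ofReal
        = (C.map Complex.ofReal) * ((E * P).map Complex.ofReal) := by
      rw [hJ, hofReal]
      exact Matrix.map_mul
    have hGmap : G.map Complex.ofReal
        = ((E * P).map Complex.ofReal) * (C.map Complex.ofReal) := by
      rw [hGdef, hofReal]
      exact Matrix.map_mul
    set z := ((E * P).map Complex.ofReal) *ᵥ vv with hzdef
    have hGz : (G.map Complex.ofReal) *ᵥ z = μ • z := by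
      rw [hGmap, hzdef, Matrix.mulVec_mulVec, Matrix.mul_assoc, ← Matrix.mulVec_mulVec,
        ← hmap, hJv, Matrix.mulVec_smul]
    have hzne : z ≠ 0 := by
      intro h0
      have h1 : (C.map Complex.ofReal) *ᵥ z = μ • vv := by
        rw [hzdef, Matrix.mulVec_mulVec, ← hmap, hJv]
      rw [h0, Matrix.mulVec_zero] at h1
      exact smul_ne_zero hμ0 hvv h1.symm
    have hdetGμ : ((algebraMap ℂ (Matrix (Fin 1) (Fin 1) ℂ)) μ - G.map Complex.ofReal).det = 0 := by
      apply Matrix.exists_mulVec_eq_zero_iff.mp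
      refine ⟨z, hzne, ?_⟩
      rw [Algebra.algebraMap_eq_smul_one, Matrix.sub_mulVec, Matrix.smul_mulVec,
        Matrix.one_mulVec, hGz, sub_self]
    rw [Matrix.det_fin_one] at hdetGμ
    have hentry : μ - ((G 0 0 : ℝ) : ℂ) = 0 := by
      simpa [Algebra.algebraMap_eq_smul_one, Matrix.sub_apply, Matrix.smul_apply,
        Matrix.one_apply, Matrix.map_apply] using hdetGμ
    have hμeq : μ = ((G 0 0 : ℝ) : ℂ) := sub_eq_zero.mp hentry
    have hG00 : G 0 0 < 0 := by
      have h1 : G 0 0 = G.trace := (Matrix.trace_fin_one G).symm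
      rw [h1, htrG]
      exact htrneg
    rw [hμeq]
    simpa using hG00
  · -- ===== rank 2 =====
    obtain ⟨C, E, hCE⟩ := exists_factorization (stoich α β) hr
    have hJ : jacF α β κ x = C * (E * P) := by rw [hJNP, hCE, Matrix.mul_assoc]
    set G : Matrix (Fin 2) (Fin 2) ℝ := (E * P) * C with hGdef
    have htrG : G.trace = (jacF α β κ x).trace := by
      rw [hJ, hGdef]
      exact (Matrix.trace_mul_comm C (E * P)).symm
    have hGG : (G * G).trace = (jacF α β κ x * jacF α β κ x).trace := by
      rw [hJ, hGdef]
      calc ((E * P * C) * (E * P * C)).trace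
          = ((E * P) * (C * ((E * P) * C))).trace := by simp only [Matrix.mul_assoc]
        _ = ((C * ((E * P) * C)) * (E * P)).trace := Matrix.trace_mul_comm _ _
        _ = ((C * (E * P)) * (C * (E * P))).trace := by simp only [Matrix.mul_assoc]
    -- 0 ≤ det G
    have h2det : 2 * G.det = (jacF α β κ x).trace ^ 2
        - (jacF α β κ x * jacF α β κ x).trace := by
      rw [← htrG, ← hGG]
      simp only [Matrix.det_fin_two, Matrix.trace_fin_two, Matrix.mul_apply, Fin.sum_univ_two]
      ring
    have hsum : (jacF α β κ x).trace ^ 2 - (jacF α β κ x * jacF α β κ x).trace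
        = ∑ i, ∑ i', (jacF α β κ x i i * jacF α β κ x i' i'
            - jacF α β κ x i i' * jacF α β κ x i' i) := by
      have h1 : (jacF α β κ x).trace ^ 2
          = ∑ i, ∑ i', jacF α β κ x i i * jacF α β κ x i' i' := by
        rw [pow_two]
        unfold Matrix.trace Matrix.diag
        rw [Finset.sum_mul_sum]
      have h2 : (jacF α β κ x * jacF α β κ x).trace
          = ∑ i, ∑ i', jacF α β κ x i i' * jacF α β κ x i' i := by
        unfold Matrix.trace Matrix.diag
        exact Finset.sum_congr rfl fun i _ => by rw [Matrix.mul_apply]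
      rw [h1, h2, ← Finset.sum_sub_distrib]
      exact Finset.sum_congr rfl fun i _ => (Finset.sum_sub_distrib _ _).symm
    have hdet_nonneg : 0 ≤ G.det := by
      have hge : 0 ≤ ∑ i, ∑ i', (jacF α β κ x i i * jacF α β κ x i' i'
          - jacF α β κ x i i' * jacF α β κ x i' i) := by
        refine Finset.sum_nonneg fun i _ => Finset.sum_nonneg fun i' _ => ?_
        rw [hJS i i, hJS i' i', hJS i i', hJS i' i]
        have hq : S i i / x i * (S i' i' / x i') - S i i' / x i' * (S i' i / x i)
            = (S i i * S i' i' - S i i' * S i' i) / (x i * x i') := by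
          field_simp
        rw [hq]
        exact div_nonneg (hminor i i') (mul_pos (hx i) (hx i')).le
      have := hsum ▸ hge
      linarith [h2det ▸ this]
    -- det G ≠ 0 via nondegeneracy
    have hCrank : C.rank = 2 := by
      have h1 : C.rank ≤ 2 := by simpa [Fintype.card_fin] using C.rank_le_card_width
      have h2 : (stoich α β).rank ≤ C.rank := by
        rw [hCE]
        exact Matrix.rank_mul_le_left C E
      omega
    have hCinj : Function.Injective (C.mulVecLin) := by
      rw [← LinearMap.ker_eq_bot]
      have hrn := LinearMap.finrank_range_add_finrank_ker (C.mulVecLin)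
      have hdom : Module.finrank ℝ (Fin 2 → ℝ) = 2 := Module.finrank_fin_fun ℝ
      have hrg : Module.finrank ℝ (LinearMap.range C.mulVecLin) = 2 := hCrank
      apply Submodule.finrank_eq_zero.mp
      omega
    have hrangeEq : LinearMap.range C.mulVecLin = LinearMap.range (stoich α β).mulVecLin := by
      have hle : LinearMap.range (stoich α β).mulVecLin ≤ LinearMap.range C.mulVecLin := by
        rw [hCE, Matrix.mulVecLin_mul]
        exact LinearMap.range_comp_le_range _ _
      refine (Submodule.eq_of_le_of_finrank_le hle ?_).symm
      have h1 : Module.finrank ℝ (LinearMap.range C.mulVecLin) = 2 := hCrank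
      have h2 : Module.finrank ℝ (LinearMap.range (stoich α β).mulVecLin) = 2 := hr
      omega
    have hdetGne : G.det ≠ 0 := by
      intro h0
      obtain ⟨zz, hzz, hGzz⟩ := Matrix.exists_mulVec_eq_zero_iff.mpr h0
      have hu : C *ᵥ zz ≠ 0 := by
        intro h
        apply hzz
        apply hCinj
        show C.mulVecLin zz = C.mulVecLin 0
        simp only [Matrix.mulVecLin_apply, h, Matrix.mulVec_zero]
      have hJu : jacF α β κ x *ᵥ (C *ᵥ zz) = 0 := by
        rw [hJ, Matrix.mulVec_mulVec, Matrix.mul_assoc, ← Matrix.mulVec_mulVec, ← hGdef,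
          hGzz, Matrix.mulVec_zero]
      have hWu : W *ᵥ (C *ᵥ zz) = 0 := by
        have hmem : C *ᵥ zz ∈ LinearMap.range (stoich α β).mulVecLin := by
          rw [← hrangeEq]
          exact ⟨zz, rfl⟩
        obtain ⟨y, hy⟩ := hmem
        rw [Matrix.mulVecLin_apply] at hy
        rw [← hy, Matrix.mulVec_mulVec, hWN, Matrix.zero_mulVec]
      apply hnd
      apply Matrix.exists_mulVec_eq_zero_iff.mp
      refine ⟨C *ᵥ zz, hu, ?_⟩
      funext i
      by_cases hex : ∃ k, piv k = i
      · have hrow : ∀ l, jacH α β W piv κ x i l = W (Classical.choose hex) l := by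
          intro l
          unfold jacH
          rw [dif_pos hex]
        have := congrFun hWu (Classical.choose hex)
        simpa [Matrix.mulVec, dotProduct, hrow] using this
      · have hrow : ∀ l, jacH α β W piv κ x i l = jacF α β κ x i l := by
          intro l
          unfold jacH
          rw [dif_neg hex]
        have := congrFun hJu i
        simpa [Matrix.mulVec, dotProduct, hrow] using this
    have hdpos : 0 < G.det := lt_of_le_of_ne hdet_nonneg (Ne.symm hdetGne)
    -- complex 2x2 eigenvalue equation
    have hmap : (jacF α β κ x).map Complex.ofReal
        = (C.map Complex.ofReal) * ((E * P).map Complex.ofReal) := by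
      rw [hJ, hofReal]
      exact Matrix.map_mul
    have hGmap : G.map Complex.ofReal
        = ((E * P).map Complex.ofReal) * (C.map Complex.ofReal) := by
      rw [hGdef, hofReal]
      exact Matrix.map_mul
    set z := ((E * P).map Complex.ofReal) *ᵥ vv with hzdef
    have hGz : (G.map Complex.ofReal) *ᵥ z = μ • z := by
      rw [hGmap, hzdef, Matrix.mulVec_mulVec, Matrix.mul_assoc, ← Matrix.mulVec_mulVec,
        ← hmap, hJv, Matrix.mulVec_smul]
    have hzne : z ≠ 0 := by
      intro h0
      have h1 : (C.map Complex.ofReal) *ᵥ z = μ • vv := by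
        rw [hzdef, Matrix.mulVec_mulVec, ← hmap, hJv]
      rw [h0, Matrix.mulVec_zero] at h1
      exact smul_ne_zero hμ0 hvv h1.symm
    have hdetGμ : ((algebraMap ℂ (Matrix (Fin 2) (Fin 2) ℂ)) μ - G.map Complex.ofReal).det = 0 := by
      apply Matrix.exists_mulVec_eq_zero_iff.mp
      refine ⟨z, hzne, ?_⟩
      rw [Algebra.algebraMap_eq_smul_one, Matrix.sub_mulVec, Matrix.smul_mulVec,
        Matrix.one_mulVec, hGz, sub_self]
    rw [Matrix.det_fin_two] at hdetGμ
    simp only [Algebra.algebraMap_eq_smul_one, Matrix.sub_apply, Matrix.smul_apply,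
      Matrix.one_apply, Matrix.map_apply, smul_eq_mul] at hdetGμ
    norm_num at hdetGμ
    -- quadratic equation with real coefficients
    have hq : μ * μ - (((G 0 0 + G 1 1 : ℝ)) : ℂ) * μ + ((G.det : ℝ) : ℂ) = 0 := by
      rw [Matrix.det_fin_two]
      push_cast
      linear_combination hdetGμ
    have htneg : G 0 0 + G 1 1 < 0 := by
      have h1 : G 0 0 + G 1 1 = G.trace := (Matrix.trace_fin_two G).symm
      rw [h1, htrG]
      exact htrneg
    have hre := congrArg Complex.re hq
    have him := congrArg Complex.im hq
    simp only [Complex.add_re, Complex.sub_re, Complex.mul_re, Complex.mul_im,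
      Complex.add_im, Complex.sub_im, Complex.ofReal_re, Complex.ofReal_im,
      Complex.zero_re, Complex.zero_im] at hre him
    have hfact : μ.im * (2 * μ.re - (G 0 0 + G 1 1)) = 0 := by linear_combination him
    rcases mul_eq_zero.mp hfact with hb | hb
    · rw [hb] at hre
      by_contra hge
      push_neg at hge
      nlinarith [mul_nonneg (neg_nonneg.mpr htneg.le) hge, hdpos, mul_self_nonneg μ.re]
    · linarith
end
end

section
/- Let (α,β) be a reaction network (not necessarily zero-one) with s species whose stoichiometric matrix N has rank 2, and let W be a conservation-law matrix. For every κ ∈ ℝ^m_{>0} and every steady state x ∈ ℝ^s (a point with f(κ,x) = 0) at which det Jac_h(κ,x) ≠ 0, the following are equivalent: (a) every nonzero complex eigenvalue of Jac_f(κ,x) has negative real part; (b) Σ_{i=1}^s (∂f_i/∂x_i)(κ,x) < 0 and det Jac_h(κ,x) > 0. -/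
noncomputable section

/-!
Since `W N = 0` and `f = N v` with `v_j = κ_j x^{α_j}`, also `W Jac_f = 0`. In `det (X - Jac_f)`
add to each pivot row `piv k` the combination of the other rows given by the `k`-th row of `W`; as
`W` is in reduced row-echelon form this does not change the determinant, and the new row is `X`
times the `k`-th row of `W`. Hence `charpoly Jac_f = X ^ (s - 2) q`, where `q` is the determinant
of the characteristic matrix with its pivot rows replaced by `W`: a monic quadratic with linear
coefficient `-tr Jac_f` and constant coefficient `det Jac_h` (only two rows are negated at
`X = 0`). The nonzero eigenvalues are therefore the roots of `X² - tr Jac_f X + det Jac_h`, and a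
real monic quadratic has both roots in the open left half-plane iff both its lower coefficients
are positive.
-/

open Finset Polynomial Matrix

namespace Complex

theorem re_neg_of_quadratic_eq_zero {t c : ℝ} (ht : t < 0) (hc : 0 < c) {μ : ℂ}
    (hμ : μ ^ 2 - t * μ + c = 0) : μ.re < 0 := by
  have hre := congrArg re hμ
  have him := congrArg im hμ
  simp only [pow_two, add_re, sub_re, mul_re, ofReal_re, ofReal_im, zero_re, add_im, sub_im,
    mul_im, zero_im] at hre him
  by_cases h : μ.im = 0
  · rw [h] at hre
    nlinarith
  · have : 2 * μ.re = t := mul_left_cancel₀ h (by linarith)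
    linarith

theorem neg_and_pos_of_quadratic_roots_re_neg {t c : ℝ}
    (h : ∀ μ : ℂ, μ ^ 2 - t * μ + c = 0 → μ.re < 0) : t < 0 ∧ 0 < c := by
  obtain ⟨w, hw⟩ := IsAlgClosed.exists_eq_mul_self ((t : ℂ) ^ 2 - 4 * c)
  set r₁ := (t + w) / 2
  set r₂ := (t - w) / 2
  have hsum : r₁ + r₂ = t := by ring
  have hprod : r₁ * r₂ = c := by linear_combination (1 / 4 : ℂ) * hw
  have h₁ := h r₁ (by linear_combination r₁ * hsum - hprod)
  have h₂ := h r₂ (by linear_combination r₂ * hsum - hprod)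
  have hsum_re := congrArg re hsum
  have hsum_im := congrArg im hsum
  have hprod_re := congrArg re hprod
  have hprod_im := congrArg im hprod
  simp only [add_re, add_im, mul_re, mul_im, ofReal_re, ofReal_im]
    at hsum_re hsum_im hprod_re hprod_im
  refine ⟨by linarith, ?_⟩
  -- `r₁ + r₂` and `r₁ r₂` are real, so either both roots are real or they have equal real parts.
  have him₂ : r₂.im = -r₁.im := by linarith
  rw [him₂] at hprod_re hprod_im
  by_cases him : r₁.im = 0
  · rw [him] at hprod_re
    nlinarith
  · have : r₁.re = r₂.re := mul_left_cancel₀ him (by linarith)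
    rw [this] at hprod_re
    nlinarith [sq_nonneg r₁.im, mul_pos_of_neg_of_neg h₂ h₂]

theorem quadratic_roots_re_neg_iff {t c : ℝ} :
    (∀ μ : ℂ, μ ^ 2 - t * μ + c = 0 → μ.re < 0) ↔ t < 0 ∧ 0 < c :=
  ⟨neg_and_pos_of_quadratic_roots_re_neg, fun ⟨ht, hc⟩ _ => re_neg_of_quadratic_eq_zero ht hc⟩

end Complex

namespace Matrix

section replaceRows
variable {m n α : Type*} [DecidableEq m]

def replaceRows (A : Matrix m n α) (S : Finset m) (B : Matrix m n α) : Matrix m n α :=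
  of fun i => if i ∈ S then B i else A i

theorem replaceRows_apply_of_mem {A B : Matrix m n α} {S : Finset m} {i : m} (hi : i ∈ S)
    (j : n) : A.replaceRows S B i j = B i j := by
  simp [replaceRows, hi]

theorem replaceRows_apply_of_notMem {A B : Matrix m n α} {S : Finset m} {i : m} (hi : i ∉ S)
    (j : n) : A.replaceRows S B i j = A i j := by
  simp [replaceRows, hi]

@[simp]
theorem replaceRows_empty (A B : Matrix m n α) : A.replaceRows ∅ B = A := by
  ext i; simp [replaceRows]

theorem replaceRows_insert (A B : Matrix m n α) (S : Finset m) (k : m) :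
    A.replaceRows (insert k S) B = (A.replaceRows S B).updateRow k (B k) := by
  ext i l
  by_cases hik : i = k
  · subst hik; simp [replaceRows]
  · simp [replaceRows, hik]

end replaceRows

variable {n R : Type*} [Fintype n] [DecidableEq n] [CommRing R]

theorem det_replaceRows_mul_self (A C : Matrix n n R) (S : Finset n)
    (hdiag : ∀ i ∈ S, C i i = 1) (hoff : ∀ i ∈ S, ∀ j ∈ S, j ≠ i → C i j = 0) :
    (A.replaceRows S (C * A)).det = A.det := by
  induction S using Finset.induction_on with
  | empty => rw [replaceRows_empty]
  | @insert k S hk ih =>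
    have hrow : (C * A) k = ∑ j, C k j • A.replaceRows S (C * A) j := by
      ext l
      simp only [mul_apply, Finset.sum_apply, Pi.smul_apply, smul_eq_mul]
      refine Finset.sum_congr rfl fun j _ => ?_
      by_cases hj : j ∈ S
      · rw [hoff k (mem_insert_self k S) j (mem_insert_of_mem hj) (ne_of_mem_of_not_mem hj hk),
          zero_mul, zero_mul]
      · rw [replaceRows_apply_of_notMem hj]
    rw [replaceRows_insert, hrow, det_updateRow_sum, hdiag k (mem_insert_self k S), one_smul,
      ih (fun i hi => hdiag i (mem_insert_of_mem hi))
        (fun i hi j hj => hoff i (mem_insert_of_mem hi) j (mem_insert_of_mem hj))]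

theorem map_C_mul_charmatrix (P J : Matrix n n R) :
    P.map C * J.charmatrix = (X : R[X]) • P.map C - (P * J).map C := by
  rw [charmatrix, mul_sub, RingHom.mapMatrix_apply, ← Matrix.map_mul, scalar_apply,
    ← smul_one_eq_diagonal, Matrix.mul_smul, mul_one]

theorem charpoly_eq_X_pow_mul_det_replaceRows (J P : Matrix n n R) (S : Finset n)
    (hdiag : ∀ i ∈ S, P i i = 1) (hoff : ∀ i ∈ S, ∀ j ∈ S, j ≠ i → P i j = 0)
    (hPJ : ∀ i ∈ S, (P * J) i = 0) :
    J.charpoly = X ^ #S * (J.charmatrix.replaceRows S (P.map C)).det := by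
  have hrows : J.charmatrix.replaceRows S (P.map C * J.charmatrix) =
      of fun i l => (if i ∈ S then X else 1) * J.charmatrix.replaceRows S (P.map C) i l := by
    refine Matrix.ext fun i l => ?_
    rw [of_apply]
    by_cases hi : i ∈ S
    · rw [replaceRows_apply_of_mem hi, replaceRows_apply_of_mem hi, map_C_mul_charmatrix]
      simp only [sub_apply, smul_apply, map_apply, congrFun (hPJ i hi) l, Pi.zero_apply, map_zero,
        sub_zero, if_pos hi, smul_eq_mul]
    · simp [replaceRows_apply_of_notMem hi, hi]
  rw [charpoly, ← det_replaceRows_mul_self J.charmatrix (P.map C) S (by simp_all) (by simp_all),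
    hrows, det_mul_column, prod_ite_mem, univ_inter, prod_const]

theorem eval_zero_det_replaceRows_charmatrix (J P : Matrix n n R) (S : Finset n) :
    (J.charmatrix.replaceRows S (P.map C)).det.eval 0 = (-1) ^ #Sᶜ * (J.replaceRows S P).det := by
  have hmap : (J.charmatrix.replaceRows S (P.map C)).map (evalRingHom 0) =
      of fun i l => (if i ∈ Sᶜ then -1 else 1) * J.replaceRows S P i l := by
    ext i l
    by_cases hi : i ∈ S
    · simp [replaceRows_apply_of_mem hi, hi]
    · by_cases hil : i = l
      · subst hil; simp [replaceRows_apply_of_notMem hi, hi]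
      · simp [replaceRows_apply_of_notMem hi, hi, charmatrix_apply_ne _ _ _ hil]
  rw [← coe_evalRingHom, RingHom.map_det, RingHom.mapMatrix_apply, hmap, det_mul_column,
    prod_ite_mem, univ_inter, prod_const]

theorem charpoly_eq_X_pow_mul_quadratic [Nontrivial R] (J P : Matrix n n R) (S : Finset n)
    (hdiag : ∀ i ∈ S, P i i = 1) (hoff : ∀ i ∈ S, ∀ j ∈ S, j ≠ i → P i j = 0)
    (hPJ : ∀ i ∈ S, (P * J) i = 0) (hS : #Sᶜ = 2) :
    J.charpoly = X ^ #S * (X ^ 2 - C J.trace * X + C (J.replaceRows S P).det) := by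
  set q := (J.charmatrix.replaceRows S (P.map C)).det
  have hfac : J.charpoly = X ^ #S * q := charpoly_eq_X_pow_mul_det_replaceRows J P S hdiag hoff hPJ
  have hcard : Fintype.card n = #S + 2 := by
    rw [← hS, card_compl]
    have := card_le_univ S
    omega
  have hq : q.Monic := (monic_X_pow _).of_mul_monic_left (hfac ▸ J.charpoly_monic)
  have hdeg : q.natDegree = 2 := by
    have := congrArg natDegree hfac
    rw [charpoly_natDegree_eq_dim, (monic_X_pow _).natDegree_mul hq, natDegree_X_pow, hcard] at this
    omega
  have : Nonempty n := Fintype.card_pos_iff.mp (by omega)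
  have hcoeff₁ : q.coeff 1 = -J.trace := by
    rw [trace_eq_neg_charpoly_coeff, hcard, show #S + 2 - 1 = 1 + #S by omega, hfac,
      coeff_X_pow_mul, neg_neg]
  have hcoeff₀ : q.coeff 0 = (J.replaceRows S P).det := by
    rw [coeff_zero_eq_eval_zero, eval_zero_det_replaceRows_charmatrix, hS]
    ring
  rw [hfac, hq.as_sum, hdeg]
  simp only [sum_range_succ, range_one, sum_singleton, hcoeff₀, pow_zero, mul_one, hcoeff₁,
    map_neg, pow_one]
  ring

theorem mem_spectrum_map_ofReal_and_ne_zero_iff {J : Matrix n n ℝ} {d : ℕ} {t c : ℝ} (hc : c ≠ 0)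
    (hJ : J.charpoly = X ^ d * (X ^ 2 - C t * X + C c)) (μ : ℂ) :
    μ ∈ spectrum ℂ (J.map Complex.ofReal) ∧ μ ≠ 0 ↔ μ ^ 2 - t * μ + c = 0 := by
  have hev : (J.map Complex.ofReal).charpoly.eval μ = μ ^ d * (μ ^ 2 - t * μ + c) := by
    rw [show J.map Complex.ofReal = J.map Complex.ofRealHom from rfl, charpoly_map, hJ]
    simp
  rw [mem_spectrum_iff_isRoot_charpoly, IsRoot, hev, mul_eq_zero]
  constructor
  · rintro ⟨hμ | hμ, hμ₀⟩
    · exact absurd (pow_eq_zero_iff'.mp hμ).1 hμ₀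
    · exact hμ
  · refine fun hμ => ⟨Or.inr hμ, ?_⟩
    rintro rfl
    exact hc (by simpa using hμ)

section pivotRows
variable {ι n α : Type*} [Fintype ι] [DecidableEq n]

def pivotRows [Zero α] (W : Matrix ι n α) (piv : ι → n) : Matrix n n α :=
  of fun i l => if h : ∃ k, piv k = i then W (Classical.choose h) l else 0

theorem pivotRows_apply_self [Zero α] (W : Matrix ι n α) {piv : ι → n}
    (hpiv : Function.Injective piv) (k : ι) (l : n) : pivotRows W piv (piv k) l = W k l := by
  have h : ∃ k', piv k' = piv k := ⟨k, rfl⟩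
  rw [pivotRows, of_apply, dif_pos h, hpiv (Classical.choose_spec h)]

theorem pivotRows_mul_apply_self [Fintype n] [NonUnitalNonAssocSemiring α] (W : Matrix ι n α)
    {piv : ι → n} (hpiv : Function.Injective piv) (J : Matrix n n α) (k : ι) :
    (pivotRows W piv * J) (piv k) = (W * J) k := by
  ext l
  simp only [mul_apply, pivotRows_apply_self W hpiv]

end pivotRows

end Matrix

section ReactionNetwork
variable {s m : ℕ} (α β : Matrix (Fin s) (Fin m) ℕ) (κ : Fin m → ℝ)

theorem differentiable_rateFun_update (x : Fin s → ℝ) (i l : Fin s) :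
    Differentiable ℝ fun t => rateFun α β κ (Function.update x l t) i := by
  have hupd : ∀ l', Differentiable ℝ fun t => Function.update x l t l' := fun l' => by
    by_cases h : l' = l
    · subst h; simp
    · simp [Function.update_of_ne h]
  unfold rateFun
  fun_prop

theorem rateFun_eq_stoich_mulVec (x : Fin s → ℝ) :
    rateFun α β κ x = stoich α β *ᵥ fun j => κ j * ∏ l, x l ^ (α l j) := by
  ext i
  simp only [rateFun, mulVec, dotProduct, mul_assoc]

theorem mul_jacF_eq_zero {d : ℕ} {W : Matrix (Fin d) (Fin s) ℝ} (hWN : W * stoich α β = 0)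
    (x : Fin s → ℝ) : W * jacF α β κ x = 0 := by
  ext k l
  -- `W f(κ, ·)` vanishes identically, hence so does its partial derivative in `x l`.
  have hWf : ∀ y, ∑ i, W k i * rateFun α β κ y i = 0 := fun y => by
    change (W *ᵥ rateFun α β κ y) k = 0
    rw [rateFun_eq_stoich_mulVec, mulVec_mulVec, hWN, zero_mulVec, Pi.zero_apply]
  have := deriv_fun_sum (u := univ) (x := x l)
    (A := fun i t => W k i * rateFun α β κ (Function.update x l t) i) fun i _ =>
    ((differentiable_rateFun_update α β κ x i l).const_mul (W k i)) (x l)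
  simp only [deriv_const_mul_field', hWf, deriv_const] at this
  simpa [mul_apply, jacF] using this.symm

theorem jacH_eq_replaceRows {d : ℕ} (W : Matrix (Fin d) (Fin s) ℝ) (piv : Fin d → Fin s)
    (x : Fin s → ℝ) :
    jacH α β W piv κ x = (jacF α β κ x).replaceRows (univ.image piv) (pivotRows W piv) := by
  ext i l
  by_cases h : ∃ k, piv k = i
  · rw [replaceRows_apply_of_mem (by simpa using h)]
    simp [jacH, pivotRows, h]
  · rw [replaceRows_apply_of_notMem (by simpa using h)]
    simp [jacH, h]

theorem charpoly_jacF_eq {d : ℕ} (hsd : s = d + 2) {W : Matrix (Fin d) (Fin s) ℝ}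
    (hWN : W * stoich α β = 0) {piv : Fin d → Fin s} (hpiv : Function.Injective piv)
    (hlead : ∀ k, W k (piv k) = 1) (hred : ∀ k k', k' ≠ k → W k' (piv k) = 0)
    (x : Fin s → ℝ) :
    (jacF α β κ x).charpoly =
      X ^ d * (X ^ 2 - C (jacF α β κ x).trace * X + C (jacH α β W piv κ x).det) := by
  have hS : #(univ.image piv) = d := by
    rw [card_image_of_injective _ hpiv, card_univ, Fintype.card_fin]
  have key := charpoly_eq_X_pow_mul_quadratic (jacF α β κ x) (pivotRows W piv) (univ.image piv)
    (by simpa [pivotRows_apply_self W hpiv] using hlead)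
    (by
      simpa [pivotRows_apply_self W hpiv, hpiv.eq_iff] using fun k k' hk => hred k' k (Ne.symm hk))
    (forall_mem_image.mpr fun k _ => by
      rw [pivotRows_mul_apply_self W hpiv, mul_jacF_eq_zero α β κ hWN x]
      rfl)
    (by rw [card_compl, hS, Fintype.card_fin]; omega)
  rwa [hS, ← jacH_eq_replaceRows] at key

end ReactionNetwork

theorem stmt8_general {s m : ℕ} (α β : Matrix (Fin s) (Fin m) ℕ)
    (hrank : (stoich α β).rank = 2)
    (W : Matrix (Fin (s - (stoich α β).rank)) (Fin s) ℝ)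
    (hWN : W * stoich α β = 0)
    (piv : Fin (s - (stoich α β).rank) → Fin s)
    (hpiv : StrictMono piv)
    (hlead : ∀ k, W k (piv k) = 1)
    (hred : ∀ k k', k' ≠ k → W k' (piv k) = 0)
    (κ : Fin m → ℝ)
    (x : Fin s → ℝ)
    (hnd : (jacH α β W piv κ x).det ≠ 0) :
    (∀ μ ∈ spectrum ℂ ((jacF α β κ x).map Complex.ofReal), μ ≠ 0 → μ.re < 0) ↔
      (Matrix.trace (jacF α β κ x) < 0 ∧ 0 < (jacH α β W piv κ x).det) := by
  have hsd : s = s - (stoich α β).rank + 2 := by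
    have := rank_le_height (stoich α β)
    omega
  have hJ := charpoly_jacF_eq α β κ hsd hWN hpiv.injective hlead hred x
  calc (∀ μ ∈ spectrum ℂ ((jacF α β κ x).map Complex.ofReal), μ ≠ 0 → μ.re < 0)
      ↔ ∀ μ : ℂ, μ ^ 2 - (jacF α β κ x).trace * μ + (jacH α β W piv κ x).det = 0 → μ.re < 0 :=
        forall_congr' fun μ => by rw [← mem_spectrum_map_ofReal_and_ne_zero_iff hnd hJ, and_imp]
    _ ↔ _ := Complex.quadratic_roots_re_neg_iff

/-- For a rank-two network (not necessarily zero-one), at any nondegenerate steady state: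
all nonzero complex eigenvalues of `Jac_f` have negative real part iff the trace of `Jac_f` is
negative and `det Jac_h > 0`. -/
theorem stmt8 {s m : ℕ} (α β : Matrix (Fin s) (Fin m) ℕ)
    (hnet : ∀ j, ∃ i, α i j ≠ β i j)
    (hrank : (stoich α β).rank = 2)
    (W : Matrix (Fin (s - (stoich α β).rank)) (Fin s) ℝ)
    (hWrank : W.rank = s - (stoich α β).rank)
    (hWN : W * stoich α β = 0)
    (piv : Fin (s - (stoich α β).rank) → Fin s)
    (hpiv : StrictMono piv)
    (hlead : ∀ k, W k (piv k) = 1)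
    (hech : ∀ (k) (l : Fin s), (l : ℕ) < (piv k : ℕ) → W k l = 0)
    (hred : ∀ k k', k' ≠ k → W k' (piv k) = 0)
    (κ : Fin m → ℝ) (hκ : ∀ j, 0 < κ j)
    (x : Fin s → ℝ)
    (hss : ∀ i, rateFun α β κ x i = 0)
    (hnd : (jacH α β W piv κ x).det ≠ 0) :
    (∀ μ ∈ spectrum ℂ ((jacF α β κ x).map Complex.ofReal), μ ≠ 0 → μ.re < 0) ↔
      (Matrix.trace (jacF α β κ x) < 0 ∧ 0 < (jacH α β W piv κ x).det) :=
  stmt8_general α β hrank W hWN piv hpiv hlead hred κ x hnd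
end
end

section
/- Let (α,β) be a zero-one reaction network with s = 2 species whose stoichiometric matrix N has rank 2. Then either (a) for every κ ∈ ℝ^m_{>0} there is at most one positive steady state x ∈ ℝ²_{>0} with f(κ,x) = 0, or (b) for every κ ∈ ℝ^m_{>0}, every positive steady state x satisfies det Jac_f(κ,x) = 0 (i.e., the network admits only degenerate positive steady states). -/
noncomputable section

namespace Stmt9Aux

variable {m : ℕ}

/-- The coefficient of the monomial `x₀^p x₁^q` in the `i`-th component of the
mass-action rate function of a two-species zero-one network. -/
def co (α β : Matrix (Fin 2) (Fin m) ℕ) (p q : ℕ) (i : Fin 2) (κ : Fin m → ℝ) : ℝ :=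
  ∑ j, if α 0 j = p ∧ α 1 j = q then stoich α β i j * κ j else 0

lemma rate_decomp (α β : Matrix (Fin 2) (Fin m) ℕ) (h01 : ∀ i j, α i j ≤ 1 ∧ β i j ≤ 1)
    (κ : Fin m → ℝ) (x : Fin 2 → ℝ) (i : Fin 2) :
    rateFun α β κ x i =
      co α β 0 0 i κ + co α β 1 0 i κ * x 0 + co α β 0 1 i κ * x 1
        + co α β 1 1 i κ * (x 0 * x 1) := by
  unfold rateFun co
  rw [Finset.sum_mul, Finset.sum_mul, Finset.sum_mul, ← Finset.sum_add_distrib,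
    ← Finset.sum_add_distrib, ← Finset.sum_add_distrib]
  refine Finset.sum_congr rfl fun j _ => ?_
  rw [Fin.prod_univ_two]
  have h0 : α 0 j = 0 ∨ α 0 j = 1 := by have := (h01 0 j).1; omega
  have h1 : α 1 j = 0 ∨ α 1 j = 1 := by have := (h01 1 j).1; omega
  rcases h0 with h0 | h0 <;> rcases h1 with h1 | h1 <;> rw [h0, h1] <;> norm_num

lemma stoich_nonneg (α β : Matrix (Fin 2) (Fin m) ℕ) {i : Fin 2} {j : Fin m}
    (h : α i j = 0) : 0 ≤ stoich α β i j := by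
  simp [stoich, h]

lemma stoich_nonpos (α β : Matrix (Fin 2) (Fin m) ℕ) (h01 : ∀ i j, α i j ≤ 1 ∧ β i j ≤ 1)
    {i : Fin 2} {j : Fin m} (h : α i j = 1) : stoich α β i j ≤ 0 := by
  have hb := (h01 i j).2
  simp only [stoich, h]
  have : (β i j : ℝ) ≤ 1 := by exact_mod_cast hb
  simpa using this

lemma co_nonneg {α β : Matrix (Fin 2) (Fin m) ℕ} {p q : ℕ} {i : Fin 2}
    (hs : ∀ j, α 0 j = p → α 1 j = q → 0 ≤ stoich α β i j)
    {κ : Fin m → ℝ} (hκ : ∀ j, 0 ≤ κ j) : 0 ≤ co α β p q i κ := by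
  refine Finset.sum_nonneg fun j _ => ?_
  split_ifs with h
  · exact mul_nonneg (hs j h.1 h.2) (hκ j)
  · exact le_rfl

lemma co_nonpos {α β : Matrix (Fin 2) (Fin m) ℕ} {p q : ℕ} {i : Fin 2}
    (hs : ∀ j, α 0 j = p → α 1 j = q → stoich α β i j ≤ 0)
    {κ : Fin m → ℝ} (hκ : ∀ j, 0 ≤ κ j) : co α β p q i κ ≤ 0 := by
  refine Finset.sum_nonpos fun j _ => ?_
  split_ifs with h
  · exact mul_nonpos_of_nonpos_of_nonneg (hs j h.1 h.2) (hκ j)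
  · exact le_rfl

lemma co_allzero_of_nonneg {α β : Matrix (Fin 2) (Fin m) ℕ} {p q : ℕ} {i : Fin 2}
    (hs : ∀ j, α 0 j = p → α 1 j = q → 0 ≤ stoich α β i j)
    {κ0 : Fin m → ℝ} (hκ0 : ∀ j, 0 < κ0 j) (h : co α β p q i κ0 = 0)
    (κ : Fin m → ℝ) : co α β p q i κ = 0 := by
  have hterm := (Finset.sum_eq_zero_iff_of_nonneg (fun j _ => by
      split_ifs with hc
      · exact mul_nonneg (hs j hc.1 hc.2) (hκ0 j).le
      · exact le_rfl)).mp h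
  refine Finset.sum_eq_zero fun j _ => ?_
  split_ifs with hc
  · have hj := hterm j (Finset.mem_univ j)
    rw [if_pos hc] at hj
    rcases mul_eq_zero.mp hj with h' | h'
    · rw [h', zero_mul]
    · exact absurd h' (ne_of_gt (hκ0 j))
  · rfl

lemma co_allzero_of_nonpos {α β : Matrix (Fin 2) (Fin m) ℕ} {p q : ℕ} {i : Fin 2}
    (hs : ∀ j, α 0 j = p → α 1 j = q → stoich α β i j ≤ 0)
    {κ0 : Fin m → ℝ} (hκ0 : ∀ j, 0 < κ0 j) (h : co α β p q i κ0 = 0)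
    (κ : Fin m → ℝ) : co α β p q i κ = 0 := by
  have hterm := (Finset.sum_eq_zero_iff_of_nonpos (fun j _ => by
      split_ifs with hc
      · exact mul_nonpos_of_nonpos_of_nonneg (hs j hc.1 hc.2) (hκ0 j).le
      · exact le_rfl)).mp h
  refine Finset.sum_eq_zero fun j _ => ?_
  split_ifs with hc
  · have hj := hterm j (Finset.mem_univ j)
    rw [if_pos hc] at hj
    rcases mul_eq_zero.mp hj with h' | h'
    · rw [h', zero_mul]
    · exact absurd h' (ne_of_gt (hκ0 j))
  · rfl

lemma jac0 (α β : Matrix (Fin 2) (Fin m) ℕ) (h01 : ∀ i j, α i j ≤ 1 ∧ β i j ≤ 1)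
    (κ : Fin m → ℝ) (x : Fin 2 → ℝ) (i : Fin 2) :
    jacF α β κ x i 0 = co α β 1 0 i κ + co α β 1 1 i κ * x 1 := by
  have hfun : (fun t => rateFun α β κ (Function.update x 0 t) i)
      = fun t => (co α β 0 0 i κ + co α β 0 1 i κ * x 1)
          + (co α β 1 0 i κ + co α β 1 1 i κ * x 1) * t := by
    funext t
    rw [rate_decomp α β h01, Function.update_self,
      Function.update_of_ne (by decide : (1 : Fin 2) ≠ 0)]
    ring
  show deriv (fun t => rateFun α β κ (Function.update x 0 t) i) (x 0) = _
  rw [hfun]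
  have h : HasDerivAt
      (fun t : ℝ => (co α β 0 0 i κ + co α β 0 1 i κ * x 1)
        + (co α β 1 0 i κ + co α β 1 1 i κ * x 1) * t)
      (co α β 1 0 i κ + co α β 1 1 i κ * x 1) (x 0) := by
    simpa using (((hasDerivAt_id (x 0)).const_mul
      (co α β 1 0 i κ + co α β 1 1 i κ * x 1)).const_add
      (co α β 0 0 i κ + co α β 0 1 i κ * x 1))
  exact h.deriv

lemma jac1 (α β : Matrix (Fin 2) (Fin m) ℕ) (h01 : ∀ i j, α i j ≤ 1 ∧ β i j ≤ 1)
    (κ : Fin m → ℝ) (x : Fin 2 → ℝ) (i : Fin 2) :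
    jacF α β κ x i 1 = co α β 0 1 i κ + co α β 1 1 i κ * x 0 := by
  have hfun : (fun t => rateFun α β κ (Function.update x 1 t) i)
      = fun t => (co α β 0 0 i κ + co α β 1 0 i κ * x 0)
          + (co α β 0 1 i κ + co α β 1 1 i κ * x 0) * t := by
    funext t
    rw [rate_decomp α β h01, Function.update_self,
      Function.update_of_ne (by decide : (0 : Fin 2) ≠ 1)]
    ring
  show deriv (fun t => rateFun α β κ (Function.update x 1 t) i) (x 1) = _
  rw [hfun]
  have h : HasDerivAt
      (fun t : ℝ => (co α β 0 0 i κ + co α β 1 0 i κ * x 0)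
        + (co α β 0 1 i κ + co α β 1 1 i κ * x 0) * t)
      (co α β 0 1 i κ + co α β 1 1 i κ * x 0) (x 1) := by
    simpa using (((hasDerivAt_id (x 1)).const_mul
      (co α β 0 1 i κ + co α β 1 1 i κ * x 0)).const_add
      (co α β 0 0 i κ + co α β 1 0 i κ * x 0))
  exact h.deriv

/-- If the first row of the Jacobian vanishes (coefficientwise), the determinant is zero. -/
lemma det_row0 (α β : Matrix (Fin 2) (Fin m) ℕ) (h01 : ∀ i j, α i j ≤ 1 ∧ β i j ≤ 1)
    {κ : Fin m → ℝ} (z : Fin 2 → ℝ)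
    (hb : co α β 1 0 0 κ = 0) (hc : co α β 0 1 0 κ = 0) (hd : co α β 1 1 0 κ = 0) :
    (jacF α β κ z).det = 0 := by
  rw [Matrix.det_fin_two]
  simp only [jac0 α β h01, jac1 α β h01, hb, hc, hd]
  ring

/-- If `b + d·z₁ = 0` at a positive steady state, then the whole first row of coefficients
vanishes identically (for all rate constants). -/
lemma row0_vanish (α β : Matrix (Fin 2) (Fin m) ℕ) (h01 : ∀ i j, α i j ≤ 1 ∧ β i j ≤ 1)
    {κ0 : Fin m → ℝ} (hκ0 : ∀ j, 0 < κ0 j) {z : Fin 2 → ℝ} (hz : ∀ i, 0 < z i)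
    (hfz : rateFun α β κ0 z 0 = 0)
    (hQ : co α β 1 0 0 κ0 + co α β 1 1 0 κ0 * z 1 = 0) :
    ∀ κ, co α β 0 0 0 κ = 0 ∧ co α β 1 0 0 κ = 0 ∧ co α β 0 1 0 κ = 0
      ∧ co α β 1 1 0 κ = 0 := by
  have hsA : ∀ j, α 0 j = 0 → α 1 j = 0 → 0 ≤ stoich α β 0 j :=
    fun j h _ => stoich_nonneg α β h
  have hsB : ∀ j, α 0 j = 1 → α 1 j = 0 → stoich α β 0 j ≤ 0 :=
    fun j h _ => stoich_nonpos α β h01 h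
  have hsC : ∀ j, α 0 j = 0 → α 1 j = 1 → 0 ≤ stoich α β 0 j :=
    fun j h _ => stoich_nonneg α β h
  have hsD : ∀ j, α 0 j = 1 → α 1 j = 1 → stoich α β 0 j ≤ 0 :=
    fun j h _ => stoich_nonpos α β h01 h
  have hb : co α β 1 0 0 κ0 ≤ 0 := co_nonpos hsB (fun j => (hκ0 j).le)
  have hd : co α β 1 1 0 κ0 ≤ 0 := co_nonpos hsD (fun j => (hκ0 j).le)
  have ha : 0 ≤ co α β 0 0 0 κ0 := co_nonneg hsA (fun j => (hκ0 j).le)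
  have hc : 0 ≤ co α β 0 1 0 κ0 := co_nonneg hsC (fun j => (hκ0 j).le)
  have hdz : co α β 1 1 0 κ0 * z 1 ≤ 0 := mul_nonpos_of_nonpos_of_nonneg hd (hz 1).le
  have hb0 : co α β 1 0 0 κ0 = 0 := by linarith
  have hd0 : co α β 1 1 0 κ0 = 0 := by
    have hz1 : co α β 1 1 0 κ0 * z 1 = 0 := by linarith
    rcases mul_eq_zero.mp hz1 with h | h
    · exact h
    · exact absurd h (ne_of_gt (hz 1))
  have ez := hfz
  rw [rate_decomp α β h01] at ez
  rw [hb0, hd0] at ez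
  have hcz : 0 ≤ co α β 0 1 0 κ0 * z 1 := mul_nonneg hc (hz 1).le
  have ha0 : co α β 0 0 0 κ0 = 0 := by nlinarith
  have hc0 : co α β 0 1 0 κ0 = 0 := by
    have hz1 : co α β 0 1 0 κ0 * z 1 = 0 := by nlinarith
    rcases mul_eq_zero.mp hz1 with h | h
    · exact h
    · exact absurd h (ne_of_gt (hz 1))
  exact fun κ => ⟨co_allzero_of_nonneg hsA hκ0 ha0 κ, co_allzero_of_nonpos hsB hκ0 hb0 κ,
    co_allzero_of_nonneg hsC hκ0 hc0 κ, co_allzero_of_nonpos hsD hκ0 hd0 κ⟩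

/-- Pure algebra: a quadratic with nonpositive leading and nonnegative constant coefficient
cannot have two distinct positive roots unless the sign-definite pieces of those
coefficients all vanish. -/
lemma main_alg (a b c d a2 b2 c2 d2 r s : ℝ)
    (hr : 0 < r) (hs : 0 < s) (hrs : r ≠ s)
    (ha : 0 ≤ a) (hb : b ≤ 0) (hc : 0 ≤ c)
    (ha2 : 0 ≤ a2) (hb2 : 0 ≤ b2) (hc2 : c2 ≤ 0) (hd : d ≤ 0) (hd2 : d2 ≤ 0)
    (h1 : (c * d2 - c2 * d) * r ^ 2 + (-(a2 * d) - b * c2 + b2 * c + a * d2) * r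
        + (a * b2 - a2 * b) = 0)
    (h2 : (c * d2 - c2 * d) * s ^ 2 + (-(a2 * d) - b * c2 + b2 * c + a * d2) * s
        + (a * b2 - a2 * b) = 0) :
    c * d2 = 0 ∧ c2 * d = 0 ∧ a * b2 = 0 ∧ a2 * b = 0 := by
  have hsub : (r - s) * ((c * d2 - c2 * d) * (r + s)
      + (-(a2 * d) - b * c2 + b2 * c + a * d2)) = 0 := by
    linear_combination h1 - h2
  have hB : (c * d2 - c2 * d) * (r + s) + (-(a2 * d) - b * c2 + b2 * c + a * d2) = 0 :=
    (mul_eq_zero.mp hsub).resolve_left (sub_ne_zero.mpr hrs)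
  have hCA : (a * b2 - a2 * b) = (c * d2 - c2 * d) * (r * s) := by
    linear_combination h1 - r * hB
  have h1' : c * d2 ≤ 0 := mul_nonpos_of_nonneg_of_nonpos hc hd2
  have h2' : 0 ≤ c2 * d := mul_nonneg_of_nonpos_of_nonpos hc2 hd
  have h3' : 0 ≤ a * b2 := mul_nonneg ha hb2
  have h4' : a2 * b ≤ 0 := mul_nonpos_of_nonneg_of_nonpos ha2 hb
  have hA0 : c * d2 - c2 * d = 0 := by nlinarith [mul_pos hr hs]
  have hC0 : a * b2 - a2 * b = 0 := by nlinarith [mul_pos hr hs]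
  exact ⟨by linarith, by linarith, by linarith, by linarith⟩

end Stmt9Aux

open Stmt9Aux in
/-- A two-species zero-one network of rank two either admits at most one positive steady state
for every rate-constant vector, or admits only degenerate positive steady states. -/
theorem stmt9 {m : ℕ} (α β : Matrix (Fin 2) (Fin m) ℕ)
    (hnet : ∀ j, ∃ i, α i j ≠ β i j)
    (h01 : ∀ i j, α i j ≤ 1 ∧ β i j ≤ 1)
    (hrank : (stoich α β).rank = 2) :
    (∀ κ : Fin m → ℝ, (∀ j, 0 < κ j) →
      ∀ x y : Fin 2 → ℝ,
        (∀ i, 0 < x i) → (∀ i, rateFun α β κ x i = 0) →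
        (∀ i, 0 < y i) → (∀ i, rateFun α β κ y i = 0) → x = y)
    ∨
    (∀ κ : Fin m → ℝ, (∀ j, 0 < κ j) →
      ∀ x : Fin 2 → ℝ, (∀ i, 0 < x i) → (∀ i, rateFun α β κ x i = 0) →
        (jacF α β κ x).det = 0) := by
  classical
  by_cases hL : (∀ κ : Fin m → ℝ, (∀ j, 0 < κ j) →
      ∀ x y : Fin 2 → ℝ,
        (∀ i, 0 < x i) → (∀ i, rateFun α β κ x i = 0) →
        (∀ i, 0 < y i) → (∀ i, rateFun α β κ y i = 0) → x = y)
  · exact Or.inl hL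
  right
  push_neg at hL
  obtain ⟨κ0, hκ0, x, y, hx, hfx, hy, hfy, hxy⟩ := hL
  -- sign providers
  have hsA : ∀ j, α 0 j = 0 → α 1 j = 0 → 0 ≤ stoich α β 0 j :=
    fun j h _ => stoich_nonneg α β h
  have hsB : ∀ j, α 0 j = 1 → α 1 j = 0 → stoich α β 0 j ≤ 0 :=
    fun j h _ => stoich_nonpos α β h01 h
  have hsC : ∀ j, α 0 j = 0 → α 1 j = 1 → 0 ≤ stoich α β 0 j :=
    fun j h _ => stoich_nonneg α β h
  have hsD : ∀ j, α 0 j = 1 → α 1 j = 1 → stoich α β 0 j ≤ 0 :=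
    fun j h _ => stoich_nonpos α β h01 h
  have hsA2 : ∀ j, α 0 j = 0 → α 1 j = 0 → 0 ≤ stoich α β 1 j :=
    fun j _ h => stoich_nonneg α β h
  have hsB2 : ∀ j, α 0 j = 1 → α 1 j = 0 → 0 ≤ stoich α β 1 j :=
    fun j _ h => stoich_nonneg α β h
  have hsC2 : ∀ j, α 0 j = 0 → α 1 j = 1 → stoich α β 1 j ≤ 0 :=
    fun j _ h => stoich_nonpos α β h01 h
  have hsD2 : ∀ j, α 0 j = 1 → α 1 j = 1 → stoich α β 1 j ≤ 0 :=
    fun j _ h => stoich_nonpos α β h01 h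
  have ex0 := hfx 0; rw [rate_decomp α β h01] at ex0
  have ex1 := hfx 1; rw [rate_decomp α β h01] at ex1
  have ey0 := hfy 0; rw [rate_decomp α β h01] at ey0
  have ey1 := hfy 1; rw [rate_decomp α β h01] at ey1
  by_cases hQx : co α β 1 0 0 κ0 + co α β 1 1 0 κ0 * x 1 = 0
  · intro κ hκ z hz hfz
    obtain ⟨-, h2, h3, h4⟩ := row0_vanish α β h01 hκ0 hx (hfx 0) hQx κ
    exact det_row0 α β h01 z h2 h3 h4
  by_cases hQy : co α β 1 0 0 κ0 + co α β 1 1 0 κ0 * y 1 = 0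
  · intro κ hκ z hz hfz
    obtain ⟨-, h2, h3, h4⟩ := row0_vanish α β h01 hκ0 hy (hfy 0) hQy κ
    exact det_row0 α β h01 z h2 h3 h4
  by_cases hxy1 : x 1 = y 1
  · exfalso
    have hmul : (co α β 1 0 0 κ0 + co α β 1 1 0 κ0 * x 1) * (x 0 - y 0) = 0 := by
      linear_combination ex0 - ey0 - (co α β 0 1 0 κ0 + co α β 1 1 0 κ0 * y 0) * hxy1
    have hx0 : x 0 = y 0 := by
      have := (mul_eq_zero.mp hmul).resolve_left hQx
      linarith
    apply hxy
    funext i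
    fin_cases i
    · exact hx0
    · exact hxy1
  -- main case: two distinct positive roots of the resultant quadratic
  have hq1 : (co α β 0 1 0 κ0 * co α β 1 1 1 κ0 - co α β 0 1 1 κ0 * co α β 1 1 0 κ0) * (x 1) ^ 2
      + (-(co α β 0 0 1 κ0 * co α β 1 1 0 κ0) - co α β 1 0 0 κ0 * co α β 0 1 1 κ0
        + co α β 1 0 1 κ0 * co α β 0 1 0 κ0 + co α β 0 0 0 κ0 * co α β 1 1 1 κ0) * (x 1)
      + (co α β 0 0 0 κ0 * co α β 1 0 1 κ0 - co α β 0 0 1 κ0 * co α β 1 0 0 κ0) = 0 := by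
    linear_combination (-(co α β 1 0 0 κ0 + co α β 1 1 0 κ0 * x 1)) * ex1
      + (co α β 1 0 1 κ0 + co α β 1 1 1 κ0 * x 1) * ex0
  have hq2 : (co α β 0 1 0 κ0 * co α β 1 1 1 κ0 - co α β 0 1 1 κ0 * co α β 1 1 0 κ0) * (y 1) ^ 2
      + (-(co α β 0 0 1 κ0 * co α β 1 1 0 κ0) - co α β 1 0 0 κ0 * co α β 0 1 1 κ0
        + co α β 1 0 1 κ0 * co α β 0 1 0 κ0 + co α β 0 0 0 κ0 * co α β 1 1 1 κ0) * (y 1)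
      + (co α β 0 0 0 κ0 * co α β 1 0 1 κ0 - co α β 0 0 1 κ0 * co α β 1 0 0 κ0) = 0 := by
    linear_combination (-(co α β 1 0 0 κ0 + co α β 1 1 0 κ0 * y 1)) * ey1
      + (co α β 1 0 1 κ0 + co α β 1 1 1 κ0 * y 1) * ey0
  have hκ0' : ∀ j, 0 ≤ κ0 j := fun j => (hκ0 j).le
  obtain ⟨hcd2, hc2d, hab2, ha2b⟩ :=
    main_alg (co α β 0 0 0 κ0) (co α β 1 0 0 κ0) (co α β 0 1 0 κ0) (co α β 1 1 0 κ0)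
      (co α β 0 0 1 κ0) (co α β 1 0 1 κ0) (co α β 0 1 1 κ0) (co α β 1 1 1 κ0)
      (x 1) (y 1) (hx 1) (hy 1) hxy1
      (co_nonneg hsA hκ0') (co_nonpos hsB hκ0') (co_nonneg hsC hκ0')
      (co_nonneg hsA2 hκ0') (co_nonneg hsB2 hκ0') (co_nonpos hsC2 hκ0')
      (co_nonpos hsD hκ0') (co_nonpos hsD2 hκ0') hq1 hq2
  have Pcd2 : ∀ κ : Fin m → ℝ, co α β 0 1 0 κ * co α β 1 1 1 κ = 0 := by
    rcases mul_eq_zero.mp hcd2 with h | h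
    · exact fun κ => by rw [co_allzero_of_nonneg hsC hκ0 h κ, zero_mul]
    · exact fun κ => by rw [co_allzero_of_nonpos hsD2 hκ0 h κ, mul_zero]
  have Pc2d : ∀ κ : Fin m → ℝ, co α β 0 1 1 κ * co α β 1 1 0 κ = 0 := by
    rcases mul_eq_zero.mp hc2d with h | h
    · exact fun κ => by rw [co_allzero_of_nonpos hsC2 hκ0 h κ, zero_mul]
    · exact fun κ => by rw [co_allzero_of_nonpos hsD hκ0 h κ, mul_zero]
  have Pab2 : ∀ κ : Fin m → ℝ, co α β 0 0 0 κ * co α β 1 0 1 κ = 0 := by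
    rcases mul_eq_zero.mp hab2 with h | h
    · exact fun κ => by rw [co_allzero_of_nonneg hsA hκ0 h κ, zero_mul]
    · exact fun κ => by rw [co_allzero_of_nonneg hsB2 hκ0 h κ, mul_zero]
  have Pa2b : ∀ κ : Fin m → ℝ, co α β 0 0 1 κ * co α β 1 0 0 κ = 0 := by
    rcases mul_eq_zero.mp ha2b with h | h
    · exact fun κ => by rw [co_allzero_of_nonneg hsA2 hκ0 h κ, zero_mul]
    · exact fun κ => by rw [co_allzero_of_nonpos hsB hκ0 h κ, mul_zero]
  intro κ hκ z hz hfz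
  have ez0 := hfz 0; rw [rate_decomp α β h01] at ez0
  have ez1 := hfz 1; rw [rate_decomp α β h01] at ez1
  have hA : co α β 0 1 0 κ * co α β 1 1 1 κ - co α β 0 1 1 κ * co α β 1 1 0 κ = 0 := by
    linear_combination Pcd2 κ - Pc2d κ
  have hC : co α β 0 0 0 κ * co α β 1 0 1 κ - co α β 0 0 1 κ * co α β 1 0 0 κ = 0 := by
    linear_combination Pab2 κ - Pa2b κ
  have hR : (co α β 0 1 0 κ * co α β 1 1 1 κ - co α β 0 1 1 κ * co α β 1 1 0 κ) * (z 1) ^ 2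
      + (-(co α β 0 0 1 κ * co α β 1 1 0 κ) - co α β 1 0 0 κ * co α β 0 1 1 κ
        + co α β 1 0 1 κ * co α β 0 1 0 κ + co α β 0 0 0 κ * co α β 1 1 1 κ) * (z 1)
      + (co α β 0 0 0 κ * co α β 1 0 1 κ - co α β 0 0 1 κ * co α β 1 0 0 κ) = 0 := by
    linear_combination (-(co α β 1 0 0 κ + co α β 1 1 0 κ * z 1)) * ez1
      + (co α β 1 0 1 κ + co α β 1 1 1 κ * z 1) * ez0
  have hBz : (-(co α β 0 0 1 κ * co α β 1 1 0 κ) - co α β 1 0 0 κ * co α β 0 1 1 κ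
      + co α β 1 0 1 κ * co α β 0 1 0 κ + co α β 0 0 0 κ * co α β 1 1 1 κ) * z 1 = 0 := by
    linear_combination hR - (z 1) ^ 2 * hA - hC
  have hB : -(co α β 0 0 1 κ * co α β 1 1 0 κ) - co α β 1 0 0 κ * co α β 0 1 1 κ
      + co α β 1 0 1 κ * co α β 0 1 0 κ + co α β 0 0 0 κ * co α β 1 1 1 κ = 0 := by
    rcases mul_eq_zero.mp hBz with h | h
    · exact h
    · exact absurd h (ne_of_gt (hz 1))
  by_cases hQ : co α β 1 0 0 κ + co α β 1 1 0 κ * z 1 = 0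
  · obtain ⟨-, h2, h3, h4⟩ := row0_vanish α β h01 hκ hz (hfz 0) hQ κ
    exact det_row0 α β h01 z h2 h3 h4
  · have hQdet : (co α β 1 0 0 κ + co α β 1 1 0 κ * z 1)
        * ((co α β 1 0 0 κ + co α β 1 1 0 κ * z 1) * (co α β 0 1 1 κ + co α β 1 1 1 κ * z 0)
          - (co α β 0 1 0 κ + co α β 1 1 0 κ * z 0) * (co α β 1 0 1 κ + co α β 1 1 1 κ * z 1))
        = 0 := by
      linear_combination co α β 1 1 0 κ * hR
        - 2 * (z 1) * (co α β 1 0 0 κ + co α β 1 1 0 κ * z 1) * hA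
        - (co α β 1 0 0 κ + co α β 1 1 0 κ * z 1) * hB
        - (co α β 1 0 1 κ * co α β 1 1 0 κ - co α β 1 0 0 κ * co α β 1 1 1 κ) * ez0
    have hdet0 := (mul_eq_zero.mp hQdet).resolve_left hQ
    rw [Matrix.det_fin_two]
    simp only [jac0 α β h01, jac1 α β h01]
    linear_combination hdet0
end
end

section
/- Let (α,β) be a zero-one reaction network with s = 3 species, m reactions, and stoichiometric matrix N of rank 3. If there exist κ ∈ ℝ^m_{>0} and two distinct positive steady states x ≠ y in ℝ³_{>0} with f(κ,x) = f(κ,y) = 0, det Jac_f(κ,x) ≠ 0 and det Jac_f(κ,y) ≠ 0 (nondegenerate multistationarity), then m ≥ 5. -/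
noncomputable section

/-- Differentiable functions are closed under finite products. -/
lemma aux_diff_prod {s : ℕ} {ι : Type*} (u : Finset ι) (f : ι → (Fin s → ℝ) → ℝ)
    (h : ∀ i, Differentiable ℝ (f i)) :
    Differentiable ℝ (fun x => ∏ i ∈ u, f i x) := by
  classical
  induction u using Finset.cons_induction with
  | empty => simpa using differentiable_const (1 : ℝ)
  | cons a u ha ih =>
    simp only [Finset.prod_cons]
    exact (h a).mul ih

lemma aux_rateFun_diff {s m : ℕ} (α β : Matrix (Fin s) (Fin m) ℕ) (κ : Fin m → ℝ) (i : Fin s) :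
    Differentiable ℝ (fun x : Fin s → ℝ => rateFun α β κ x i) := by
  unfold rateFun
  apply Differentiable.fun_sum
  intro j _
  apply Differentiable.const_mul
  apply aux_diff_prod
  intro l
  exact ((ContinuousLinearMap.proj l : (Fin s → ℝ) →L[ℝ] ℝ).differentiable).pow _

lemma aux_jacF_eq {s m : ℕ} (α β : Matrix (Fin s) (Fin m) ℕ) (κ : Fin m → ℝ)
    (x : Fin s → ℝ) (i l : Fin s) :
    jacF α β κ x i l
      = fderiv ℝ (fun x => rateFun α β κ x i) x (Pi.single l 1) := by
  classical
  have hF : HasFDerivAt (fun x => rateFun α β κ x i)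
      (fderiv ℝ (fun x => rateFun α β κ x i) x) (Function.update x l (x l)) := by
    rw [Function.update_eq_self]
    exact ((aux_rateFun_diff α β κ i) x).hasFDerivAt
  have hu : HasDerivAt (fun t => Function.update x l t) (Pi.single l 1) (x l) := by
    rw [hasDerivAt_pi]
    intro i'
    rcases eq_or_ne i' l with h | h
    · subst h
      simpa [Function.update_apply] using hasDerivAt_id' (x i')
    · simpa [Function.update_apply, h, Pi.single_eq_of_ne h] using
        hasDerivAt_const (x l) (x i')
  have h2 := hF.comp_hasDerivAt (x l) hu
  simpa [jacF, Function.comp_def] using h2.deriv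

/-- A three-species, rank-three zero-one network admitting nondegenerate multistationarity has
at least five reactions. -/
theorem stmt13 {m : ℕ}
    (α β : Matrix (Fin 3) (Fin m) ℕ)
    (hnet : ∀ j, ∃ i, α i j ≠ β i j)
    (h01 : ∀ i j, α i j ≤ 1 ∧ β i j ≤ 1)
    (hrank : (stoich α β).rank = 3)
    (hmulti : ∃ (κ : Fin m → ℝ) (x y : Fin 3 → ℝ),
      (∀ j, 0 < κ j) ∧ x ≠ y ∧
      (∀ i, 0 < x i) ∧ (∀ i, rateFun α β κ x i = 0) ∧ (jacF α β κ x).det ≠ 0 ∧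
      (∀ i, 0 < y i) ∧ (∀ i, rateFun α β κ y i = 0) ∧ (jacF α β κ y).det ≠ 0) :
    5 ≤ m := by
  classical
  by_contra h5
  push_neg at h5
  obtain ⟨κ, x, y, hκ, hxy, hx, hfx, hdx, hy, hfy, hdy⟩ := hmulti
  set N := stoich α β with hN
  -- monomial vectors
  set wx : Fin m → ℝ := fun j => κ j * ∏ l, x l ^ (α l j) with hwx
  set wy : Fin m → ℝ := fun j => κ j * ∏ l, y l ^ (α l j) with hwy
  have hwxpos : ∀ j, 0 < wx j := fun j =>
    mul_pos (hκ j) (Finset.prod_pos fun l _ => pow_pos (hx l) _)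
  have hwypos : ∀ j, 0 < wy j := fun j =>
    mul_pos (hκ j) (Finset.prod_pos fun l _ => pow_pos (hy l) _)
  -- steady states lie in the kernel
  have hkx : wx ∈ LinearMap.ker N.mulVecLin := by
    rw [LinearMap.mem_ker]
    funext i
    have := hfx i
    simpa [Matrix.mulVecLin_apply, Matrix.mulVec, dotProduct, rateFun, hwx, mul_assoc] using this
  have hky : wy ∈ LinearMap.ker N.mulVecLin := by
    rw [LinearMap.mem_ker]
    funext i
    have := hfy i
    simpa [Matrix.mulVecLin_apply, Matrix.mulVec, dotProduct, rateFun, hwy, mul_assoc] using this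
  -- rank-nullity
  have hrn := LinearMap.finrank_range_add_finrank_ker N.mulVecLin
  rw [Module.finrank_pi] at hrn
  have hrange : Module.finrank ℝ (LinearMap.range N.mulVecLin) = 3 := hrank
  rw [hrange] at hrn
  -- m ≥ 3 and kernel nontrivial
  have hm3 : Fintype.card (Fin m) = m := Fintype.card_fin m
  have hwx0 : wx ≠ 0 := by
    have hm : 3 ≤ m := by omega
    intro h0
    have := hwxpos ⟨0, by omega⟩
    rw [h0] at this
    exact lt_irrefl 0 this
  have hker1 : Module.finrank ℝ (LinearMap.ker N.mulVecLin) = 1 := by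
    have hge : 1 ≤ Module.finrank ℝ (LinearMap.ker N.mulVecLin) := by
      by_contra hlt
      push_neg at hlt
      interval_cases h : Module.finrank ℝ (LinearMap.ker N.mulVecLin)
      · have : LinearMap.ker N.mulVecLin = ⊥ := Submodule.finrank_eq_zero.mp h
        rw [this, Submodule.mem_bot] at hkx
        exact hwx0 hkx
    omega
  -- wy = c • wx with c > 0
  have hspan : Submodule.span ℝ {wx} = LinearMap.ker N.mulVecLin := by
    apply Submodule.eq_of_le_of_finrank_le
    · rwa [Submodule.span_singleton_le_iff_mem]
    · rw [hker1, finrank_span_singleton hwx0]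
  obtain ⟨c, hc⟩ : ∃ c : ℝ, c • wx = wy := by
    rw [← Submodule.mem_span_singleton, hspan]
    exact hky
  have hcpos : 0 < c := by
    have hm : 3 ≤ m := by omega
    have h0 : wy ⟨0, by omega⟩ = c * wx ⟨0, by omega⟩ := by
      rw [← hc]; simp
    nlinarith [hwxpos ⟨0, by omega⟩, hwypos ⟨0, by omega⟩]
  -- the exponent direction
  set z : Fin 3 → ℝ := fun l => Real.log (y l) - Real.log (x l) with hz
  have hprod : ∀ j, (∏ l, y l ^ (α l j)) = c * ∏ l, x l ^ (α l j) := by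
    intro j
    have h1 : wy j = c * wx j := by rw [← hc]; simp
    have h2 : κ j * (∏ l, y l ^ (α l j)) = κ j * (c * ∏ l, x l ^ (α l j)) := by
      rw [hwy] at h1; rw [hwx] at h1
      simp only at h1
      rw [h1]; ring
    exact mul_left_cancel₀ (hκ j).ne' h2
  have hlogprod : ∀ (u : Fin 3 → ℝ), (∀ l, 0 < u l) → ∀ j,
      Real.log (∏ l, u l ^ (α l j)) = ∑ l, (α l j : ℝ) * Real.log (u l) := by
    intro u hu j
    rw [Real.log_prod (fun l _ => pow_ne_zero _ (hu l).ne')]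
    simp [Real.log_pow]
  have hzc : ∀ j, ∑ l, (α l j : ℝ) * z l = Real.log c := by
    intro j
    have hxp : (0:ℝ) < ∏ l, x l ^ (α l j) := Finset.prod_pos fun l _ => pow_pos (hx l) _
    have e1 : Real.log (∏ l, y l ^ (α l j)) = Real.log c + Real.log (∏ l, x l ^ (α l j)) := by
      rw [hprod j, Real.log_mul hcpos.ne' hxp.ne']
    calc ∑ l, (α l j : ℝ) * z l
        = (∑ l, (α l j : ℝ) * Real.log (y l)) - ∑ l, (α l j : ℝ) * Real.log (x l) := by
          simp [hz, mul_sub, Finset.sum_sub_distrib]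
      _ = Real.log (∏ l, y l ^ (α l j)) - Real.log (∏ l, x l ^ (α l j)) := by
          rw [hlogprod y hy j, hlogprod x hx j]
      _ = Real.log c := by rw [e1]; ring
  -- the curve of steady states through x
  set γ : ℝ → Fin 3 → ℝ := fun t l => x l * Real.exp (t * z l) with hγ
  have hγ0 : γ 0 = x := by funext l; simp [hγ]
  have hcurve : ∀ t i, rateFun α β κ (γ t) i = Real.exp (t * Real.log c) * rateFun α β κ x i := by
    intro t i
    unfold rateFun
    rw [Finset.mul_sum]
    refine Finset.sum_congr rfl fun j _ => ?_
    have hp : ∏ l, (γ t l) ^ (α l j)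
        = Real.exp (t * Real.log c) * ∏ l, x l ^ (α l j) := by
      have : ∀ l, (γ t l) ^ (α l j)
          = x l ^ (α l j) * Real.exp ((α l j : ℝ) * (t * z l)) := by
        intro l
        rw [hγ]
        simp only
        rw [mul_pow, ← Real.exp_nat_mul]
      rw [Finset.prod_congr rfl fun l _ => this l, Finset.prod_mul_distrib,
        ← Real.exp_sum]
      have hs : ∑ l, (α l j : ℝ) * (t * z l) = t * Real.log c := by
        rw [← hzc j, Finset.mul_sum]
        refine Finset.sum_congr rfl fun l _ => by ring
      rw [hs]; ring
    rw [hp]; ring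
  -- derivative of the curve at 0
  set v : Fin 3 → ℝ := fun l => x l * z l with hv
  have hγd : HasDerivAt γ v 0 := by
    rw [hasDerivAt_pi]
    intro l
    have h1 : HasDerivAt (fun t : ℝ => t * z l) (z l) 0 := by
      simpa using (hasDerivAt_id (0:ℝ)).mul_const (z l)
    have h2 : HasDerivAt (fun t : ℝ => Real.exp (t * z l)) (Real.exp (0 * z l) * z l) 0 :=
      h1.exp
    have h3 := h2.const_mul (x l)
    simpa [hγ, hv] using h3
  -- the Jacobian kills v
  have hfd : ∀ i, fderiv ℝ (fun x => rateFun α β κ x i) x v = 0 := by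
    intro i
    have hF : HasFDerivAt (fun x => rateFun α β κ x i)
        (fderiv ℝ (fun x => rateFun α β κ x i) x) (γ 0) := by
      rw [hγ0]
      exact ((aux_rateFun_diff α β κ i) x).hasFDerivAt
    have hcomp := hF.comp_hasDerivAt 0 hγd
    have hzero : HasDerivAt (fun t => rateFun α β κ (γ t) i) 0 0 := by
      have : (fun t => rateFun α β κ (γ t) i) = fun _ => (0:ℝ) := by
        funext t
        rw [hcurve t i, hfx i, mul_zero]
      rw [this]
      exact hasDerivAt_const 0 0
    exact (hcomp.unique hzero)
  have hmul : (jacF α β κ x).mulVec v = 0 := by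
    funext i
    have hsingle : ∀ l : Fin 3, (Pi.single l (v l) : Fin 3 → ℝ) = v l • (Pi.single l (1:ℝ) : Fin 3 → ℝ) := by
      intro l
      funext k
      rcases eq_or_ne k l with rfl | h
      · simp
      · simp [Pi.single_eq_of_ne h]
    have hlin : fderiv ℝ (fun x => rateFun α β κ x i) x v
        = ∑ l, v l * fderiv ℝ (fun x => rateFun α β κ x i) x (Pi.single l 1) := by
      conv_lhs => rw [← Finset.univ_sum_single v]
      rw [map_sum]
      refine Finset.sum_congr rfl fun l _ => ?_
      rw [hsingle l, map_smul]
      rfl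
    have : (jacF α β κ x).mulVec v i
        = ∑ l, v l * fderiv ℝ (fun x => rateFun α β κ x i) x (Pi.single l 1) := by
      simp only [Matrix.mulVec, dotProduct]
      refine Finset.sum_congr rfl fun l _ => ?_
      rw [aux_jacF_eq, mul_comm]
    rw [this, ← hlin, hfd i]
    rfl
  have hv0 : v ≠ 0 := by
    obtain ⟨l, hl⟩ := Function.ne_iff.mp hxy
    have hzl : z l ≠ 0 := by
      intro h0
      apply hl
      have : Real.log (x l) = Real.log (y l) := by
        have := sub_eq_zero.mp (by simpa [hz] using h0)
        linarith
      calc x l = Real.exp (Real.log (x l)) := (Real.exp_log (hx l)).symm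
        _ = Real.exp (Real.log (y l)) := by rw [this]
        _ = y l := Real.exp_log (hy l)
    intro h0
    have : v l = 0 := by rw [h0]; rfl
    exact (mul_ne_zero (hx l).ne' hzl) this
  exact hv0 (Matrix.eq_zero_of_mulVec_eq_zero hdx hmul)
end
end

section
/- Consider the mass-action system in x = (x1,x2,x3) with f1 = −κ1·x1·x2·x3 + κ5·x2, f2 = −κ1·x1·x2·x3 − κ6·x1·x2 + κ4·x1 − κ5·x2, f3 = −κ1·x1·x2·x3 + κ6·x1·x2 − κ3·x3 + κ2, arising from the zero-one network X1+X2+X3 → 0, 0 → X3, X3 → 0, X1 → X1+X2, X2 → X1, X1+X2 → X1+X3. There exist κ ∈ ℝ⁶_{>0} and two distinct points x ≠ y in ℝ³_{>0} with f(κ,x) = f(κ,y) = 0 such that every complex eigenvalue of the Jacobian matrix ((∂f_i/∂x_l)) at x and at y has negative real part. Hence this three-species, six-reaction, three-dimensional zero-one network admits multistability (two exponentially stable positive steady states). -/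
/-! The rate constants `κ = (1, 177/20, 33/20, 48/5, 3, 2/5)` admit the two positive steady states
`(1, 3/2, 3)` and `(3, 4, 1)`. Stability at both follows from the Routh–Hurwitz criterion for the
characteristic polynomial `z³ - tr J z² + E₂(J) z - det J` of the Jacobian, `E₂` being the sum of
the principal `2 × 2` minors: its roots lie in the open left half-plane as soon as `tr J < 0`,
`det J < 0` and `tr J · E₂(J) < det J`. -/

noncomputable section

/-- The species-formation rate function of the zero-one network
`X1+X2+X3 → 0, 0 → X3, X3 → 0, X1 → X1+X2, X2 → X1, X1+X2 → X1+X3`. -/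
def f15 (κ : Fin 6 → ℝ) (x : Fin 3 → ℝ) : Fin 3 → ℝ :=
  ![-(κ 0) * x 0 * x 1 * x 2 + κ 4 * x 1,
    -(κ 0) * x 0 * x 1 * x 2 - κ 5 * x 0 * x 1 + κ 3 * x 0 - κ 4 * x 1,
    -(κ 0) * x 0 * x 1 * x 2 + κ 5 * x 0 * x 1 - κ 2 * x 2 + κ 1]

/-- The Jacobian matrix of `f15` with respect to `x`. -/
def jac15 (κ : Fin 6 → ℝ) (x : Fin 3 → ℝ) : Matrix (Fin 3) (Fin 3) ℝ :=
  fun i l => deriv (fun t => f15 κ (Function.update x l t) i) (x l)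

open Matrix

theorem Complex.re_lt_zero_of_cubic_eq_zero {a b c : ℝ} (ha : 0 < a) (hc : 0 < c)
    (habc : c < a * b) {z : ℂ} (hz : z ^ 3 + a * z ^ 2 + b * z + c = 0) : z.re < 0 := by
  by_contra! hu
  have hre := congrArg Complex.re hz
  have him := congrArg Complex.im hz
  simp only [pow_succ, pow_zero, one_mul, add_re, add_im, mul_re, mul_im, ofReal_re, ofReal_im,
    zero_re, zero_im, zero_mul, add_zero, sub_zero] at hre him
  set u := z.re
  set v := z.im
  by_cases hv : v = 0
  · have hb : 0 < b := by nlinarith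
    rw [hv] at hre
    nlinarith
  -- For a non-real root, the imaginary part determines `v²`; substituting it into the real part
  -- leaves a cubic in `u` that is negative for `u ≥ 0`.
  have hv2 : v ^ 2 = 3 * u ^ 2 + 2 * a * u + b := by
    have : v * (3 * u ^ 2 - v ^ 2 + 2 * a * u + b) = 0 := by linear_combination him
    linarith [(mul_eq_zero.mp this).resolve_left hv]
  have hcubic : -8 * u ^ 3 - 8 * a * u ^ 2 - (2 * b + 2 * a ^ 2) * u + (c - a * b) = 0 := by
    linear_combination hre + (3 * u + a) * hv2
  nlinarith [mul_nonneg hu hu, mul_nonneg (mul_nonneg hu hu) hu]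

namespace Matrix

variable {R : Type*} [CommRing R]

def sumPrincipalMinorsTwo (A : Matrix (Fin 3) (Fin 3) R) : R :=
  A 0 0 * A 1 1 - A 0 1 * A 1 0 + A 0 0 * A 2 2 - A 0 2 * A 2 0 + A 1 1 * A 2 2 - A 1 2 * A 2 1

theorem eval_charpoly_fin_three (A : Matrix (Fin 3) (Fin 3) R) (t : R) :
    A.charpoly.eval t = t ^ 3 - A.trace * t ^ 2 + A.sumPrincipalMinorsTwo * t - A.det := by
  simp [eval_charpoly, det_fin_three, trace_fin_three, sumPrincipalMinorsTwo]
  ring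

theorem re_lt_zero_of_mem_spectrum_fin_three (M : Matrix (Fin 3) (Fin 3) ℝ) (htr : M.trace < 0)
    (hdet : M.det < 0) (hRH : M.trace * M.sumPrincipalMinorsTwo < M.det) :
    ∀ μ ∈ spectrum ℂ (M.map Complex.ofReal), μ.re < 0 := by
  intro μ hμ
  rw [mem_spectrum_iff_isRoot_charpoly, Polynomial.IsRoot.def, eval_charpoly_fin_three] at hμ
  refine Complex.re_lt_zero_of_cubic_eq_zero (a := -M.trace) (b := M.sumPrincipalMinorsTwo)
    (c := -M.det) (by linarith) (by linarith) (by linarith) ?_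
  simp only [trace_fin_three, det_fin_three, sumPrincipalMinorsTwo, map_apply] at hμ ⊢
  push_cast
  linear_combination hμ

end Matrix

theorem jac15_eq (κ : Fin 6 → ℝ) (x : Fin 3 → ℝ) :
    jac15 κ x =
      !![-κ 0 * x 1 * x 2, -κ 0 * x 0 * x 2 + κ 4, -κ 0 * x 0 * x 1;
         -κ 0 * x 1 * x 2 - κ 5 * x 1 + κ 3, -κ 0 * x 0 * x 2 - κ 5 * x 0 - κ 4, -κ 0 * x 0 * x 1;
         -κ 0 * x 1 * x 2 + κ 5 * x 1, -κ 0 * x 0 * x 2 + κ 5 * x 0, -κ 0 * x 0 * x 1 - κ 2] := by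
  ext i l
  fin_cases i <;> fin_cases l <;> simp [jac15, f15, sub_eq_add_neg] <;>
    simp (disch := fun_prop)

/-- There exist positive rate constants and two distinct positive steady states at which all
complex eigenvalues of the Jacobian have negative real part: this three-species, six-reaction,
three-dimensional zero-one network admits multistability. -/
theorem stmt15 :
    ∃ (κ : Fin 6 → ℝ) (x y : Fin 3 → ℝ),
      (∀ j, 0 < κ j) ∧ (∀ i, 0 < x i) ∧ (∀ i, 0 < y i) ∧ x ≠ y ∧
      (∀ i, f15 κ x i = 0) ∧ (∀ i, f15 κ y i = 0) ∧
      (∀ μ ∈ spectrum ℂ ((jac15 κ x).map Complex.ofReal), μ.re < 0) ∧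
      (∀ μ ∈ spectrum ℂ ((jac15 κ y).map Complex.ofReal), μ.re < 0) := by
  refine ⟨![1, 177/20, 33/20, 48/5, 3, 2/5], ![1, 3/2, 3], ![3, 4, 1],
    ?_, ?_, ?_, fun h => by simpa using congrFun h 0, ?_, ?_, ?_, ?_⟩
  · intro j; fin_cases j <;> norm_num
  · intro i; fin_cases i <;> norm_num
  · intro i; fin_cases i <;> norm_num
  · intro i; fin_cases i <;> simp [f15] <;> norm_num
  · intro i; fin_cases i <;> simp [f15] <;> norm_num
  · apply re_lt_zero_of_mem_spectrum_fin_three <;>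
      simp [jac15_eq, trace_fin_three, det_fin_three, sumPrincipalMinorsTwo] <;> norm_num
  · apply re_lt_zero_of_mem_spectrum_fin_three <;>
      simp [jac15_eq, trace_fin_three, det_fin_three, sumPrincipalMinorsTwo] <;> norm_num
end
end

section
/- Let G = (α,β) be a maximum three-species zero-one network whose stoichiometric matrix N has rank 2, and suppose the rows N_2, N_3 of N are linearly independent, so that N_1 = a·N_2 + b·N_3 for unique reals a, b. Then there exist a permutation σ of {1,2,3} and reals ā, b̄ such that N_{σ(1)} = ā·N_{σ(2)} + b̄·N_{σ(3)} and (|ā|, |b̄|) ∈ {(1,0), (0,1), (0,0), (1/2,1/2), (1,1)}. -/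
noncomputable section

/-- A three-species zero-one network is maximum if every zero-one reaction on its species whose
stoichiometric vector lies in the column space of the stoichiometric matrix already occurs among
its reactions. -/
def IsMaximum {m : ℕ} (α β : Matrix (Fin 3) (Fin m) ℕ) : Prop :=
  ∀ a' b' : Fin 3 → ℕ, (∀ i, a' i ≤ 1) → (∀ i, b' i ≤ 1) → a' ≠ b' →
    (fun i => (b' i : ℝ) - (a' i : ℝ)) ∈
      Submodule.span ℝ (Set.range fun j i => stoich α β i j) →
    ∃ j, (∀ i, α i j = a' i) ∧ (∀ i, β i j = b' i)

/-!
Every entry of `N = β − α` lies in `{-1, 0, 1}`. Since `N₂, N₃` are independent, some pair of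
columns `j, k` has a nonzero `2 × 2` minor, and Cramer's rule on these two columns writes `a` and
`b` as quotients of `2 × 2` minors with entries in `{-1, 0, 1}`. A finite check then leaves
`(|a|, |b|)` among the five admissible pairs or `(2, 1)`, `(1, 2)`; in the last two cases solving
the relation for `N₂` (resp. `N₃`) instead gives coefficients of absolute value `(1/2, 1/2)`.
-/

def AbsCoeffsAdmissible (a b : ℝ) : Prop :=
  (|a| = 1 ∧ |b| = 0) ∨ (|a| = 0 ∧ |b| = 1) ∨ (|a| = 0 ∧ |b| = 0) ∨
    (|a| = 1 / 2 ∧ |b| = 1 / 2) ∨ (|a| = 1 ∧ |b| = 1)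

lemma stoich_eq_neg_one_or_zero_or_one {s m : ℕ} {α β : Matrix (Fin s) (Fin m) ℕ}
    (h01 : ∀ i j, α i j ≤ 1 ∧ β i j ≤ 1) (i : Fin s) (j : Fin m) :
    stoich α β i j = -1 ∨ stoich α β i j = 0 ∨ stoich α β i j = 1 := by
  obtain ⟨hα, hβ⟩ := h01 i j
  unfold stoich
  interval_cases α i j <;> interval_cases β i j <;> norm_num

lemma exists_minor_ne_zero_of_linearIndependent {K ι : Type*} [Field K] {x y : ι → K}
    (h : LinearIndependent K ![x, y]) : ∃ j k, x j * y k - x k * y j ≠ 0 := by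
  obtain ⟨hy, hxy⟩ : y ≠ 0 ∧ ∀ c : K, c • y ≠ x := by simpa using linearIndependent_fin2.mp h
  obtain ⟨k, hk⟩ := Function.ne_iff.mp hy
  by_contra! hminor
  refine hxy (x k / y k) (funext fun j => ?_)
  simp only [Pi.smul_apply, smul_eq_mul, Pi.zero_apply] at hk ⊢
  field_simp
  linear_combination -hminor j k

lemma absCoeffsAdmissible_or_of_minor_ne_zero {u₀ u₁ u₂ v₀ v₁ v₂ a b : ℝ}
    (hu₀ : u₀ = -1 ∨ u₀ = 0 ∨ u₀ = 1) (hu₁ : u₁ = -1 ∨ u₁ = 0 ∨ u₁ = 1)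
    (hu₂ : u₂ = -1 ∨ u₂ = 0 ∨ u₂ = 1) (hv₀ : v₀ = -1 ∨ v₀ = 0 ∨ v₀ = 1)
    (hv₁ : v₁ = -1 ∨ v₁ = 0 ∨ v₁ = 1) (hv₂ : v₂ = -1 ∨ v₂ = 0 ∨ v₂ = 1)
    (hd : u₁ * v₂ - v₁ * u₂ ≠ 0) (hu : u₀ = a * u₁ + b * u₂) (hv : v₀ = a * v₁ + b * v₂) :
    AbsCoeffsAdmissible a b ∨ (|a| = 2 ∧ |b| = 1) ∨ (|a| = 1 ∧ |b| = 2) := by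
  have ha : a = (u₀ * v₂ - v₀ * u₂) / (u₁ * v₂ - v₁ * u₂) := by
    rw [eq_div_iff hd]; linear_combination u₂ * hv - v₂ * hu
  have hb : b = (u₁ * v₀ - v₁ * u₀) / (u₁ * v₂ - v₁ * u₂) := by
    rw [eq_div_iff hd]; linear_combination v₁ * hu - u₁ * hv
  subst ha hb
  unfold AbsCoeffsAdmissible
  rcases hu₀ with rfl | rfl | rfl <;> rcases hu₁ with rfl | rfl | rfl <;>
    rcases hu₂ with rfl | rfl | rfl <;> rcases hv₀ with rfl | rfl | rfl <;>
    rcases hv₁ with rfl | rfl | rfl <;> rcases hv₂ with rfl | rfl | rfl <;>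
    (revert hd; norm_num [abs_div])

section SolveRelation

variable {ι : Type*} {x y z : ι → ℝ} {a b : ℝ}

lemma eq_inv_mul_add_of_eq_mul_add (h : ∀ j, x j = a * y j + b * z j) (ha : a ≠ 0) (j : ι) :
    y j = a⁻¹ * x j + (-b / a) * z j := by
  field_simp
  linear_combination -h j

lemma eq_mul_add_inv_mul_of_eq_mul_add (h : ∀ j, x j = a * y j + b * z j) (hb : b ≠ 0) (j : ι) :
    z j = (-a / b) * y j + b⁻¹ * x j := by
  field_simp
  linear_combination -h j

end SolveRelation

lemma absCoeffsAdmissible_half_half {a b : ℝ} (ha : |a| = 1 / 2) (hb : |b| = 1 / 2) :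
    AbsCoeffsAdmissible a b :=
  Or.inr <| Or.inr <| Or.inr <| Or.inl ⟨ha, hb⟩

theorem stmt16_general {m : ℕ} (α β : Matrix (Fin 3) (Fin m) ℕ)
    (h01 : ∀ i j, α i j ≤ 1 ∧ β i j ≤ 1)
    (hind : LinearIndependent ℝ ![stoich α β 1, stoich α β 2])
    (a b : ℝ)
    (hab : ∀ j, stoich α β 0 j = a * stoich α β 1 j + b * stoich α β 2 j) :
    ∃ (σ : Equiv.Perm (Fin 3)) (a' b' : ℝ),
      (∀ j, stoich α β (σ 0) j = a' * stoich α β (σ 1) j + b' * stoich α β (σ 2) j) ∧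
      ((|a'| = 1 ∧ |b'| = 0) ∨ (|a'| = 0 ∧ |b'| = 1) ∨ (|a'| = 0 ∧ |b'| = 0) ∨
        (|a'| = 1 / 2 ∧ |b'| = 1 / 2) ∨ (|a'| = 1 ∧ |b'| = 1)) := by
  have hN := stoich_eq_neg_one_or_zero_or_one h01
  obtain ⟨j, k, hd⟩ := exists_minor_ne_zero_of_linearIndependent hind
  rcases absCoeffsAdmissible_or_of_minor_ne_zero (hN 0 j) (hN 1 j) (hN 2 j) (hN 0 k) (hN 1 k)
      (hN 2 k) hd (hab j) (hab k) with hadm | ⟨ha, hb⟩ | ⟨ha, hb⟩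
  · exact ⟨1, a, b, hab, hadm⟩
  · have ha₀ : a ≠ 0 := by rintro rfl; norm_num at ha
    refine ⟨Equiv.swap 0 1, a⁻¹, -b / a, eq_inv_mul_add_of_eq_mul_add hab ha₀,
      absCoeffsAdmissible_half_half ?_ ?_⟩
    · rw [abs_inv, ha]; norm_num
    · rw [abs_div, abs_neg, ha, hb]
  · have hb₀ : b ≠ 0 := by rintro rfl; norm_num at hb
    refine ⟨Equiv.swap 0 2, -a / b, b⁻¹, eq_mul_add_inv_mul_of_eq_mul_add hab hb₀,
      absCoeffsAdmissible_half_half ?_ ?_⟩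
    · rw [abs_div, abs_neg, ha, hb]
    · rw [abs_inv, hb]; norm_num

/-- For a maximum three-species zero-one network of rank two with `N_1 = a·N_2 + b·N_3`, after
relabeling the species the conservation-law coefficients satisfy
`(|ā|,|b̄|) ∈ {(1,0),(0,1),(0,0),(1/2,1/2),(1,1)}`. -/
theorem stmt16 {m : ℕ} (α β : Matrix (Fin 3) (Fin m) ℕ)
    (hnet : ∀ j, ∃ i, α i j ≠ β i j)
    (h01 : ∀ i j, α i j ≤ 1 ∧ β i j ≤ 1)
    (hmax : IsMaximum α β)
    (hrank : (stoich α β).rank = 2)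
    (hind : LinearIndependent ℝ ![stoich α β 1, stoich α β 2])
    (a b : ℝ)
    (hab : ∀ j, stoich α β 0 j = a * stoich α β 1 j + b * stoich α β 2 j) :
    ∃ (σ : Equiv.Perm (Fin 3)) (a' b' : ℝ),
      (∀ j, stoich α β (σ 0) j = a' * stoich α β (σ 1) j + b' * stoich α β (σ 2) j) ∧
      ((|a'| = 1 ∧ |b'| = 0) ∨ (|a'| = 0 ∧ |b'| = 1) ∨ (|a'| = 0 ∧ |b'| = 0) ∨
        (|a'| = 1 / 2 ∧ |b'| = 1 / 2) ∨ (|a'| = 1 ∧ |b'| = 1)) :=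
  stmt16_general α β h01 hind a b hab
end
end

section
/- Let G = (α,β) be a maximum three-species zero-one network whose stoichiometric matrix N has rank 2, with rows N_2, N_3 linearly independent and N_1 = a·N_2 + b·N_3. Let N* be the 2×m matrix formed by rows 2 and 3 of N. Then for every ℓ = (ℓ1, ℓ2) ∈ {−1,0,1}² with ℓ ≠ (0,0): ℓ is a column of N* if and only if a·ℓ1 + b·ℓ2 ∈ {−1, 0, 1}. -/
/-!
Every entry of `N` is a difference of two zero-one numbers, so lies in `{−1, 0, 1}`; for the first
row this entry is `a·ℓ1 + b·ℓ2`. Conversely, `N = M·N*` with `M = [[a, b], [1, 0], [0, 1]]`, and as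
`rank N = 2` is the width of `M`, the column space of `N` is the range of `M`, which contains
`(a·ℓ1 + b·ℓ2, ℓ1, ℓ2)`. A nonzero vector with entries in `{−1, 0, 1}` is the stoichiometric vector
of a zero-one reaction, so maximality makes it a column of `N`.
-/

noncomputable section

theorem natCast_sub_natCast_mem_of_le_one {x y : ℕ} (hx : x ≤ 1) (hy : y ≤ 1) :
    (y : ℝ) - x ∈ ({-1, 0, 1} : Set ℝ) := by
  interval_cases x <;> interval_cases y <;> norm_num

theorem stoich_mem_of_le_one {s m : ℕ} {α β : Matrix (Fin s) (Fin m) ℕ}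
    (h01 : ∀ i j, α i j ≤ 1 ∧ β i j ≤ 1) (i : Fin s) (j : Fin m) :
    stoich α β i j ∈ ({-1, 0, 1} : Set ℝ) :=
  natCast_sub_natCast_mem_of_le_one (h01 i j).1 (h01 i j).2

theorem exists_zeroOne_sub_eq {ι : Type*} (v : ι → ℝ) (hv : ∀ i, v i ∈ ({-1, 0, 1} : Set ℝ)) :
    ∃ a' b' : ι → ℕ, (∀ i, a' i ≤ 1) ∧ (∀ i, b' i ≤ 1) ∧ ∀ i, (b' i : ℝ) - a' i = v i := by
  classical
  refine ⟨fun i => if v i = -1 then 1 else 0, fun i => if v i = 1 then 1 else 0,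
    fun i => by dsimp only; split_ifs <;> simp, fun i => by dsimp only; split_ifs <;> simp,
    fun i => ?_⟩
  obtain h | h | h : v i = -1 ∨ v i = 0 ∨ v i = 1 := hv i
  all_goals norm_num [h]

theorem Matrix.range_mulVecLin_mul_eq_of_rank_le {K l m n : Type*} [Field K] [Fintype l]
    [Fintype m] [Fintype n] {B : Matrix l m K} {C : Matrix m n K} (h : B.rank ≤ (B * C).rank) :
    LinearMap.range (B * C).mulVecLin = LinearMap.range B.mulVecLin := by
  rw [Matrix.rank, Matrix.rank, Matrix.mulVecLin_mul] at h
  rw [Matrix.mulVecLin_mul]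
  exact Submodule.eq_of_le_of_finrank_le (LinearMap.range_comp_le_range _ _) h

theorem IsMaximum.exists_stoich_eq {m : ℕ} {α β : Matrix (Fin 3) (Fin m) ℕ}
    (hmax : IsMaximum α β) {v : Fin 3 → ℝ} (hv : ∀ i, v i ∈ ({-1, 0, 1} : Set ℝ)) (hv0 : v ≠ 0)
    (hspan : v ∈ Submodule.span ℝ (Set.range (stoich α β).col)) :
    ∃ j, ∀ i, stoich α β i j = v i := by
  obtain ⟨a', b', ha', hb', hsub⟩ := exists_zeroOne_sub_eq v hv
  have hne : a' ≠ b' := by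
    rintro rfl
    exact hv0 (funext fun i => by simp [← hsub i])
  obtain ⟨j, hα, hβ⟩ := hmax a' b' ha' hb' hne (by rwa [show (fun i => _) = v from funext hsub])
  exact ⟨j, fun i => by rw [stoich, hα, hβ, hsub]⟩

theorem stmt17_general {m : ℕ} (α β : Matrix (Fin 3) (Fin m) ℕ)
    (h01 : ∀ i j, α i j ≤ 1 ∧ β i j ≤ 1)
    (hmax : IsMaximum α β)
    (hrank : (stoich α β).rank = 2)
    (a b : ℝ)
    (hab : ∀ j, stoich α β 0 j = a * stoich α β 1 j + b * stoich α β 2 j) :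
    ∀ l1 l2 : ℝ, l1 ∈ ({-1, 0, 1} : Set ℝ) → l2 ∈ ({-1, 0, 1} : Set ℝ) →
      ¬ (l1 = 0 ∧ l2 = 0) →
      ((∃ j, stoich α β 1 j = l1 ∧ stoich α β 2 j = l2) ↔
        a * l1 + b * l2 ∈ ({-1, 0, 1} : Set ℝ)) := by
  intro l1 l2 hl1 hl2 hne
  refine ⟨fun ⟨j, h1, h2⟩ => h1 ▸ h2 ▸ hab j ▸ stoich_mem_of_le_one h01 0 j, fun hc => ?_⟩
  let M : Matrix (Fin 3) (Fin 2) ℝ := !![a, b; 1, 0; 0, 1]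
  have hfactor : stoich α β = M * Matrix.of ![stoich α β 1, stoich α β 2] := by
    ext i j
    fin_cases i <;> simp [M, Matrix.mul_apply, Fin.sum_univ_two, hab]
  have hcols : LinearMap.range M.mulVecLin = Submodule.span ℝ (Set.range (stoich α β).col) := by
    rw [← Matrix.range_mulVecLin, hfactor, Matrix.range_mulVecLin_mul_eq_of_rank_le]
    simpa only [← hfactor, hrank] using M.rank_le_width
  obtain ⟨j, hj⟩ := hmax.exists_stoich_eq (v := ![a * l1 + b * l2, l1, l2])
    (fun i => by fin_cases i; exacts [hc, hl1, hl2])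
    (fun h => hne ⟨congrFun h 1, congrFun h 2⟩)
    (hcols ▸ ⟨![l1, l2], by ext i; fin_cases i <;> simp [M, mul_comm]⟩)
  exact ⟨j, hj 1, hj 2⟩

/-- For a maximum three-species zero-one network of rank two with `N_1 = a·N_2 + b·N_3`:
a nonzero vector `ℓ ∈ {−1,0,1}²` is a column of the submatrix `N*` formed by rows 2 and 3 of `N`
iff `a·ℓ1 + b·ℓ2 ∈ {−1,0,1}`. -/
theorem stmt17 {m : ℕ} (α β : Matrix (Fin 3) (Fin m) ℕ)
    (hnet : ∀ j, ∃ i, α i j ≠ β i j)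
    (h01 : ∀ i j, α i j ≤ 1 ∧ β i j ≤ 1)
    (hmax : IsMaximum α β)
    (hrank : (stoich α β).rank = 2)
    (hind : LinearIndependent ℝ ![stoich α β 1, stoich α β 2])
    (a b : ℝ)
    (hab : ∀ j, stoich α β 0 j = a * stoich α β 1 j + b * stoich α β 2 j) :
    ∀ l1 l2 : ℝ, l1 ∈ ({-1, 0, 1} : Set ℝ) → l2 ∈ ({-1, 0, 1} : Set ℝ) →
      ¬ (l1 = 0 ∧ l2 = 0) →
      ((∃ j, stoich α β 1 j = l1 ∧ stoich α β 2 j = l2) ↔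
        a * l1 + b * l2 ∈ ({-1, 0, 1} : Set ℝ)) :=
  stmt17_general α β h01 hmax hrank a b hab
end
end
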